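/- arXiv:1508.05980 — 7 statements merged into one kernel-verified Lean document; each statement's English description precedes it below -/
import Mathlib

section
/- Let 0 < a < 1, J ∈ ℤ, and 0 < q ≤ ∞. Let (ε_k) be a sequence of positive real numbers and define δ_k = Σ_{j=J⁺}^{k} a^{k-j} ε_j for k ≥ J⁺, where J⁺ = max(J,0). Then there exists a constant c > 0 depending only on a and q such that (Σ_{k=J⁺}^{∞} δ_k^q)^{1/q} ≤ c (Σ_{k=J⁺}^{∞} ε_k^q)^{1/q}. -/
open scoped ENNReal
noncomputable section

/-- The ℓ^q quasi-norm (0 < q ≤ ∞) of a nonnegative sequence. -/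
def lqNorm (q : ℝ≥0∞) (F : ℕ → ℝ≥0∞) : ℝ≥0∞ :=
  if q = ∞ then ⨆ k, F k else (∑' k, F k ^ q.toReal) ^ (1 / q.toReal)

/-- Reflected geometric partial sum bound. -/
lemma geom_partial_bound (B : ℝ≥0∞) (i : ℕ) :
    ∑ m ∈ Finset.range (i + 1), B ^ (i - m) ≤ (1 - B)⁻¹ := by
  have h1 : ∑ m ∈ Finset.range (i + 1), B ^ (i - m)
      = ∑ m ∈ Finset.range (i + 1), B ^ m := by
    have := Finset.sum_range_reflect (fun n => B ^ n) (i + 1)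
    simpa using this
  rw [h1, ← ENNReal.tsum_geometric]
  exact ENNReal.sum_le_tsum _

/-- Geometric convolution identity in `ℝ≥0∞`. -/
lemma conv_tsum_eq (B : ℝ≥0∞) (G : ℕ → ℝ≥0∞) :
    ∑' i : ℕ, ∑ m ∈ Finset.range (i + 1), B ^ (i - m) * G m
      = (1 - B)⁻¹ * ∑' m, G m := by
  have key : ∀ i : ℕ, ∑ m ∈ Finset.range (i + 1), B ^ (i - m) * G m
      = ∑' m : ℕ, (if m ≤ i then B ^ (i - m) * G m else 0) := by
    intro i
    rw [tsum_eq_sum (s := Finset.range (i + 1)) (fun m hm => by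
      rw [if_neg]; simp only [Finset.mem_range] at hm; omega)]
    refine Finset.sum_congr rfl fun m hm => ?_
    rw [if_pos (by simp only [Finset.mem_range] at hm; omega)]
  calc ∑' i : ℕ, ∑ m ∈ Finset.range (i + 1), B ^ (i - m) * G m
      = ∑' i : ℕ, ∑' m : ℕ, (if m ≤ i then B ^ (i - m) * G m else 0) := tsum_congr key
    _ = ∑' m : ℕ, ∑' i : ℕ, (if m ≤ i then B ^ (i - m) * G m else 0) := ENNReal.tsum_comm
    _ = ∑' m : ℕ, (1 - B)⁻¹ * G m := by
        refine tsum_congr fun m => ?_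
        have hinj : Function.Injective (fun n : ℕ => m + n) := add_right_injective m
        rw [← hinj.tsum_eq (f := fun i : ℕ => if m ≤ i then B ^ (i - m) * G m else 0)
          (by
            intro i hi
            rcases le_or_gt m i with h | h
            · exact ⟨i - m, show m + (i - m) = i by omega⟩
            · simp only [Function.mem_support, if_neg (by omega : ¬ m ≤ i)] at hi
              exact absurd rfl hi)]
        have h2 : ∀ n : ℕ, (if m ≤ m + n then B ^ (m + n - m) * G m else 0) = B ^ n * G m := by
          intro n
          rw [if_pos (Nat.le_add_right m n)]
          congr 2
          omega
        rw [tsum_congr h2, ENNReal.tsum_mul_right, ENNReal.tsum_geometric]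
    _ = (1 - B)⁻¹ * ∑' m, G m := ENNReal.tsum_mul_left

/-- Finset subadditivity of `rpow` for exponents in `(0, 1]`. -/
lemma rpow_finset_sum_le {t : ℝ} (ht : 0 < t) (ht1 : t ≤ 1) (s : Finset ℕ) (f : ℕ → ℝ≥0∞) :
    (∑ m ∈ s, f m) ^ t ≤ ∑ m ∈ s, f m ^ t := by
  induction s using Finset.cons_induction with
  | empty => simp [ENNReal.zero_rpow_of_pos ht]
  | cons a s ha ih =>
    rw [Finset.sum_cons, Finset.sum_cons]
    exact le_trans (ENNReal.rpow_add_le_add_rpow _ _ ht.le ht1) (add_le_add_right ih _)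

lemma pow_rpow_comm (A : ℝ≥0∞) (n : ℕ) (t : ℝ) : (A ^ n) ^ t = (A ^ t) ^ n := by
  rw [← ENNReal.rpow_natCast A n, ← ENNReal.rpow_mul, mul_comm, ENNReal.rpow_mul,
    ENNReal.rpow_natCast]

/-- Hardy-type inequality: for 0 < a < 1, J ∈ ℤ, 0 < q ≤ ∞ and positive (ε_k),
with δ_k = ∑_{j=J⁺}^k a^{k-j} ε_j for k ≥ J⁺, one has ‖(δ_k)_{k ≥ J⁺}‖_{ℓ^q} ≤
c ‖(ε_k)_{k ≥ J⁺}‖_{ℓ^q} with c depending only on a and q. -/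
theorem hardy_type_inequality (a : ℝ) (ha : 0 < a) (ha1 : a < 1) (J : ℤ) (q : ℝ≥0∞)
    (hq : 0 < q) :
    ∃ c > 0, ∀ ε : ℤ → ℝ, (∀ k, 0 < ε k) →
      lqNorm q (fun i : ℕ =>
          ENNReal.ofReal (∑ j ∈ Finset.Icc (max J 0) (max J 0 + i),
            a ^ ((max J 0 + (i : ℤ) - j).toNat) * ε j)) ≤
        ENNReal.ofReal c * lqNorm q (fun i : ℕ => ENNReal.ofReal (ε (max J 0 + i))) := by
  have ha0 : (0 : ℝ) ≤ a := ha.le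
  set P : ℤ := max J 0 with hP
  set A : ℝ≥0∞ := ENNReal.ofReal a with hA
  have hA1 : A < 1 := ENNReal.ofReal_lt_one.mpr ha1
  have hsub : ENNReal.ofReal ((1 - a)⁻¹) = (1 - A)⁻¹ := by
    rw [ENNReal.ofReal_inv_of_pos (by linarith), ENNReal.ofReal_sub 1 ha0, ENNReal.ofReal_one]
  -- rewrite the inner sums
  have hD : ∀ ε : ℤ → ℝ, (∀ k, 0 < ε k) → ∀ i : ℕ,
      ENNReal.ofReal (∑ j ∈ Finset.Icc P (P + (i : ℤ)), a ^ ((P + (i : ℤ) - j).toNat) * ε j)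
        = ∑ m ∈ Finset.range (i + 1), A ^ (i - m) * ENNReal.ofReal (ε (P + m)) := by
    intro ε hε i
    have hmap : Finset.Icc P (P + (i : ℤ)) =
        (Finset.range (i + 1)).map ⟨fun m : ℕ => P + m, show Function.Injective (fun m : ℕ => P + (m : ℤ)) from fun x y h => Nat.cast_injective (add_left_cancel h)⟩ := by
      ext j
      simp only [Finset.mem_Icc, Finset.mem_map, Finset.mem_range, Function.Embedding.coeFn_mk]
      constructor
      · intro h
        exact ⟨(j - P).toNat, by omega, by omega⟩
      · rintro ⟨m, hm, rfl⟩
        omega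
    rw [hmap, Finset.sum_map,
      ENNReal.ofReal_sum_of_nonneg (fun m _ => mul_nonneg (pow_nonneg ha0 _) (hε _).le)]
    refine Finset.sum_congr rfl fun m hm => ?_
    have hmi : m ≤ i := by simp only [Finset.mem_range] at hm; omega
    have htn : ((P + (i : ℤ) - (P + (m : ℤ))).toNat) = i - m := by omega
    rw [Function.Embedding.coeFn_mk, htn, ENNReal.ofReal_mul (pow_nonneg ha0 _),
      ENNReal.ofReal_pow ha0]
  by_cases hqi : q = ∞
  · -- q = ∞
    refine ⟨(1 - a)⁻¹, inv_pos.mpr (by linarith), fun ε hε => ?_⟩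
    simp only [lqNorm, if_pos hqi]
    refine iSup_le fun i => ?_
    rw [hD ε hε i]
    calc ∑ m ∈ Finset.range (i + 1), A ^ (i - m) * ENNReal.ofReal (ε (P + m))
        ≤ ∑ m ∈ Finset.range (i + 1), A ^ (i - m) * ⨆ k : ℕ, ENNReal.ofReal (ε (P + k)) :=
          Finset.sum_le_sum fun m _ => mul_le_mul_right
            (le_iSup (fun k : ℕ => ENNReal.ofReal (ε (P + k))) m) _
      _ = (∑ m ∈ Finset.range (i + 1), A ^ (i - m)) * ⨆ k : ℕ, ENNReal.ofReal (ε (P + k)) := by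
          rw [← Finset.sum_mul]
      _ ≤ (1 - A)⁻¹ * ⨆ k : ℕ, ENNReal.ofReal (ε (P + k)) :=
          mul_le_mul_left (geom_partial_bound A i) _
      _ = ENNReal.ofReal ((1 - a)⁻¹) * ⨆ k : ℕ, ENNReal.ofReal (ε (P + k)) := by rw [hsub]
  · -- q finite
    have ht : 0 < q.toReal := ENNReal.toReal_pos hq.ne' hqi
    set t : ℝ := q.toReal with hqt
    rcases le_or_gt t 1 with ht1 | ht1
    · -- 0 < t ≤ 1
      have hat : a ^ t < 1 := Real.rpow_lt_one ha0 ha1 ht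
      have hat0 : (0 : ℝ) < a ^ t := Real.rpow_pos_of_pos ha t
      refine ⟨((1 - a ^ t)⁻¹) ^ (1 / t),
        Real.rpow_pos_of_pos (inv_pos.mpr (by linarith)) _, fun ε hε => ?_⟩
      simp only [lqNorm, if_neg hqi, ← hqt]
      have hofc : ENNReal.ofReal (((1 - a ^ t)⁻¹) ^ (1 / t)) = ((1 - A ^ t)⁻¹) ^ (1 / t) := by
        rw [← ENNReal.ofReal_rpow_of_pos (inv_pos.mpr (by linarith : (0:ℝ) < 1 - a ^ t))]
        congr 1
        rw [ENNReal.ofReal_inv_of_pos (by linarith)]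
        congr 1
        rw [ENNReal.ofReal_sub 1 hat0.le, ENNReal.ofReal_one, ← ENNReal.ofReal_rpow_of_pos ha]
      rw [hofc]
      have hsum : (∑' i : ℕ, (ENNReal.ofReal
            (∑ j ∈ Finset.Icc P (P + (i : ℤ)), a ^ ((P + (i : ℤ) - j).toNat) * ε j)) ^ t)
          ≤ (1 - A ^ t)⁻¹ * ∑' m : ℕ, (ENNReal.ofReal (ε (P + m))) ^ t := by
        rw [← conv_tsum_eq (A ^ t) (fun m => (ENNReal.ofReal (ε (P + m))) ^ t)]
        refine ENNReal.tsum_le_tsum fun i => ?_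
        rw [hD ε hε i]
        refine le_trans (rpow_finset_sum_le ht ht1 _ _) ?_
        refine le_of_eq (Finset.sum_congr rfl fun m hm => ?_)
        rw [ENNReal.mul_rpow_of_nonneg _ _ ht.le, pow_rpow_comm]
      calc (∑' i : ℕ, (ENNReal.ofReal
            (∑ j ∈ Finset.Icc P (P + (i : ℤ)), a ^ ((P + (i : ℤ) - j).toNat) * ε j)) ^ t) ^ (1 / t)
          ≤ ((1 - A ^ t)⁻¹ * ∑' m : ℕ, (ENNReal.ofReal (ε (P + m))) ^ t) ^ (1 / t) :=
            ENNReal.rpow_le_rpow hsum (by positivity)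
        _ = ((1 - A ^ t)⁻¹) ^ (1 / t) * (∑' m : ℕ, (ENNReal.ofReal (ε (P + m))) ^ t) ^ (1 / t) :=
            ENNReal.mul_rpow_of_nonneg _ _ (by positivity)
    · -- t > 1
      set C : ℝ≥0∞ := (1 - A)⁻¹ with hC
      have h1A0 : (1 : ℝ≥0∞) - A ≠ 0 := by
        rw [ne_eq, tsub_eq_zero_iff_le]
        exact not_le.mpr hA1
      have h1At : (1 : ℝ≥0∞) - A ≠ ∞ := by
        exact ne_top_of_le_ne_top ENNReal.one_ne_top tsub_le_self
      have hC0 : C ≠ 0 := ENNReal.inv_ne_zero.mpr h1At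
      have hCt : C ≠ ∞ := ENNReal.inv_ne_top.mpr h1A0
      refine ⟨(1 - a)⁻¹, inv_pos.mpr (by linarith), fun ε hε => ?_⟩
      simp only [lqNorm, if_neg hqi, ← hqt]
      rw [hsub]
      have hsum : (∑' i : ℕ, (ENNReal.ofReal
            (∑ j ∈ Finset.Icc P (P + (i : ℤ)), a ^ ((P + (i : ℤ) - j).toNat) * ε j)) ^ t)
          ≤ C ^ t * ∑' m : ℕ, (ENNReal.ofReal (ε (P + m))) ^ t := by
        have hti : t⁻¹ * t = 1 := inv_mul_cancel₀ ht.ne'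
        have hstep : ∀ i : ℕ, (∑ m ∈ Finset.range (i + 1),
              A ^ (i - m) * ENNReal.ofReal (ε (P + m))) ^ t
            ≤ C ^ (t - 1) * ∑ m ∈ Finset.range (i + 1),
              A ^ (i - m) * (ENNReal.ofReal (ε (P + m))) ^ t := by
          intro i
          have hH := ENNReal.inner_le_weight_mul_Lp_of_nonneg (Finset.range (i + 1)) ht1.le
            (fun m => A ^ (i - m)) (fun m => ENNReal.ofReal (ε (P + m)))
          have hH2 : (∑ m ∈ Finset.range (i + 1), A ^ (i - m) * ENNReal.ofReal (ε (P + m)))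
              ≤ C ^ (1 - t⁻¹) * (∑ m ∈ Finset.range (i + 1),
                A ^ (i - m) * (ENNReal.ofReal (ε (P + m))) ^ t) ^ t⁻¹ := by
            refine le_trans hH (mul_le_mul_left ?_ _)
            exact ENNReal.rpow_le_rpow (geom_partial_bound A i) (by
              have : t⁻¹ < 1 := by
                rw [inv_lt_one_iff₀]; right; exact ht1
              linarith)
          calc (∑ m ∈ Finset.range (i + 1), A ^ (i - m) * ENNReal.ofReal (ε (P + m))) ^ t
              ≤ (C ^ (1 - t⁻¹) * (∑ m ∈ Finset.range (i + 1),
                  A ^ (i - m) * (ENNReal.ofReal (ε (P + m))) ^ t) ^ t⁻¹) ^ t :=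
                ENNReal.rpow_le_rpow hH2 ht.le
            _ = C ^ (t - 1) * ∑ m ∈ Finset.range (i + 1),
                  A ^ (i - m) * (ENNReal.ofReal (ε (P + m))) ^ t := by
                rw [ENNReal.mul_rpow_of_nonneg _ _ ht.le, ← ENNReal.rpow_mul,
                  ← ENNReal.rpow_mul, hti, ENNReal.rpow_one]
                congr 2
                field_simp
        calc (∑' i : ℕ, (ENNReal.ofReal
              (∑ j ∈ Finset.Icc P (P + (i : ℤ)), a ^ ((P + (i : ℤ) - j).toNat) * ε j)) ^ t)
            = ∑' i : ℕ, (∑ m ∈ Finset.range (i + 1),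
                A ^ (i - m) * ENNReal.ofReal (ε (P + m))) ^ t := by
              exact tsum_congr fun i => by rw [hD ε hε i]
          _ ≤ ∑' i : ℕ, (C ^ (t - 1) * ∑ m ∈ Finset.range (i + 1),
                A ^ (i - m) * (ENNReal.ofReal (ε (P + m))) ^ t) :=
              ENNReal.tsum_le_tsum hstep
          _ = C ^ (t - 1) * ∑' i : ℕ, ∑ m ∈ Finset.range (i + 1),
                A ^ (i - m) * (ENNReal.ofReal (ε (P + m))) ^ t := ENNReal.tsum_mul_left
          _ = C ^ (t - 1) * (C * ∑' m : ℕ, (ENNReal.ofReal (ε (P + m))) ^ t) := by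
              rw [conv_tsum_eq A (fun m => (ENNReal.ofReal (ε (P + m))) ^ t)]
          _ = C ^ t * ∑' m : ℕ, (ENNReal.ofReal (ε (P + m))) ^ t := by
              rw [← mul_assoc]
              congr 1
              nth_rewrite 2 [← ENNReal.rpow_one C]
              rw [← ENNReal.rpow_add _ _ hC0 hCt]
              norm_num
      calc (∑' i : ℕ, (ENNReal.ofReal
            (∑ j ∈ Finset.Icc P (P + (i : ℤ)), a ^ ((P + (i : ℤ) - j).toNat) * ε j)) ^ t) ^ (1 / t)
          ≤ (C ^ t * ∑' m : ℕ, (ENNReal.ofReal (ε (P + m))) ^ t) ^ (1 / t) :=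
            ENNReal.rpow_le_rpow hsum (by positivity)
        _ = (C ^ t) ^ (1 / t) * (∑' m : ℕ, (ENNReal.ofReal (ε (P + m))) ^ t) ^ (1 / t) :=
            ENNReal.mul_rpow_of_nonneg _ _ (by positivity)
        _ = C * (∑' m : ℕ, (ENNReal.ofReal (ε (P + m))) ^ t) ^ (1 / t) := by
            rw [← ENNReal.rpow_mul, mul_one_div_cancel ht.ne', ENNReal.rpow_one]
end
end

section
/- For v₀, v₁ ∈ ℕ₀ and m > n, the convolution η_{v₀,m} * η_{v₁,m} is comparable to η_{min(v₀,v₁),m}: there exist constants c₁, c₂ > 0 depending only on m and n such that c₁ η_{min(v₀,v₁),m}(x) ≤ (η_{v₀,m} * η_{v₁,m})(x) ≤ c₂ η_{min(v₀,v₁),m}(x) for all x ∈ ℝⁿ. -/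
open MeasureTheory
noncomputable section

/-- Euclidean space ℝⁿ. -/
abbrev En (n : ℕ) := EuclideanSpace ℝ (Fin n)

/-- The kernel η_{v,m}(x) = 2^{nv} (1 + 2^v |x|)^{-m}. -/
def eta (n : ℕ) (v : ℤ) (m : ℝ) (x : En n) : ℝ :=
  (2 : ℝ) ^ ((n : ℝ) * (v : ℝ)) * (1 + (2 : ℝ) ^ (v : ℝ) * ‖x‖) ^ (-m)

/-- Convolution of two real valued functions on ℝⁿ. -/
def conv {n : ℕ} (f g : En n → ℝ) (x : En n) : ℝ := ∫ y, f y * g (x - y)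

/-- The dyadic cube Q_{v,m}. -/
def dyadicCube (n : ℕ) (v : ℤ) (m : Fin n → ℤ) : Set (En n) :=
  {x | ∀ i, (m i : ℝ) ≤ (2 : ℝ) ^ v * x i ∧ (2 : ℝ) ^ v * x i < (m i : ℝ) + 1}

open Metric Module

/-! ### Auxiliary lemmas -/

section Aux

/-- integrability of the scaled kernel -/
lemma integrable_phi (n : ℕ) {m : ℝ} (hm : (n:ℝ) < m) {a : ℝ} (ha : 0 < a) :
    Integrable (fun y : En n => (1 + a * ‖y‖) ^ (-m)) := by
  have h : Integrable (fun u : En n => (1 + ‖u‖) ^ (-m)) :=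
    integrable_one_add_norm (by simpa using hm)
  have := (integrable_comp_smul_iff (volume : Measure (En n))
    (fun u : En n => (1 + ‖u‖) ^ (-m)) (ne_of_gt ha)).2 h
  simpa [norm_smul, abs_of_pos ha] using this

/-- scaling identity for the integral -/
lemma integral_phi (n : ℕ) (m : ℝ) {a : ℝ} (ha : 0 < a) :
    ∫ y : En n, a ^ n * (1 + a * ‖y‖) ^ (-m) = ∫ u : En n, (1 + ‖u‖) ^ (-m) := by
  have h := MeasureTheory.Measure.integral_comp_smul_of_nonneg (volume : Measure (En n))
    (fun u : En n => (1 + ‖u‖) ^ (-m)) a (hR := ha.le)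
  simp only [norm_smul, Real.norm_eq_abs, abs_of_pos ha, finrank_euclideanSpace_fin,
    smul_eq_mul] at h
  rw [integral_const_mul, h]
  field_simp

lemma phi_pos {m a t : ℝ} (ha : 0 ≤ a) (ht : 0 ≤ t) : 0 < (1 + a * t) ^ (-m) :=
  Real.rpow_pos_of_pos (by nlinarith) _

lemma phi_le_one {m a t : ℝ} (hm : 0 < m) (ha : 0 ≤ a) (ht : 0 ≤ t) :
    (1 + a * t) ^ (-m) ≤ 1 :=
  Real.rpow_le_one_of_one_le_of_nonpos (by nlinarith) (by linarith)

lemma phi_anti {m : ℝ} (hm : 0 < m) {s t : ℝ} (hs : 0 < s) (hst : s ≤ t) :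
    t ^ (-m) ≤ s ^ (-m) :=
  Real.rpow_le_rpow_of_nonpos hs hst (by linarith)

/-- key arithmetic estimate for the near-origin term -/
lemma key_arith (n : ℕ) {m : ℝ} (hm : (n:ℝ) < m) (I ω : ℝ) (hI : 0 ≤ I) (hω : 0 ≤ ω)
    {a b t J : ℝ} (ha : 0 < a) (hab : a ≤ b) (ht : 0 ≤ t)
    (hJ0 : 0 ≤ J) (hJ1 : J ≤ I) (hJ2 : J ≤ ω * t ^ n * a ^ n) :
    b ^ n * (1 + b * t) ^ (-m) * J ≤
      (2:ℝ) ^ m * max I ω * (a ^ n * (1 + a * t) ^ (-m)) := by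
  have hb : 0 < b := lt_of_lt_of_le ha hab
  have hm0 : 0 < m := lt_of_le_of_lt (Nat.cast_nonneg n) hm
  have h2m : (1:ℝ) ≤ (2:ℝ) ^ m := Real.one_le_rpow (by norm_num) hm0.le
  have hbt : (0:ℝ) < 1 + b * t := by nlinarith
  have hat : (0:ℝ) < 1 + a * t := by nlinarith
  have hPb : (0:ℝ) < (1 + b * t) ^ (-m) := Real.rpow_pos_of_pos hbt _
  have hPa : (0:ℝ) < (1 + a * t) ^ (-m) := Real.rpow_pos_of_pos hat _
  rcases le_total (a * t) 1 with hc | hc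
  · -- small case : use J ≤ ω t^n a^n
    have h1 : (b * t) ^ n * (1 + b * t) ^ (-m) ≤ 1 := by
      have e1 : (b * t) ^ n ≤ (1 + b * t) ^ n := by
        apply pow_le_pow_left₀ (by positivity) (by linarith)
      have e2 : ((1 + b * t):ℝ) ^ n = (1 + b * t) ^ ((n:ℝ)) := by
        rw [Real.rpow_natCast]
      have e3 : (1 + b * t) ^ ((n:ℝ)) ≤ (1 + b * t) ^ m :=
        Real.rpow_le_rpow_of_exponent_le (by nlinarith) hm.le
      have e4 : (1 + b * t) ^ (-m) = ((1 + b * t) ^ m)⁻¹ := by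
        rw [Real.rpow_neg hbt.le]
      rw [e4]
      rw [mul_inv_le_iff₀ (Real.rpow_pos_of_pos hbt m), one_mul]
      calc (b*t)^n ≤ (1+b*t)^n := e1
        _ = (1+b*t)^((n:ℝ)) := e2
        _ ≤ (1+b*t)^m := e3
    have h2 : b ^ n * (1 + b * t) ^ (-m) * J ≤ ω * a ^ n := by
      calc b ^ n * (1 + b * t) ^ (-m) * J
          ≤ b ^ n * (1 + b * t) ^ (-m) * (ω * t ^ n * a ^ n) := by
            apply mul_le_mul_of_nonneg_left hJ2 (by positivity)
        _ = ((b*t) ^ n * (1 + b * t) ^ (-m)) * (ω * a ^ n) := by rw [mul_pow]; ring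
        _ ≤ 1 * (ω * a ^ n) := by
            apply mul_le_mul_of_nonneg_right h1 (by positivity)
        _ = ω * a ^ n := one_mul _
    have h3 : (1:ℝ) + a * t ≤ 2 := by linarith
    have h4 : (2:ℝ) ^ (-m) ≤ (1 + a * t) ^ (-m) :=
      Real.rpow_le_rpow_of_nonpos hat h3 (by linarith)
    have h5 : ω * a ^ n ≤ (2:ℝ) ^ m * max I ω * (a ^ n * (1 + a * t) ^ (-m)) := by
      have hrw : (2:ℝ)^m * (2:ℝ)^(-m) = 1 := by
        rw [← Real.rpow_add (by norm_num)]; simp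
      calc ω * a ^ n = ((2:ℝ)^m * (2:ℝ)^(-m)) * (ω * a ^ n) := by rw [hrw, one_mul]
        _ ≤ (2:ℝ)^m * max I ω * (a ^ n * (1 + a * t) ^ (-m)) := by
            have hmax : ω ≤ max I ω := le_max_right _ _
            have h2mpos : (0:ℝ) < (2:ℝ)^m := by positivity
            nlinarith [mul_le_mul_of_nonneg_left
              (mul_le_mul hmax h4 (by positivity) (le_max_of_le_right hω))
              (mul_pos h2mpos (pow_pos ha n)).le]
    linarith
  · -- large case : use J ≤ I
    have htpos : 0 < t := by
      rcases eq_or_lt_of_le ht with h | h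
      · exfalso; rw [← h] at hc; simp at hc; linarith
      · exact h
    have hbtpos : 0 < b * t := by positivity
    have hbt1 : 1 ≤ b * t := le_trans hc (by nlinarith)
    have e1 : (1 + a*t) ^ m ≤ (2:ℝ)^m * (a*t) ^ m := by
      rw [← Real.mul_rpow (by norm_num) (by positivity)]
      exact Real.rpow_le_rpow (by positivity) (by nlinarith) hm0.le
    have e2 : b ^ n * (a*t) ^ m ≤ a ^ n * (1 + b*t) ^ m := by
      have s1 : (a*t) ^ m = (a*t) ^ ((n:ℝ)) * (a*t) ^ (m - (n:ℝ)) := by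
        rw [← Real.rpow_add (by positivity)]; ring_nf
      have s2 : (a*t) ^ (m - (n:ℝ)) ≤ (b*t) ^ (m - (n:ℝ)) :=
        Real.rpow_le_rpow (by positivity) (by nlinarith) (by linarith)
      have s3 : (a*t) ^ ((n:ℝ)) = (a*t)^n := Real.rpow_natCast _ n
      have s4 : (b*t) ^ ((n:ℝ)) = (b*t)^n := Real.rpow_natCast _ n
      have s5 : b ^ n * (a*t)^n = a ^ n * (b*t)^n := by
        rw [mul_pow, mul_pow]; ring
      have s6 : (b*t) ^ ((n:ℝ)) * (b*t) ^ (m - (n:ℝ)) = (b*t) ^ m := by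
        rw [← Real.rpow_add hbtpos]; ring_nf
      have s7 : (b*t) ^ m ≤ (1+b*t) ^ m :=
        Real.rpow_le_rpow (by positivity) (by linarith) hm0.le
      calc b ^ n * (a*t) ^ m = b^n * ((a*t)^((n:ℝ)) * (a*t)^(m-(n:ℝ))) := by rw [← s1]
        _ ≤ b^n * ((a*t)^((n:ℝ)) * (b*t)^(m-(n:ℝ))) := by
            apply mul_le_mul_of_nonneg_left _ (by positivity)
            exact mul_le_mul_of_nonneg_left s2 (by positivity)
        _ = (b^n * (a*t)^n) * (b*t)^(m-(n:ℝ)) := by rw [s3]; ring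
        _ = (a^n * (b*t)^n) * (b*t)^(m-(n:ℝ)) := by rw [s5]
        _ = a^n * ((b*t)^((n:ℝ)) * (b*t)^(m-(n:ℝ))) := by rw [s4]; ring
        _ = a^n * (b*t)^m := by rw [s6]
        _ ≤ a^n * (1+b*t)^m := mul_le_mul_of_nonneg_left s7 (by positivity)
    have e3 : b ^ n * (1 + a*t) ^ m ≤ (2:ℝ)^m * (a ^ n * (1 + b*t) ^ m) := by
      calc b ^ n * (1 + a*t) ^ m ≤ b ^ n * ((2:ℝ)^m * (a*t)^m) :=
            mul_le_mul_of_nonneg_left e1 (by positivity)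
        _ = (2:ℝ)^m * (b^n * (a*t)^m) := by ring
        _ ≤ (2:ℝ)^m * (a ^ n * (1 + b*t) ^ m) :=
            mul_le_mul_of_nonneg_left e2 (by positivity)
    have e4 : b ^ n * (1 + b * t) ^ (-m) ≤ (2:ℝ)^m * (a ^ n * (1 + a * t) ^ (-m)) := by
      have hX : (0:ℝ) < (1 + b*t) ^ m := Real.rpow_pos_of_pos hbt m
      have hY : (0:ℝ) < (1 + a*t) ^ m := Real.rpow_pos_of_pos hat m
      rw [Real.rpow_neg hbt.le, Real.rpow_neg hat.le,
        show (2:ℝ)^m * (a^n * ((1+a*t)^m)⁻¹) = ((2:ℝ)^m * a^n) / (1+a*t)^m by ring,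
        show b^n * (((1+b*t):ℝ)^m)⁻¹ = b^n / (1+b*t)^m by ring]
      rw [div_le_div_iff₀ hX hY]
      nlinarith [e3]
    calc b ^ n * (1 + b * t) ^ (-m) * J ≤ b ^ n * (1 + b * t) ^ (-m) * I :=
          mul_le_mul_of_nonneg_left hJ1 (by positivity)
      _ ≤ ((2:ℝ)^m * (a ^ n * (1 + a * t) ^ (-m))) * I :=
          mul_le_mul_of_nonneg_right e4 hI
      _ = ((2:ℝ)^m * (a ^ n * (1 + a * t) ^ (-m))) * I := rfl
      _ ≤ ((2:ℝ)^m * (a ^ n * (1 + a * t) ^ (-m))) * max I ω :=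
          mul_le_mul_of_nonneg_left (le_max_left _ _) (by positivity)
      _ = (2:ℝ) ^ m * max I ω * (a ^ n * (1 + a * t) ^ (-m)) := by ring

variable {n : ℕ} {m a b : ℝ}

/-- the convolution integrand is integrable -/
lemma F_integrable (hm : (n:ℝ) < m) (ha : 0 < a) (hb : 0 < b) (x : En n) :
    Integrable (fun y : En n =>
      (a ^ n * (1 + a * ‖y‖) ^ (-m)) * (b ^ n * (1 + b * ‖x - y‖) ^ (-m))) := by
  have hm0 : 0 < m := lt_of_le_of_lt (Nat.cast_nonneg n) hm
  have hcont : Continuous (fun y : En n =>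
      (a ^ n * (1 + a * ‖y‖) ^ (-m)) * (b ^ n * (1 + b * ‖x - y‖) ^ (-m))) := by
    apply Continuous.mul
    · exact continuous_const.mul ((continuous_const.add
        (continuous_const.mul continuous_norm)).rpow_const
        (fun y => Or.inl (ne_of_gt (by positivity : (0:ℝ) < 1 + a * ‖y‖))))
    · exact continuous_const.mul ((continuous_const.add
        (continuous_const.mul ((continuous_const.sub continuous_id).norm))).rpow_const
        (fun y => Or.inl (ne_of_gt (by positivity : (0:ℝ) < 1 + b * ‖x - y‖))))
  refine (((integrable_phi n hm ha).const_mul (a ^ n)).mul_const (b ^ n)).mono'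
    hcont.aestronglyMeasurable (Filter.Eventually.of_forall fun y => ?_)
  have h1 : (0:ℝ) < (1 + a * ‖y‖) ^ (-m) := phi_pos ha.le (norm_nonneg _)
  have h2 : (0:ℝ) < (1 + b * ‖x - y‖) ^ (-m) := phi_pos hb.le (norm_nonneg _)
  rw [Real.norm_eq_abs, abs_of_nonneg (by positivity)]
  have h3 : (1 + b * ‖x - y‖) ^ (-m) ≤ 1 := phi_le_one hm0 hb.le (norm_nonneg _)
  calc (a ^ n * (1 + a * ‖y‖) ^ (-m)) * (b ^ n * (1 + b * ‖x - y‖) ^ (-m))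
      ≤ (a ^ n * (1 + a * ‖y‖) ^ (-m)) * (b ^ n * 1) := by
        apply mul_le_mul_of_nonneg_left _ (by positivity)
        exact mul_le_mul_of_nonneg_left h3 (by positivity)
    _ = a ^ n * (1 + a * ‖y‖) ^ (-m) * b ^ n := by ring

end Aux

section Core
variable {n : ℕ} {m a b : ℝ}

lemma core_lower (hm : (n:ℝ) < m) (ha : 0 < a) (hab : a ≤ b) (x : En n) :
    ((2:ℝ) ^ (-(2*m)) * (volume (ball (0:En n) 1)).toReal) * (a ^ n * (1 + a * ‖x‖) ^ (-m)) ≤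
      ∫ y, (a ^ n * (1 + a * ‖y‖) ^ (-m)) * (b ^ n * (1 + b * ‖x - y‖) ^ (-m)) := by
  have hb : 0 < b := lt_of_lt_of_le ha hab
  have hm0 : 0 < m := lt_of_le_of_lt (Nat.cast_nonneg n) hm
  set ω : ℝ := (volume (ball (0:En n) 1)).toReal with hω
  set P : ℝ := (1 + a * ‖x‖) ^ (-m) with hP
  have hPpos : 0 < P := phi_pos ha.le (norm_nonneg _)
  set c : ℝ := a ^ n * b ^ n * ((2:ℝ) ^ (-m)) * ((2:ℝ) ^ (-m) * P) with hc
  set F : En n → ℝ := fun y =>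
    (a ^ n * (1 + a * ‖y‖) ^ (-m)) * (b ^ n * (1 + b * ‖x - y‖) ^ (-m)) with hF
  have hFint : Integrable F := F_integrable hm ha hb x
  have hF0 : ∀ y, 0 ≤ F y := fun y => by
    have h1 := phi_pos (m := m) ha.le (norm_nonneg y)
    have h2 := phi_pos (m := m) hb.le (norm_nonneg (x - y))
    positivity
  -- pointwise bound on the small ball
  have h1 : ∀ y ∈ ball x (1/b), c ≤ F y := by
    intro y hy
    rw [mem_ball] at hy
    have hxy : ‖x - y‖ < 1/b := by
      rw [dist_eq_norm] at hy
      rw [show x - y = -(y - x) by abel, norm_neg]; exact hy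
    have hA : (2:ℝ) ^ (-m) ≤ (1 + b * ‖x - y‖) ^ (-m) := by
      apply phi_anti hm0 (by positivity)
      have : b * ‖x - y‖ ≤ b * (1/b) := by
        apply mul_le_mul_of_nonneg_left hxy.le hb.le
      rw [mul_one_div, div_self hb.ne'] at this
      linarith
    have hB : (2:ℝ) ^ (-m) * P ≤ (1 + a * ‖y‖) ^ (-m) := by
      have hy' : ‖y‖ ≤ ‖x‖ + 1/b := by
        calc ‖y‖ ≤ ‖x‖ + ‖y - x‖ := by
              have := norm_add_le x (y - x); simpa using this
          _ ≤ ‖x‖ + 1/b := by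
              rw [show y - x = -(x - y) by abel, norm_neg]; linarith
      have hab' : a * (1/b) ≤ 1 := by
        rw [mul_one_div, div_le_one hb]; exact hab
      have hle : 1 + a * ‖y‖ ≤ 2 * (1 + a * ‖x‖) := by nlinarith [norm_nonneg x]
      have := phi_anti hm0 (s := 1 + a * ‖y‖) (t := 2 * (1 + a * ‖x‖))
        (by positivity) hle
      calc (2:ℝ) ^ (-m) * P = (2 * (1 + a * ‖x‖)) ^ (-m) := by
            rw [Real.mul_rpow (by norm_num) (by positivity)]
        _ ≤ (1 + a * ‖y‖) ^ (-m) := this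
    calc c = (a ^ n * ((2:ℝ) ^ (-m) * P)) * (b ^ n * ((2:ℝ) ^ (-m))) := by rw [hc]; ring
      _ ≤ (a ^ n * (1 + a * ‖y‖) ^ (-m)) * (b ^ n * (1 + b * ‖x - y‖) ^ (-m)) := by
          apply mul_le_mul
          · exact mul_le_mul_of_nonneg_left hB (by positivity)
          · exact mul_le_mul_of_nonneg_left hA (by positivity)
          · positivity
          · positivity
  have h2 : ∫ y in ball x (1/b), c ≤ ∫ y in ball x (1/b), F y := by
    apply setIntegral_mono_on
    · exact integrableOn_const measure_ball_lt_top.ne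
    · exact hFint.integrableOn
    · exact measurableSet_ball
    · exact h1
  have h3 : ∫ y in ball x (1/b), F y ≤ ∫ y, F y :=
    setIntegral_le_integral hFint (Filter.Eventually.of_forall hF0)
  have h4 : ∫ y in ball x (1/b), c = ((1/b) ^ n * ω) * c := by
    rw [setIntegral_const, smul_eq_mul]
    congr 1
    rw [measureReal_def, Measure.addHaar_ball_of_pos _ _ (by positivity : (0:ℝ) < 1/b),
      finrank_euclideanSpace_fin, ENNReal.toReal_mul,
      ENNReal.toReal_ofReal (by positivity)]
  have h5 : ((1/b) ^ n * ω) * c = ((2:ℝ) ^ (-(2*m)) * ω) * (a ^ n * P) := by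
    have hbn : ((1/b:ℝ)) ^ n * b ^ n = 1 := by
      rw [← mul_pow]; rw [one_div_mul_cancel hb.ne']; simp
    have h2m2 : (2:ℝ) ^ (-m) * (2:ℝ) ^ (-m) = (2:ℝ) ^ (-(2*m)) := by
      rw [← Real.rpow_add (by norm_num)]; ring_nf
    calc ((1/b) ^ n * ω) * c
        = ((1/b) ^ n * b ^ n) * (((2:ℝ)^(-m) * (2:ℝ)^(-m)) * (ω * (a ^ n * P))) := by
          rw [hc]; ring
      _ = 1 * ((2:ℝ)^(-(2*m)) * (ω * (a ^ n * P))) := by rw [hbn, h2m2]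
      _ = ((2:ℝ) ^ (-(2*m)) * ω) * (a ^ n * P) := by ring
  linarith [h2, h3, h4.symm.trans_le h2]

lemma half_bound {m : ℝ} (hm0 : 0 < m) {a t s : ℝ} (ha : 0 < a) (ht : 0 ≤ t)
    (hs : t/2 ≤ s) : (1 + a*s) ^ (-m) ≤ (2:ℝ) ^ m * (1 + a*t) ^ (-m) := by
  have hs0 : 0 ≤ s := le_trans (by linarith) hs
  have h1 : (1 + a*t)/2 ≤ 1 + a*s := by nlinarith
  have h2 : (1 + a*s) ^ (-m) ≤ ((1 + a*t)/2) ^ (-m) :=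
    phi_anti hm0 (by positivity) h1
  have h3 : (((1 + a*t):ℝ)/2) ^ (-m) = (2:ℝ) ^ m * (1 + a*t) ^ (-m) := by
    rw [div_eq_mul_inv, mul_comm, Real.mul_rpow (by norm_num) (by positivity),
      Real.inv_rpow (by norm_num), ← Real.rpow_neg (by norm_num), neg_neg]
  rw [h3] at h2; exact h2

lemma core_upper (hm : (n:ℝ) < m) (ha : 0 < a) (hab : a ≤ b) (x : En n) :
    ∫ y, (a ^ n * (1 + a * ‖y‖) ^ (-m)) * (b ^ n * (1 + b * ‖x - y‖) ^ (-m)) ≤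
      ((2:ℝ)^m * (2:ℝ)^m * max (∫ u : En n, (1 + ‖u‖) ^ (-m))
          ((volume (ball (0:En n) 1)).toReal)
        + (2:ℝ)^m * ∫ u : En n, (1 + ‖u‖) ^ (-m)) * (a ^ n * (1 + a * ‖x‖) ^ (-m)) := by
  have hb : 0 < b := lt_of_lt_of_le ha hab
  have hm0 : 0 < m := lt_of_le_of_lt (Nat.cast_nonneg n) hm
  set I : ℝ := ∫ u : En n, (1 + ‖u‖) ^ (-m) with hI
  set ω : ℝ := (volume (ball (0:En n) 1)).toReal with hωdef
  have hI0 : 0 ≤ I := integral_nonneg fun u => by positivity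
  have hω0 : 0 ≤ ω := ENNReal.toReal_nonneg
  set t : ℝ := ‖x‖ with htdef
  have ht0 : 0 ≤ t := norm_nonneg x
  set P : ℝ := (1 + a * t) ^ (-m) with hPdef
  set Qb : ℝ := (1 + b * t) ^ (-m) with hQdef
  have hPpos : 0 < P := phi_pos ha.le ht0
  have hQpos : 0 < Qb := phi_pos hb.le ht0
  set B : Set (En n) := ball (0:En n) (t/2) with hBdef
  set F : En n → ℝ := fun y =>
    (a ^ n * (1 + a * ‖y‖) ^ (-m)) * (b ^ n * (1 + b * ‖x - y‖) ^ (-m)) with hFdef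
  have hFint : Integrable F := F_integrable hm ha hb x
  have hsplit : ∫ y, F y = (∫ y in B, F y) + ∫ y in Bᶜ, F y :=
    (integral_add_compl measurableSet_ball hFint).symm
  have hphia : Integrable (fun y : En n => a ^ n * (1 + a * ‖y‖) ^ (-m)) :=
    (integrable_phi n hm ha).const_mul _
  -- near-origin term
  have hnear_pt : ∀ y ∈ B, F y ≤
      (a ^ n * (1 + a * ‖y‖) ^ (-m)) * (b ^ n * ((2:ℝ)^m * Qb)) := by
    intro y hy
    rw [hBdef, mem_ball_zero_iff] at hy
    have hxy : t/2 ≤ ‖x - y‖ := by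
      have := norm_sub_norm_le x y
      rw [← htdef] at this
      linarith
    have := half_bound (a := b) hm0 hb ht0 hxy
    exact mul_le_mul_of_nonneg_left (mul_le_mul_of_nonneg_left this (by positivity))
      (by positivity)
  have hnear1 : ∫ y in B, F y ≤
      (∫ y in B, a ^ n * (1 + a * ‖y‖) ^ (-m)) * (b ^ n * ((2:ℝ)^m * Qb)) := by
    rw [← integral_mul_const]
    exact setIntegral_mono_on hFint.integrableOn
      (hphia.mul_const _).integrableOn measurableSet_ball hnear_pt
  set J : ℝ := ∫ y in B, a ^ n * (1 + a * ‖y‖) ^ (-m) with hJdef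
  have hJ0 : 0 ≤ J := setIntegral_nonneg measurableSet_ball fun y _ => by positivity
  have hJ1 : J ≤ I := by
    have := setIntegral_le_integral (s := B) hphia
      (Filter.Eventually.of_forall fun y => by positivity)
    rw [integral_phi n m ha] at this
    exact this
  have hJ2 : J ≤ ω * t ^ n * a ^ n := by
    have hb1 : J ≤ ∫ _ in B, (a ^ n : ℝ) := by
      apply setIntegral_mono_on hphia.integrableOn
        (integrableOn_const measure_ball_lt_top.ne) measurableSet_ball
      intro y _
      have := phi_le_one (a := a) (t := ‖y‖) hm0 ha.le (norm_nonneg y)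
      nlinarith [pow_pos ha n]
    have hb2 : (∫ _ in B, (a ^ n : ℝ)) = (volume B).toReal * a ^ n := by
      rw [setIntegral_const, smul_eq_mul, measureReal_def]
    have hb3 : (volume B).toReal ≤ (t/2) ^ n * ω := by
      have hmono : volume B ≤ volume (closedBall (0:En n) (t/2)) :=
        measure_mono ball_subset_closedBall
      have hcb : (volume (closedBall (0:En n) (t/2))).toReal = (t/2) ^ n * ω := by
        rw [Measure.addHaar_closedBall _ _ (by positivity), finrank_euclideanSpace_fin,
          ENNReal.toReal_mul, ENNReal.toReal_ofReal (by positivity)]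
      calc (volume B).toReal ≤ (volume (closedBall (0:En n) (t/2))).toReal :=
            ENNReal.toReal_mono measure_closedBall_lt_top.ne hmono
        _ = (t/2) ^ n * ω := hcb
    have hb4 : ((t/2):ℝ) ^ n ≤ t ^ n := pow_le_pow_left₀ (by positivity) (by linarith) n
    calc J ≤ (volume B).toReal * a ^ n := hb1.trans_eq hb2
      _ ≤ ((t/2) ^ n * ω) * a ^ n :=
          mul_le_mul_of_nonneg_right hb3 (by positivity)
      _ ≤ (t ^ n * ω) * a ^ n := by
          apply mul_le_mul_of_nonneg_right _ (by positivity)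
          exact mul_le_mul_of_nonneg_right hb4 hω0
      _ = ω * t ^ n * a ^ n := by ring
  have hkey : b ^ n * Qb * J ≤ (2:ℝ)^m * max I ω * (a ^ n * P) :=
    key_arith n hm I ω hI0 hω0 ha hab ht0 hJ0 hJ1 hJ2
  have hnear : ∫ y in B, F y ≤ (2:ℝ)^m * ((2:ℝ)^m * max I ω) * (a ^ n * P) := by
    calc ∫ y in B, F y ≤ J * (b ^ n * ((2:ℝ)^m * Qb)) := hnear1
      _ = (2:ℝ)^m * (b ^ n * Qb * J) := by ring
      _ ≤ (2:ℝ)^m * ((2:ℝ)^m * max I ω * (a ^ n * P)) :=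
          mul_le_mul_of_nonneg_left hkey (by positivity)
      _ = (2:ℝ)^m * ((2:ℝ)^m * max I ω) * (a ^ n * P) := by ring
  -- far term
  set G : En n → ℝ := fun y =>
    (a ^ n * ((2:ℝ)^m * P)) * (b ^ n * (1 + b * ‖x - y‖) ^ (-m)) with hGdef
  have hphib : Integrable (fun y : En n => (1 + b * ‖x - y‖) ^ (-m)) := by
    have := (integrable_comp_sub_left (fun z : En n => (1 + b * ‖z‖) ^ (-m)) x).2
      (integrable_phi n hm hb)
    simpa using this
  have hGint : Integrable G := (hphib.const_mul _).const_mul _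
  have hfar_pt : ∀ y ∈ Bᶜ, F y ≤ G y := by
    intro y hy
    rw [hBdef, Set.mem_compl_iff, mem_ball_zero_iff, not_lt] at hy
    have := half_bound (a := a) hm0 ha ht0 hy
    exact mul_le_mul_of_nonneg_right (mul_le_mul_of_nonneg_left this (by positivity))
      (by positivity)
  have hfar1 : ∫ y in Bᶜ, F y ≤ ∫ y in Bᶜ, G y :=
    setIntegral_mono_on hFint.integrableOn hGint.integrableOn
      measurableSet_ball.compl hfar_pt
  have hfar2 : ∫ y in Bᶜ, G y ≤ ∫ y, G y :=
    setIntegral_le_integral hGint (Filter.Eventually.of_forall fun y => by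
      have := phi_pos (m := m) hb.le (norm_nonneg (x - y)); positivity)
  have hfar3 : ∫ y, G y = (2:ℝ)^m * I * (a ^ n * P) := by
    rw [hGdef]
    rw [integral_const_mul]
    have htrans : ∫ y : En n, b ^ n * (1 + b * ‖x - y‖) ^ (-m) =
        ∫ z : En n, b ^ n * (1 + b * ‖z‖) ^ (-m) :=
      integral_sub_left_eq_self (fun z : En n => b ^ n * (1 + b * ‖z‖) ^ (-m)) volume x
    rw [htrans, integral_phi n m hb, ← hI]
    ring
  calc ∫ y, F y = (∫ y in B, F y) + ∫ y in Bᶜ, F y := hsplit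
    _ ≤ (2:ℝ)^m * ((2:ℝ)^m * max I ω) * (a ^ n * P) + (2:ℝ)^m * I * (a ^ n * P) := by
        have := hfar1.trans (hfar2.trans_eq hfar3)
        linarith [hnear]
    _ = ((2:ℝ)^m * (2:ℝ)^m * max I ω + (2:ℝ)^m * I) * (a ^ n * P) := by ring

end Core

section Main

lemma omega_pos (n : ℕ) : 0 < (volume (ball (0:En n) 1)).toReal :=
  ENNReal.toReal_pos (measure_ball_pos _ _ one_pos).ne' measure_ball_lt_top.ne

lemma I_pos (n : ℕ) {m : ℝ} (hm : (n:ℝ) < m) :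
    0 < ∫ u : En n, (1 + ‖u‖) ^ (-m) := by
  have hm0 : 0 < m := lt_of_le_of_lt (Nat.cast_nonneg n) hm
  have hint : Integrable (fun u : En n => (1 + ‖u‖) ^ (-m)) :=
    integrable_one_add_norm (by simpa using hm)
  have h1 : ∀ u ∈ ball (0:En n) 1, (2:ℝ) ^ (-m) ≤ (1 + ‖u‖) ^ (-m) := by
    intro u hu
    rw [mem_ball_zero_iff] at hu
    exact phi_anti hm0 (by positivity) (by linarith)
  have h2 : ∫ _ in ball (0:En n) 1, ((2:ℝ) ^ (-m)) ≤
      ∫ u in ball (0:En n) 1, (1 + ‖u‖) ^ (-m) :=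
    setIntegral_mono_on (integrableOn_const measure_ball_lt_top.ne)
      hint.integrableOn measurableSet_ball h1
  have h3 : ∫ u in ball (0:En n) 1, (1 + ‖u‖) ^ (-m) ≤ ∫ u, (1 + ‖u‖) ^ (-m) :=
    setIntegral_le_integral hint (Filter.Eventually.of_forall fun u => by positivity)
  have h4 : ∫ _ in ball (0:En n) 1, ((2:ℝ) ^ (-m)) =
      (volume (ball (0:En n) 1)).toReal * (2:ℝ) ^ (-m) := by
    rw [setIntegral_const, smul_eq_mul, measureReal_def]
  have h5 : 0 < (volume (ball (0:En n) 1)).toReal * (2:ℝ) ^ (-m) := by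
    have := omega_pos n; positivity
  linarith [h4 ▸ h2]

lemma convComm {n : ℕ} (f g : En n → ℝ) (x : En n) : conv f g x = conv g f x := by
  unfold conv
  rw [← integral_sub_left_eq_self (fun y => f y * g (x - y)) volume x]
  simp only [sub_sub_cancel]
  simp_rw [mul_comm]

lemma eta_eq (n : ℕ) (v : ℤ) (m : ℝ) (y : En n) :
    eta n v m y = ((2:ℝ) ^ ((v:ℝ))) ^ n * (1 + (2:ℝ) ^ ((v:ℝ)) * ‖y‖) ^ (-m) := by
  unfold eta
  rw [mul_comm ((n:ℝ)) ((v:ℝ)), Real.rpow_mul (by norm_num : (0:ℝ) ≤ 2),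
    Real.rpow_natCast]

end Main

/-- Two convolved kernels are comparable to one: η_{v₀,m} * η_{v₁,m} ≈ η_{min(v₀,v₁),m}
for m > n, with constants depending only on m and n. -/
theorem eta_conv_eta (n : ℕ) (m : ℝ) (hm : (n : ℝ) < m) :
    ∃ c₁ > (0:ℝ), ∃ c₂ > (0:ℝ), ∀ (v₀ v₁ : ℕ) (x : En n),
      c₁ * eta n (min (v₀ : ℤ) (v₁ : ℤ)) m x ≤ conv (eta n v₀ m) (eta n v₁ m) x ∧
      conv (eta n v₀ m) (eta n v₁ m) x ≤ c₂ * eta n (min (v₀ : ℤ) (v₁ : ℤ)) m x := by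
  set I : ℝ := ∫ u : En n, (1 + ‖u‖) ^ (-m) with hIdef
  set ω : ℝ := (volume (ball (0:En n) 1)).toReal with hωdef
  have hI0 : 0 < I := I_pos n hm
  have hω0 : 0 < ω := omega_pos n
  refine ⟨(2:ℝ) ^ (-(2*m)) * ω, by positivity,
    (2:ℝ)^m * (2:ℝ)^m * max I ω + (2:ℝ)^m * I, by positivity, ?_⟩
  have key : ∀ (w u : ℕ), w ≤ u → ∀ x : En n,
      ((2:ℝ) ^ (-(2*m)) * ω) * eta n (w:ℤ) m x ≤ conv (eta n w m) (eta n u m) x ∧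
      conv (eta n w m) (eta n u m) x ≤
        ((2:ℝ)^m * (2:ℝ)^m * max I ω + (2:ℝ)^m * I) * eta n (w:ℤ) m x := by
    intro w u hwu x
    set a : ℝ := (2:ℝ) ^ ((((w:ℤ)):ℝ)) with hadef
    set b : ℝ := (2:ℝ) ^ ((((u:ℤ)):ℝ)) with hbdef
    have ha : 0 < a := Real.rpow_pos_of_pos (by norm_num) _
    have hab : a ≤ b := by
      apply Real.rpow_le_rpow_of_exponent_le one_le_two
      exact_mod_cast hwu
    have hconv : conv (eta n w m) (eta n u m) x =
        ∫ y, (a ^ n * (1 + a * ‖y‖) ^ (-m)) * (b ^ n * (1 + b * ‖x - y‖) ^ (-m)) := by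
      unfold conv
      congr 1
      funext y
      rw [eta_eq, eta_eq]
    have heta : eta n (w:ℤ) m x = a ^ n * (1 + a * ‖x‖) ^ (-m) := eta_eq n w m x
    rw [hconv, heta]
    exact ⟨core_lower hm ha hab x, core_upper hm ha hab x⟩
  intro v₀ v₁ x
  rcases le_total v₀ v₁ with h | h
  · have hk := key v₀ v₁ h x
    rwa [min_eq_left (by exact_mod_cast h : (v₀:ℤ) ≤ (v₁:ℤ))]
  · have hk := key v₁ v₀ h x
    rw [min_eq_right (by exact_mod_cast h : (v₁:ℤ) ≤ (v₀:ℤ)),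
      convComm (eta n v₀ m) (eta n v₁ m) x]
    exact hk
end
end

section
/- Let v ∈ ℕ₀ and m > n. Then for any dyadic cube Q ⊂ ℝⁿ with side length l(Q) = 2^{-v}, any y ∈ Q, and any x ∈ ℝⁿ, one has η_{v,m} * (χ_Q / |Q|)(x) ≈ η_{v,m}(x - y), with implicit constants depending only on m and n. -/
open MeasureTheory
noncomputable section

/-! ### Auxiliary lemmas -/

lemma cube_eq (n : ℕ) (v : ℤ) (mm : Fin n → ℤ) :
    dyadicCube n v mm = ((MeasurableEquiv.toLp 2 (Fin n → ℝ)).symm) ⁻¹'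
      (Set.univ.pi fun i => Set.Ico ((mm i : ℝ) * (2:ℝ)^(-v)) (((mm i : ℝ)+1) * (2:ℝ)^(-v))) := by
  ext x
  have h2 : (0:ℝ) < (2:ℝ)^v := zpow_pos (by norm_num) v
  simp only [dyadicCube, Set.mem_preimage, Set.mem_pi, Set.mem_univ, forall_true_left,
    Set.mem_Ico, Set.mem_setOf_eq]
  have hx : ∀ i, ((MeasurableEquiv.toLp 2 (Fin n → ℝ)).symm) x i = x i := fun _ => rfl
  have key : ∀ (a : ℝ) (i : Fin n), a ≤ 2 ^ v * x i ↔ a * (2:ℝ)^(-v) ≤ x i := by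
    intro a i
    rw [zpow_neg, mul_inv_le_iff₀ h2, mul_comm]
  have key2 : ∀ (a : ℝ) (i : Fin n), 2 ^ v * x i < a ↔ x i < a * (2:ℝ)^(-v) := by
    intro a i
    rw [zpow_neg, lt_mul_inv_iff₀ h2, mul_comm]
  constructor
  · intro h i
    rw [hx, ← key, ← key2]; exact h i
  · intro h i
    rw [key, key2]; have := h i; rwa [hx] at this

lemma cube_meas (n : ℕ) (v : ℤ) (mm : Fin n → ℤ) : MeasurableSet (dyadicCube n v mm) := by
  rw [cube_eq]
  exact ((MeasurableEquiv.toLp 2 (Fin n → ℝ)).symm).measurable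
    (MeasurableSet.univ_pi fun i => measurableSet_Ico)

lemma cube_vol (n : ℕ) (v : ℤ) (mm : Fin n → ℤ) :
    volume (dyadicCube n v mm) = ENNReal.ofReal (((2:ℝ)^(-v))^n) := by
  rw [cube_eq,
    (EuclideanSpace.volume_preserving_symm_measurableEquiv_toLp (Fin n)).measure_preimage
      ((MeasurableSet.univ_pi fun i => measurableSet_Ico).nullMeasurableSet),
    volume_pi_pi]
  have : ∀ i : Fin n, volume (Set.Ico ((mm i : ℝ) * (2:ℝ)^(-v)) (((mm i : ℝ)+1) * (2:ℝ)^(-v)))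
      = ENNReal.ofReal ((2:ℝ)^(-v)) := by
    intro i; rw [Real.volume_Ico]; ring_nf
  simp only [this, Finset.prod_const, Finset.card_univ, Fintype.card_fin]
  rw [← ENNReal.ofReal_pow (by positivity)]

lemma cube_diam {n : ℕ} {v : ℤ} {mm : Fin n → ℤ} {w y : En n}
    (hw : w ∈ dyadicCube n v mm) (hy : y ∈ dyadicCube n v mm) :
    ‖w - y‖ ≤ Real.sqrt n * (2:ℝ)^(-(v:ℝ)) := by
  have h2 : (0:ℝ) < (2:ℝ)^v := zpow_pos (by norm_num) v
  have hco : ∀ i, ((w - y) i)^2 ≤ ((2:ℝ)^(-(v:ℝ)))^2 := by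
    intro i
    have hwi := hw i; have hyi := hy i
    have h1 : |2^v * w i - 2^v * y i| < 1 := by
      rw [abs_lt]; constructor <;> nlinarith [hwi.1, hwi.2, hyi.1, hyi.2]
    have h2v : |w i - y i| ≤ (2:ℝ)^(-v : ℤ) := by
      rw [← mul_sub] at h1
      rw [abs_mul, abs_of_pos h2] at h1
      rw [zpow_neg]
      have hh : 2^v * |w i - y i| ≤ 2^v * ((2:ℝ)^v)⁻¹ := by
        rw [mul_inv_cancel₀ h2.ne']; linarith
      exact le_of_mul_le_mul_left hh h2
    have hv : ((2:ℝ)^(-v:ℤ)) = (2:ℝ)^(-(v:ℝ)) := by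
      rw [← Real.rpow_intCast 2 (-v)]; push_cast; ring_nf
    have hsub : (w - y) i = w i - y i := rfl
    rw [hsub, ← hv]
    calc (w i - y i)^2 = |w i - y i|^2 := (sq_abs _).symm
    _ ≤ ((2:ℝ)^(-v:ℤ))^2 := pow_le_pow_left₀ (abs_nonneg _) h2v 2
  have hnorm : ‖w - y‖ = Real.sqrt (∑ i, ((w - y) i)^2) := by
    rw [EuclideanSpace.norm_eq]; congr 1; apply Finset.sum_congr rfl; intro i _
    rw [Real.norm_eq_abs, sq_abs]
  rw [hnorm]
  have hsum : (∑ i, ((w - y) i)^2) ≤ (n : ℝ) * ((2:ℝ)^(-(v:ℝ)))^2 := by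
    calc (∑ i, ((w - y) i)^2) ≤ ∑ _i : Fin n, ((2:ℝ)^(-(v:ℝ)))^2 :=
      Finset.sum_le_sum fun i _ => hco i
    _ = (n : ℝ) * ((2:ℝ)^(-(v:ℝ)))^2 := by
        simp [Finset.sum_const, nsmul_eq_mul]
  calc Real.sqrt (∑ i, ((w - y) i)^2) ≤ Real.sqrt ((n:ℝ) * ((2:ℝ)^(-(v:ℝ)))^2) :=
    Real.sqrt_le_sqrt hsum
  _ = Real.sqrt n * (2:ℝ)^(-(v:ℝ)) := by
      rw [Real.sqrt_mul (Nat.cast_nonneg n), Real.sqrt_sq (by positivity)]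

lemma eta_pos {n : ℕ} {v : ℤ} {m : ℝ} (x : En n) : 0 < eta n v m x := by
  unfold eta
  have : (0:ℝ) < 1 + (2:ℝ)^(v:ℝ) * ‖x‖ := by positivity
  positivity

lemma eta_le {n : ℕ} {v : ℤ} {m : ℝ} (hm : 0 ≤ m) (x : En n) :
    eta n v m x ≤ (2:ℝ) ^ ((n:ℝ) * (v:ℝ)) := by
  unfold eta
  have hb : (1:ℝ) ≤ 1 + (2:ℝ)^(v:ℝ) * ‖x‖ := by
    have := mul_nonneg (Real.rpow_nonneg (by norm_num : (0:ℝ) ≤ 2) (v:ℝ)) (norm_nonneg x)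
    linarith
  have : (1 + (2:ℝ)^(v:ℝ) * ‖x‖) ^ (-m) ≤ 1 := by
    rw [Real.rpow_neg (by positivity)]
    apply inv_le_one_of_one_le₀
    exact Real.one_le_rpow hb hm
  nlinarith [Real.rpow_pos_of_pos (show (0:ℝ) < 2 by norm_num) ((n:ℝ)*(v:ℝ))]

lemma eta_continuous (n : ℕ) (v : ℤ) (m : ℝ) : Continuous (eta n v m) := by
  unfold eta
  apply Continuous.mul continuous_const
  apply Continuous.rpow_const
  · exact (continuous_const.add (continuous_const.mul continuous_norm))
  · intro x; left
    have : (0:ℝ) < 1 + (2:ℝ)^(v:ℝ) * ‖x‖ := by positivity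
    exact ne_of_gt this

lemma eta_comp {n : ℕ} {m : ℝ} (hm0 : 0 ≤ m) (v : ℤ) (x : En n) {w y : En n}
    (h : ‖w - y‖ ≤ Real.sqrt n * (2:ℝ)^(-(v:ℝ))) :
    ((1 + Real.sqrt n) ^ m)⁻¹ * eta n v m (x - y) ≤ eta n v m (x - w) := by
  set s : ℝ := 1 + Real.sqrt n with hs
  have hs1 : (1:ℝ) ≤ s := by
    have := Real.sqrt_nonneg (n:ℝ); simp only [hs]; linarith
  set b1 : ℝ := 1 + (2:ℝ)^(v:ℝ) * ‖x - y‖ with hb1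
  set b2 : ℝ := 1 + (2:ℝ)^(v:ℝ) * ‖x - w‖ with hb2
  have hb1pos : (0:ℝ) < b1 := by rw [hb1]; positivity
  have hb2pos : (0:ℝ) < b2 := by rw [hb2]; positivity
  have hrv : (0:ℝ) < (2:ℝ)^(v:ℝ) := Real.rpow_pos_of_pos (by norm_num) _
  have hkey : b2 ≤ s * b1 := by
    have htri : ‖x - w‖ ≤ ‖x - y‖ + ‖w - y‖ := by
      calc ‖x - w‖ = ‖(x - y) + (y - w)‖ := by congr 1; abel
      _ ≤ ‖x - y‖ + ‖y - w‖ := norm_add_le _ _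
      _ = ‖x - y‖ + ‖w - y‖ := by rw [norm_sub_rev y w]
    have hcancel : (2:ℝ)^(v:ℝ) * (2:ℝ)^(-(v:ℝ)) = 1 := by
      rw [← Real.rpow_add (by norm_num)]; simp
    have h2 : (2:ℝ)^(v:ℝ) * ‖x - w‖ ≤ (2:ℝ)^(v:ℝ) * ‖x - y‖ + Real.sqrt n := by
      calc (2:ℝ)^(v:ℝ) * ‖x - w‖ ≤ (2:ℝ)^(v:ℝ) * (‖x - y‖ + ‖w - y‖) := by
            apply mul_le_mul_of_nonneg_left htri hrv.le
      _ ≤ (2:ℝ)^(v:ℝ) * ‖x - y‖ + (2:ℝ)^(v:ℝ) * (Real.sqrt n * (2:ℝ)^(-(v:ℝ))) := by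
            rw [mul_add]; gcongr
      _ = (2:ℝ)^(v:ℝ) * ‖x - y‖ + Real.sqrt n := by
            rw [show (2:ℝ)^(v:ℝ) * (Real.sqrt n * (2:ℝ)^(-(v:ℝ)))
              = Real.sqrt n * ((2:ℝ)^(v:ℝ) * (2:ℝ)^(-(v:ℝ))) by ring, hcancel, mul_one]
    have hsq : (0:ℝ) ≤ Real.sqrt n := Real.sqrt_nonneg n
    have hA : (0:ℝ) ≤ (2:ℝ)^(v:ℝ) * ‖x - y‖ := by positivity
    rw [hb2, hb1, hs]; nlinarith
  have hrpow : b2 ^ m ≤ s ^ m * b1 ^ m := by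
    calc b2 ^ m ≤ (s * b1) ^ m := Real.rpow_le_rpow hb2pos.le hkey hm0
    _ = s ^ m * b1 ^ m := Real.mul_rpow (by linarith) hb1pos.le
  have hfinal : (s ^ m)⁻¹ * b1 ^ (-m) ≤ b2 ^ (-m) := by
    rw [Real.rpow_neg hb1pos.le, Real.rpow_neg hb2pos.le, ← mul_inv]
    apply inv_anti₀ (Real.rpow_pos_of_pos hb2pos m) hrpow
  unfold eta
  rw [← hb1, ← hb2]
  have h2nv : (0:ℝ) < (2:ℝ) ^ ((n:ℝ) * (v:ℝ)) := Real.rpow_pos_of_pos (by norm_num) _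
  calc (s ^ m)⁻¹ * ((2:ℝ)^((n:ℝ)*(v:ℝ)) * b1 ^ (-m))
      = (2:ℝ)^((n:ℝ)*(v:ℝ)) * ((s ^ m)⁻¹ * b1 ^ (-m)) := by ring
  _ ≤ (2:ℝ)^((n:ℝ)*(v:ℝ)) * b2 ^ (-m) := by
      apply mul_le_mul_of_nonneg_left hfinal h2nv.le

/-- η_{v,m} * (χ_Q/|Q|)(x) ≈ η_{v,m}(x - y) for y ∈ Q, where Q is a dyadic cube of side
length 2^{-v} and m > n, with constants depending only on m and n. -/
theorem eta_conv_indicator (n : ℕ) (m : ℝ) (hm : (n : ℝ) < m) :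
    ∃ c₁ > (0:ℝ), ∃ c₂ > (0:ℝ), ∀ (v : ℕ) (mm : Fin n → ℤ) (y : En n), y ∈ dyadicCube n v mm →
      ∀ x : En n,
      c₁ * eta n v m (x - y) ≤
        conv (eta n v m)
          ((dyadicCube n v mm).indicator fun _ => (2 : ℝ) ^ ((v : ℝ) * (n : ℝ))) x ∧
      conv (eta n v m)
          ((dyadicCube n v mm).indicator fun _ => (2 : ℝ) ^ ((v : ℝ) * (n : ℝ))) x ≤
        c₂ * eta n v m (x - y) := by
  have hm0 : 0 ≤ m := le_trans (Nat.cast_nonneg n) hm.le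
  have hsn : (0:ℝ) < 1 + Real.sqrt n := by have := Real.sqrt_nonneg (n:ℝ); linarith
  have hcpos : (0:ℝ) < (1 + Real.sqrt n) ^ m := Real.rpow_pos_of_pos hsn m
  refine ⟨((1 + Real.sqrt n) ^ m)⁻¹, inv_pos.2 hcpos, (1 + Real.sqrt n) ^ m, hcpos, ?_⟩
  intro v mm y hy x
  set Q := dyadicCube n (v:ℤ) mm with hQdef
  set K : ℝ := (2:ℝ) ^ ((v:ℝ)*(n:ℝ)) with hK
  have hKpos : 0 < K := Real.rpow_pos_of_pos (by norm_num) _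
  have hQm : MeasurableSet Q := cube_meas n v mm
  have hQvol : volume Q = ENNReal.ofReal (((2:ℝ)^(-(v:ℤ)))^n) := cube_vol n v mm
  have hvolR : (volume Q).toReal = ((2:ℝ)^(-(v:ℤ)))^n := by
    rw [hQvol, ENNReal.toReal_ofReal (by positivity)]
  have hQfin : volume Q < ⊤ := by rw [hQvol]; exact ENNReal.ofReal_lt_top
  have hconv : conv (eta n (v:ℤ) m) (Q.indicator fun _ => K) x
      = K * ∫ w in Q, eta n (v:ℤ) m (x - w) := by
    unfold conv
    have e1 : (∫ z, eta n (v:ℤ) m z * Q.indicator (fun _ => K) (x - z))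
        = ∫ z, (fun w => eta n (v:ℤ) m (x - w) * Q.indicator (fun _ => K) w) (x - z) := by
      congr 1; funext z; simp [sub_sub_cancel]
    rw [e1, integral_sub_left_eq_self
      (fun w => eta n (v:ℤ) m (x - w) * Q.indicator (fun _ => K) w) volume x]
    have hind : ∀ w, eta n (v:ℤ) m (x - w) * (Q.indicator (fun _ => K) w)
        = Q.indicator (fun w => K * eta n (v:ℤ) m (x - w)) w := by
      intro w; by_cases hw : w ∈ Q <;>
        simp [Set.indicator_of_mem, Set.indicator_of_notMem, hw, mul_comm]
    simp_rw [hind]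
    rw [integral_indicator hQm, integral_const_mul]
  have hInt : IntegrableOn (fun w => eta n (v:ℤ) m (x - w)) Q volume := by
    apply Integrable.mono' (g := fun _ : En n => (2:ℝ)^((n:ℝ)*((v:ℤ):ℝ)))
      (integrableOn_const hQfin.ne)
    · exact (((eta_continuous n v m).comp
        (continuous_const.sub continuous_id)).aestronglyMeasurable).restrict
    · filter_upwards with w
      rw [Real.norm_eq_abs, abs_of_pos (eta_pos _)]
      exact eta_le hm0 _
  have hIntc : IntegrableOn
      (fun _ : En n => ((1 + Real.sqrt n) ^ m)⁻¹ * eta n (v:ℤ) m (x - y)) Q volume :=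
    integrableOn_const hQfin.ne
  have hIntc2 : IntegrableOn
      (fun _ : En n => (1 + Real.sqrt n) ^ m * eta n (v:ℤ) m (x - y)) Q volume :=
    integrableOn_const hQfin.ne
  have hpt1 : ∀ w ∈ Q, ((1 + Real.sqrt n) ^ m)⁻¹ * eta n (v:ℤ) m (x - y)
      ≤ eta n (v:ℤ) m (x - w) :=
    fun w hw => eta_comp hm0 v x (cube_diam hw hy)
  have hpt2 : ∀ w ∈ Q, eta n (v:ℤ) m (x - w)
      ≤ (1 + Real.sqrt n) ^ m * eta n (v:ℤ) m (x - y) := by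
    intro w hw
    have h := eta_comp hm0 v x (cube_diam hy hw)
    calc eta n (v:ℤ) m (x - w)
        = (1 + Real.sqrt n) ^ m * (((1 + Real.sqrt n) ^ m)⁻¹ * eta n (v:ℤ) m (x - w)) := by
          field_simp
    _ ≤ (1 + Real.sqrt n) ^ m * eta n (v:ℤ) m (x - y) :=
        mul_le_mul_of_nonneg_left h hcpos.le
  have hKV : K * (volume Q).toReal = 1 := by
    rw [hvolR]
    have h1 : ((2:ℝ)^(-(v:ℤ)))^n = (2:ℝ) ^ (-((v:ℝ)*(n:ℝ))) := by
      rw [← Real.rpow_intCast 2 (-(v:ℤ))]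
      push_cast
      rw [← Real.rpow_natCast ((2:ℝ)^(-(v:ℝ))) n, ← Real.rpow_mul (by norm_num)]
      congr 1; ring
    rw [h1, hK, ← Real.rpow_add (by norm_num)]
    simp
  have hlow : (volume Q).toReal * (((1 + Real.sqrt n) ^ m)⁻¹ * eta n (v:ℤ) m (x - y))
      ≤ ∫ w in Q, eta n (v:ℤ) m (x - w) := by
    have := setIntegral_mono_on hIntc hInt hQm hpt1
    rwa [setIntegral_const, smul_eq_mul] at this
  have hhigh : (∫ w in Q, eta n (v:ℤ) m (x - w))
      ≤ (volume Q).toReal * ((1 + Real.sqrt n) ^ m * eta n (v:ℤ) m (x - y)) := by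
    have := setIntegral_mono_on hInt hIntc2 hQm hpt2
    rwa [setIntegral_const, smul_eq_mul] at this
  constructor
  · rw [hconv]
    calc ((1 + Real.sqrt n) ^ m)⁻¹ * eta n (v:ℤ) m (x - y)
        = K * ((volume Q).toReal * (((1 + Real.sqrt n) ^ m)⁻¹ * eta n (v:ℤ) m (x - y))) := by
          rw [← mul_assoc, hKV, one_mul]
    _ ≤ K * ∫ w in Q, eta n (v:ℤ) m (x - w) := mul_le_mul_of_nonneg_left hlow hKpos.le
  · rw [hconv]
    calc K * ∫ w in Q, eta n (v:ℤ) m (x - w)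
        ≤ K * ((volume Q).toReal * ((1 + Real.sqrt n) ^ m * eta n (v:ℤ) m (x - y))) :=
          mul_le_mul_of_nonneg_left hhigh hKpos.le
    _ = (1 + Real.sqrt n) ^ m * eta n (v:ℤ) m (x - y) := by
          rw [← mul_assoc, hKV, one_mul]
end
end

section
/- Let v, j ∈ ℕ₀, r ∈ (0,1], and m > n/r. Then for any dyadic cube Q ⊂ ℝⁿ with side length 2^{-v}, one has (η_{j,m} * η_{v,m} * χ_Q)^r ≈ 2^{(v-j)⁺ n (1-r)} η_{j,mr} * η_{v,mr} * χ_Q pointwise on ℝⁿ, with constants depending only on m, n, and r. -/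
open MeasureTheory
noncomputable section

section EtaAuxSec
open Metric Set Filter
namespace EtaAux
variable {n : ℕ}

lemma tp_pos (a : ℝ) : 0 < (2:ℝ) ^ a := Real.rpow_pos_of_pos two_pos a

lemma base_pos (v : ℤ) (x : En n) : 0 < 1 + (2:ℝ) ^ (v:ℝ) * ‖x‖ := by positivity

lemma eta_pos (v : ℤ) (m : ℝ) (x : En n) : 0 < eta n v m x :=
  mul_pos (tp_pos _) (Real.rpow_pos_of_pos (base_pos v x) _)

lemma eta_nonneg (v : ℤ) (m : ℝ) (x : En n) : 0 ≤ eta n v m x := (eta_pos v m x).le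

lemma eta_le_tp {m : ℝ} (hm : 0 ≤ m) (v : ℤ) (x : En n) :
    eta n v m x ≤ (2:ℝ) ^ ((n:ℝ) * (v:ℝ)) := by
  have : (1 + (2:ℝ) ^ (v:ℝ) * ‖x‖) ^ (-m) ≤ 1 :=
    Real.rpow_le_one_of_one_le_of_nonpos
      (le_add_of_nonneg_right (by positivity)) (neg_nonpos.mpr hm)
  calc eta n v m x ≤ (2:ℝ) ^ ((n:ℝ)*(v:ℝ)) * 1 := by
        exact mul_le_mul_of_nonneg_left this (tp_pos _).le
    _ = _ := mul_one _

lemma eta_continuous (v : ℤ) (m : ℝ) : Continuous (eta n v m) := by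
  unfold eta
  refine continuous_const.mul (Continuous.rpow_const ?_ fun x => Or.inl (base_pos v x).ne') 
  exact continuous_const.add (continuous_const.mul continuous_norm)

/-- Main comparison lemma. -/
lemma eta_comp {m : ℝ} (hm : 0 ≤ m) (v : ℤ) {K : ℝ} (hK : 0 < K) {x z : En n}
    (h : 1 + (2:ℝ)^(v:ℝ) * ‖x‖ ≤ K * (1 + (2:ℝ)^(v:ℝ) * ‖z‖)) :
    eta n v m z ≤ K ^ m * eta n v m x := by
  unfold eta
  rw [mul_comm (K^m), mul_assoc]
  refine mul_le_mul_of_nonneg_left ?_ (tp_pos _).le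
  have hx := base_pos v x
  have hz := base_pos v z
  have h1 : (1 + (2:ℝ)^(v:ℝ) * ‖x‖) / K ≤ 1 + (2:ℝ)^(v:ℝ) * ‖z‖ := by
    rw [div_le_iff₀ hK]; linarith
  have h2 : (1 + (2:ℝ)^(v:ℝ) * ‖z‖) ^ (-m) ≤ ((1 + (2:ℝ)^(v:ℝ) * ‖x‖) / K) ^ (-m) :=
    Real.rpow_le_rpow_of_nonpos (by positivity) h1 (neg_nonpos.mpr hm)
  calc (1 + (2:ℝ)^(v:ℝ) * ‖z‖) ^ (-m) ≤ ((1 + (2:ℝ)^(v:ℝ) * ‖x‖) / K) ^ (-m) := h2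
    _ = (1 + (2:ℝ)^(v:ℝ) * ‖x‖) ^ (-m) * K ^ m := by
        rw [Real.div_rpow hx.le hK.le, Real.rpow_neg hK.le, div_inv_eq_mul]
  

/-- the reference integral -/
def Ic (n : ℕ) (m : ℝ) : ℝ := ∫ y : En n, (1 + ‖y‖) ^ (-m)

lemma integrable_japanese {m : ℝ} (hm : (n:ℝ) < m) :
    Integrable (fun y : En n => (1 + ‖y‖) ^ (-m)) :=
  integrable_one_add_norm (μ := volume) (by rw [finrank_euclideanSpace_fin]; exact hm)

lemma integrable_eta {m : ℝ} (hm : (n:ℝ) < m) (v : ℤ) : Integrable (eta n v m) := by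
  have hm0 : (0:ℝ) ≤ m := le_trans (Nat.cast_nonneg n) hm.le
  set t : ℝ := (2:ℝ) ^ (v:ℝ) with ht
  have htp : 0 < t := tp_pos _
  set c : ℝ := min 1 t with hc
  have hcp : 0 < c := lt_min one_pos htp
  refine (((integrable_japanese hm).const_mul ((2:ℝ)^((n:ℝ)*(v:ℝ)) * c ^ (-m))).mono'
    ((eta_continuous v m).aestronglyMeasurable) (Eventually.of_forall fun y => ?_))
  have hb : c * (1 + ‖y‖) ≤ 1 + t * ‖y‖ := by
    have h1 : c ≤ 1 := min_le_left _ _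
    have h2 : c ≤ t := min_le_right _ _
    have := norm_nonneg y
    nlinarith
  have key : (1 + t * ‖y‖) ^ (-m) ≤ c ^ (-m) * (1 + ‖y‖) ^ (-m) := by
    calc (1 + t * ‖y‖) ^ (-m) ≤ (c * (1 + ‖y‖)) ^ (-m) :=
          Real.rpow_le_rpow_of_nonpos (by positivity) hb (neg_nonpos.mpr hm0)
      _ = c ^ (-m) * (1 + ‖y‖) ^ (-m) := Real.mul_rpow hcp.le (by positivity)
  have : eta n v m y ≤ (2:ℝ)^((n:ℝ)*(v:ℝ)) * c ^ (-m) * (1 + ‖y‖) ^ (-m) := by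
    unfold eta; rw [mul_assoc]
    exact mul_le_mul_of_nonneg_left key (tp_pos _).le
  rw [Real.norm_eq_abs, abs_of_nonneg (le_of_lt (by unfold eta; positivity))]
  exact this

lemma integral_eta {m : ℝ} (hm : (n:ℝ) < m) (v : ℤ) : ∫ y, eta n v m y = Ic n m := by
  have htp : (0:ℝ) < (2:ℝ)^(v:ℝ) := tp_pos _
  have key : ∀ y : En n, eta n v m y
      = (2:ℝ)^((n:ℝ)*(v:ℝ)) * (fun z : En n => (1 + ‖z‖) ^ (-m)) (((2:ℝ)^(v:ℝ)) • y) := by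
    intro y
    unfold eta
    congr 2
    rw [norm_smul, Real.norm_eq_abs, abs_of_nonneg htp.le]
  calc ∫ y, eta n v m y
      = ∫ y : En n, (2:ℝ)^((n:ℝ)*(v:ℝ)) * (fun z : En n => (1 + ‖z‖)^(-m)) (((2:ℝ)^(v:ℝ)) • y) := by
        exact integral_congr_ae (Eventually.of_forall key)
    _ = (2:ℝ)^((n:ℝ)*(v:ℝ)) * ∫ y : En n, (fun z : En n => (1 + ‖z‖)^(-m)) (((2:ℝ)^(v:ℝ)) • y) :=
        integral_const_mul _ _
    _ = (2:ℝ)^((n:ℝ)*(v:ℝ)) * ((((2:ℝ)^(v:ℝ)) ^ n)⁻¹ • Ic n m) := by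
        have hcs := Measure.integral_comp_smul_of_nonneg (μ := (volume : Measure (En n)))
          (fun z : En n => (1 + ‖z‖)^(-m)) ((2:ℝ)^(v:ℝ)) (hR := htp.le)
        rw [finrank_euclideanSpace_fin] at hcs
        rw [hcs]; rfl
    _ = Ic n m := by
        rw [smul_eq_mul, ← mul_assoc, ← Real.rpow_natCast ((2:ℝ)^(v:ℝ)) n,
          ← Real.rpow_mul (by norm_num), ← Real.rpow_neg (by norm_num),
          ← Real.rpow_add two_pos]
        norm_num [mul_comm]

lemma ball_vol_pos : 0 < (volume (ball (0 : En n) 1)).toReal :=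
  ENNReal.toReal_pos (measure_ball_pos volume 0 one_pos).ne' measure_ball_lt_top.ne

lemma Ic_pos {m : ℝ} (hm : (n:ℝ) < m) : 0 < Ic n m := by
  have h := integrable_japanese (n := n) hm
  rw [Ic, integral_pos_iff_support_of_nonneg (fun y => by positivity) h]
  have : (Function.support fun y : En n => (1 + ‖y‖) ^ (-m)) = univ := by
    ext y; simp only [Function.mem_support, mem_univ, iff_true]
    positivity
  rw [this]
  calc (0:ENNReal) < volume (ball (0:En n) 1) := measure_ball_pos volume 0 one_pos
    _ ≤ volume univ := measure_mono (subset_univ _)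


lemma hm0_of {m : ℝ} (hm : (n:ℝ) < m) : (0:ℝ) ≤ m := le_trans (Nat.cast_nonneg n) hm.le

lemma integral_eta_sub {m : ℝ} (hm : (n:ℝ) < m) (v : ℤ) (x : En n) :
    ∫ y, eta n v m (x - y) = Ic n m := by
  rw [integral_sub_left_eq_self (eta n v m) volume x, integral_eta hm]

lemma integrable_eta_sub {m : ℝ} (hm : (n:ℝ) < m) (v : ℤ) (x : En n) :
    Integrable (fun y => eta n v m (x - y)) := by
  have h := (integrable_eta (n := n) hm v).comp_sub_left x
  exact h

lemma integrable_eta_mul_eta {m : ℝ} (hm : (n:ℝ) < m) (a b : ℤ) (x : En n) :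
    Integrable (fun y => eta n a m y * eta n b m (x - y)) := by
  refine ((integrable_eta hm a).const_mul ((2:ℝ)^((n:ℝ)*(b:ℝ)))).mono'
    (((eta_continuous a m).mul ((eta_continuous b m).comp
      (continuous_const.sub continuous_id))).aestronglyMeasurable)
    (Eventually.of_forall fun y => ?_)
  rw [Real.norm_eq_abs, abs_of_nonneg (mul_nonneg (eta_nonneg _ _ _) (eta_nonneg _ _ _))]
  calc eta n a m y * eta n b m (x - y) ≤ eta n a m y * (2:ℝ)^((n:ℝ)*(b:ℝ)) :=
        mul_le_mul_of_nonneg_left (eta_le_tp (hm0_of hm) b _) (eta_nonneg _ _ _)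
    _ = (2:ℝ)^((n:ℝ)*(b:ℝ)) * eta n a m y := mul_comm _ _

/-- P4: at points where `1 ≤ 2^b ‖x‖`, the finer kernel is dominated by the coarser one. -/
lemma eta_fine_le_coarse {m : ℝ} (hnm : (n:ℝ) ≤ m) {a b : ℤ} (hab : b ≤ a) {x : En n}
    (hx : 1 ≤ (2:ℝ)^((b:ℝ)) * ‖x‖) : eta n a m x ≤ (2:ℝ)^m * eta n b m x := by
  have hm0 : 0 ≤ m := le_trans (Nat.cast_nonneg n) hnm
  have hxn : 0 < ‖x‖ := by
    rcases eq_or_lt_of_le (norm_nonneg x) with h | h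
    · exfalso; rw [← h] at hx; simp at hx; linarith
    · exact h
  have h1 : eta n a m x ≤ (2:ℝ)^((n:ℝ)*a + (a:ℝ)*(-m)) * ‖x‖^(-m) := by
    unfold eta
    rw [Real.rpow_add two_pos, mul_assoc]
    refine mul_le_mul_of_nonneg_left ?_ (tp_pos _).le
    have : ((2:ℝ)^((a:ℝ)) * ‖x‖) ^ (-m) = (2:ℝ)^((a:ℝ)*(-m)) * ‖x‖^(-m) := by
      rw [Real.mul_rpow (tp_pos _).le (norm_nonneg x), ← Real.rpow_mul (by norm_num)]
    rw [← this]
    exact Real.rpow_le_rpow_of_nonpos (by positivity) (by linarith [tp_pos ((a:ℝ)), mul_pos (tp_pos ((a:ℝ))) hxn]) (neg_nonpos.mpr hm0)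
  have h2 : (2:ℝ)^((n:ℝ)*b + (b:ℝ)*(-m) + (-m)) * ‖x‖^(-m) ≤ eta n b m x := by
    unfold eta
    rw [Real.rpow_add two_pos, Real.rpow_add two_pos, mul_assoc, mul_assoc]
    refine mul_le_mul_of_nonneg_left ?_ (tp_pos _).le
    have key : (1 + (2:ℝ)^((b:ℝ)) * ‖x‖) ^ (-m) ≥ ((2:ℝ) * ((2:ℝ)^((b:ℝ)) * ‖x‖)) ^ (-m) := by
      refine Real.rpow_le_rpow_of_nonpos (base_pos b x) ?_ (neg_nonpos.mpr hm0)
      nlinarith [mul_pos (tp_pos ((b:ℝ))) hxn]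
    have expand : ((2:ℝ) * ((2:ℝ)^((b:ℝ)) * ‖x‖)) ^ (-m)
        = (2:ℝ)^((b:ℝ)*(-m)) * ((2:ℝ)^(-m) * ‖x‖^(-m)) := by
      rw [Real.mul_rpow (by positivity) (by positivity),
        Real.mul_rpow (tp_pos _).le (norm_nonneg x), ← Real.rpow_mul (by norm_num)]
      ring
    rw [expand] at key
    calc (2:ℝ)^((b:ℝ)*(-m)) * ((2:ℝ)^(-m) * ‖x‖^(-m))
        ≤ (1 + (2:ℝ)^((b:ℝ)) * ‖x‖) ^ (-m) := key
      _ = _ := rfl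
  have hexp : (n:ℝ)*a + (a:ℝ)*(-m) ≤ m + ((n:ℝ)*b + (b:ℝ)*(-m) + (-m)) := by
    have hab' : (b:ℝ) ≤ (a:ℝ) := by exact_mod_cast hab
    nlinarith
  calc eta n a m x ≤ (2:ℝ)^((n:ℝ)*a + (a:ℝ)*(-m)) * ‖x‖^(-m) := h1
    _ ≤ (2:ℝ)^(m + ((n:ℝ)*b + (b:ℝ)*(-m) + (-m))) * ‖x‖^(-m) := by
        refine mul_le_mul_of_nonneg_right ?_ (by positivity)
        exact Real.rpow_le_rpow_of_exponent_le one_le_two hexp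
    _ = (2:ℝ)^m * ((2:ℝ)^((n:ℝ)*b + (b:ℝ)*(-m) + (-m)) * ‖x‖^(-m)) := by
        rw [Real.rpow_add two_pos, mul_assoc]
    _ ≤ (2:ℝ)^m * eta n b m x := mul_le_mul_of_nonneg_left h2 (tp_pos _).le

lemma pointwise_split {m : ℝ} (hm0 : 0 ≤ m) (a b : ℤ) (x y : En n) :
    eta n a m y * eta n b m (x - y) ≤
      (2:ℝ)^m * eta n b m x * eta n a m y + (2:ℝ)^m * eta n a m x * eta n b m (x - y) := by
  rcases le_total ‖y‖ (‖x‖/2) with hy | hy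
  · have hxy : ‖x‖ ≤ 2 * ‖x - y‖ := by
      have h1 : ‖x‖ - ‖y‖ ≤ ‖x - y‖ := norm_sub_norm_le x y
      linarith
    have hcomp : eta n b m (x - y) ≤ (2:ℝ)^m * eta n b m x := by
      refine eta_comp (n := n) hm0 b (K := 2) two_pos (x := x) (z := x - y) ?_
      have := tp_pos ((b:ℝ))
      nlinarith
    calc eta n a m y * eta n b m (x - y) ≤ eta n a m y * ((2:ℝ)^m * eta n b m x) :=
          mul_le_mul_of_nonneg_left hcomp (eta_nonneg _ _ _)
      _ = (2:ℝ)^m * eta n b m x * eta n a m y := by ring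
      _ ≤ _ := le_add_of_nonneg_right
          (mul_nonneg (mul_nonneg (tp_pos m).le (eta_nonneg _ _ _)) (eta_nonneg _ _ _))
  · have hxy : ‖x‖ ≤ 2 * ‖y‖ := by linarith
    have hcomp : eta n a m y ≤ (2:ℝ)^m * eta n a m x := by
      refine eta_comp (n := n) hm0 a (K := 2) two_pos (x := x) (z := y) ?_
      have := tp_pos ((a:ℝ))
      nlinarith
    calc eta n a m y * eta n b m (x - y) ≤ ((2:ℝ)^m * eta n a m x) * eta n b m (x - y) :=
          mul_le_mul_of_nonneg_right hcomp (eta_nonneg _ _ _)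
      _ = (2:ℝ)^m * eta n a m x * eta n b m (x - y) := by ring
      _ ≤ _ := le_add_of_nonneg_left
          (mul_nonneg (mul_nonneg (tp_pos m).le (eta_nonneg _ _ _)) (eta_nonneg _ _ _))

lemma K_upper {m : ℝ} (hm : (n:ℝ) < m) {a b : ℤ} (hab : b ≤ a) (x : En n) :
    ∫ y, eta n a m y * eta n b m (x - y) ≤
      ((2:ℝ)^m * ((2:ℝ)^m + 1) * Ic n m) * eta n b m x := by
  have hm0 : 0 ≤ m := hm0_of hm
  have hIc := Ic_pos (n := n) hm
  rcases le_total (1:ℝ) ((2:ℝ)^((b:ℝ)) * ‖x‖) with hx | hx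
  · have step1 : ∫ y, eta n a m y * eta n b m (x - y) ≤
        ∫ y, ((2:ℝ)^m * eta n b m x * eta n a m y + (2:ℝ)^m * eta n a m x * eta n b m (x - y)) := by
      refine integral_mono_of_nonneg (Eventually.of_forall fun y => ?_) ?_
        (Eventually.of_forall fun y => pointwise_split hm0 a b x y)
      · exact mul_nonneg (eta_nonneg _ _ _) (eta_nonneg _ _ _)
      · exact (((integrable_eta hm a).const_mul _).add
          (((integrable_eta hm b).comp_sub_left x).const_mul _))
    have step2 : ∫ y, ((2:ℝ)^m * eta n b m x * eta n a m y +
          (2:ℝ)^m * eta n a m x * eta n b m (x - y))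
        = (2:ℝ)^m * eta n b m x * Ic n m + (2:ℝ)^m * eta n a m x * Ic n m := by
      rw [integral_add (((integrable_eta hm a).const_mul _))
        (((integrable_eta hm b).comp_sub_left x).const_mul _),
        integral_const_mul, integral_const_mul, integral_eta hm, integral_eta_sub hm]
    have step3 : eta n a m x ≤ (2:ℝ)^m * eta n b m x := eta_fine_le_coarse hm.le hab hx
    have hb := eta_nonneg (n := n) b m x
    have h2m := tp_pos m
    calc ∫ y, eta n a m y * eta n b m (x - y)
        ≤ (2:ℝ)^m * eta n b m x * Ic n m + (2:ℝ)^m * eta n a m x * Ic n m := by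
          rw [← step2]; exact step1
      _ ≤ (2:ℝ)^m * eta n b m x * Ic n m + (2:ℝ)^m * ((2:ℝ)^m * eta n b m x) * Ic n m := by
          have := mul_le_mul_of_nonneg_right (mul_le_mul_of_nonneg_left step3 h2m.le) hIc.le
          linarith
      _ = ((2:ℝ)^m * ((2:ℝ)^m + 1) * Ic n m) * eta n b m x := by ring
  · have step1 : ∫ y, eta n a m y * eta n b m (x - y) ≤
        ∫ y, (2:ℝ)^((n:ℝ)*(b:ℝ)) * eta n a m y := by
      refine integral_mono_of_nonneg (Eventually.of_forall fun y => ?_)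
        ((integrable_eta hm a).const_mul _) (Eventually.of_forall fun y => ?_)
      · exact mul_nonneg (eta_nonneg _ _ _) (eta_nonneg _ _ _)
      · calc eta n a m y * eta n b m (x - y) ≤ eta n a m y * (2:ℝ)^((n:ℝ)*(b:ℝ)) :=
            mul_le_mul_of_nonneg_left (eta_le_tp hm0 b _) (eta_nonneg _ _ _)
          _ = _ := mul_comm _ _
    have step2 : (2:ℝ)^((n:ℝ)*(b:ℝ)) ≤ (2:ℝ)^m * eta n b m x := by
      unfold eta
      rw [← mul_assoc, mul_comm ((2:ℝ)^m), mul_assoc]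
      nth_rewrite 1 [← mul_one ((2:ℝ)^((n:ℝ)*(b:ℝ)))]
      refine mul_le_mul_of_nonneg_left ?_ (tp_pos _).le
      have h1 : (2:ℝ)^(-m) ≤ (1 + (2:ℝ)^((b:ℝ)) * ‖x‖) ^ (-m) := by
        refine Real.rpow_le_rpow_of_nonpos (base_pos b x) (by linarith) (neg_nonpos.mpr hm0)
      calc (1:ℝ) = (2:ℝ)^m * (2:ℝ)^(-m) := by
            rw [← Real.rpow_add two_pos]; norm_num
        _ ≤ (2:ℝ)^m * (1 + (2:ℝ)^((b:ℝ)) * ‖x‖) ^ (-m) :=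
            mul_le_mul_of_nonneg_left h1 (tp_pos _).le
    calc ∫ y, eta n a m y * eta n b m (x - y)
        ≤ ∫ y, (2:ℝ)^((n:ℝ)*(b:ℝ)) * eta n a m y := step1
      _ = (2:ℝ)^((n:ℝ)*(b:ℝ)) * Ic n m := by rw [integral_const_mul, integral_eta hm]
      _ ≤ ((2:ℝ)^m * eta n b m x) * Ic n m :=
          mul_le_mul_of_nonneg_right step2 hIc.le
      _ ≤ ((2:ℝ)^m * ((2:ℝ)^m + 1) * Ic n m) * eta n b m x := by
          have h2m := tp_pos m
          have hb := eta_nonneg (n := n) b m x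
          nlinarith [mul_nonneg h2m.le hb, mul_nonneg (mul_nonneg h2m.le hb) hIc.le,
            mul_nonneg (mul_nonneg h2m.le h2m.le) (mul_nonneg hb hIc.le)]

lemma K_lower {m : ℝ} (hm : (n:ℝ) < m) {a b : ℤ} (hab : b ≤ a) (x : En n) :
    ((2:ℝ)^(-(2*m)) * (volume (ball (0:En n) 1)).toReal) * eta n b m x ≤
      ∫ y, eta n a m y * eta n b m (x - y) := by
  have hm0 : 0 ≤ m := hm0_of hm
  set ra : ℝ := (2:ℝ)^(-(a:ℝ)) with hra
  have hrap : 0 < ra := tp_pos _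
  set c0 : ℝ := (2:ℝ)^((n:ℝ)*(a:ℝ)) * (2:ℝ)^(-m) * ((2:ℝ)^(-m) * eta n b m x) with hc0
  have hc0nn : 0 ≤ c0 := by
    have := eta_nonneg (n := n) b m x
    have := tp_pos ((n:ℝ)*(a:ℝ)); have := tp_pos (-m)
    positivity
  have hpoint : ∀ y, (ball (0:En n) ra).indicator (fun _ => c0) y ≤
      eta n a m y * eta n b m (x - y) := by
    intro y
    rcases em (y ∈ ball (0:En n) ra) with hy | hy
    · rw [indicator_of_mem hy]
      have hyn : ‖y‖ < ra := by rwa [mem_ball, dist_zero_right] at hy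
      have hy1 : (2:ℝ)^((a:ℝ)) * ‖y‖ ≤ 1 := by
        have h := mul_le_mul_of_nonneg_left hyn.le (tp_pos ((a:ℝ))).le
        rwa [hra, ← Real.rpow_add two_pos, add_neg_cancel, Real.rpow_zero] at h
      have h1 : (2:ℝ)^((n:ℝ)*(a:ℝ)) * (2:ℝ)^(-m) ≤ eta n a m y := by
        unfold eta
        refine mul_le_mul_of_nonneg_left ?_ (tp_pos _).le
        exact Real.rpow_le_rpow_of_nonpos (base_pos a y) (by linarith) (neg_nonpos.mpr hm0)
      have h2 : (2:ℝ)^(-m) * eta n b m x ≤ eta n b m (x - y) := by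
        have hby : (2:ℝ)^((b:ℝ)) * ‖y‖ ≤ 1 := by
          have hmono : (2:ℝ)^((b:ℝ)) ≤ (2:ℝ)^((a:ℝ)) :=
            Real.rpow_le_rpow_of_exponent_le one_le_two (by exact_mod_cast hab)
          have := mul_le_mul_of_nonneg_right hmono (norm_nonneg y)
          linarith
        have hcomp : eta n b m x ≤ (2:ℝ)^m * eta n b m (x - y) := by
          refine eta_comp (n := n) hm0 b (K := 2) two_pos (x := x - y) (z := x) ?_
          have hn : ‖x - y‖ ≤ ‖x‖ + ‖y‖ := norm_sub_le x y
          have h3 := mul_le_mul_of_nonneg_left hn (tp_pos ((b:ℝ))).le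
          have h4 : (2:ℝ)^((b:ℝ)) * ‖x - y‖ ≤ (2:ℝ)^((b:ℝ)) * ‖x‖ + 1 := by
            rw [mul_add] at h3; linarith
          linarith [mul_nonneg (tp_pos ((b:ℝ))).le (norm_nonneg x)]
        have := mul_le_mul_of_nonneg_left hcomp (tp_pos (-m)).le
        calc (2:ℝ)^(-m) * eta n b m x ≤ (2:ℝ)^(-m) * ((2:ℝ)^m * eta n b m (x - y)) := this
          _ = eta n b m (x - y) := by
              rw [← mul_assoc, ← Real.rpow_add two_pos, neg_add_cancel, Real.rpow_zero, one_mul]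
      calc c0 ≤ eta n a m y * ((2:ℝ)^(-m) * eta n b m x) := by
            rw [hc0]
            exact mul_le_mul_of_nonneg_right h1
              (mul_nonneg (tp_pos _).le (eta_nonneg _ _ _))
        _ ≤ eta n a m y * eta n b m (x - y) :=
            mul_le_mul_of_nonneg_left h2 (eta_nonneg _ _ _)
    · rw [indicator_of_notMem hy]
      exact mul_nonneg (eta_nonneg _ _ _) (eta_nonneg _ _ _)
  have hint : ∫ y, (ball (0:En n) ra).indicator (fun _ => c0) y ≤
      ∫ y, eta n a m y * eta n b m (x - y) := by
    refine integral_mono_of_nonneg (Eventually.of_forall fun y => ?_)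
      (integrable_eta_mul_eta hm a b x) (Eventually.of_forall hpoint)
    exact indicator_nonneg (fun _ _ => hc0nn) y
  have heval : ∫ y, (ball (0:En n) ra).indicator (fun _ => c0) y
      = (volume (ball (0:En n) ra)).toReal * c0 := by
    rw [integral_indicator measurableSet_ball, setIntegral_const, smul_eq_mul, measureReal_def]
  have hvol : (volume (ball (0:En n) ra)).toReal
      = (2:ℝ)^(-(a:ℝ)*(n:ℝ)) * (volume (ball (0:En n) 1)).toReal := by
    rw [Measure.addHaar_ball_of_pos volume (0:En n) hrap, finrank_euclideanSpace_fin,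
      ENNReal.toReal_mul, ENNReal.toReal_ofReal (by positivity)]
    congr 1
    rw [hra, ← Real.rpow_natCast ((2:ℝ)^(-(a:ℝ))) n, ← Real.rpow_mul (by norm_num)]
  calc ((2:ℝ)^(-(2*m)) * (volume (ball (0:En n) 1)).toReal) * eta n b m x
      = (volume (ball (0:En n) ra)).toReal * c0 := by
        rw [hvol, hc0]
        have e1 : (2:ℝ)^(-(a:ℝ)*(n:ℝ)) * (2:ℝ)^((n:ℝ)*(a:ℝ)) = 1 := by
          rw [← Real.rpow_add two_pos, show (-(a:ℝ)*(n:ℝ) + (n:ℝ)*(a:ℝ)) = 0 by ring,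
            Real.rpow_zero]
        have e2 : (2:ℝ)^(-m) * (2:ℝ)^(-m) = (2:ℝ)^(-(2*m)) := by
          rw [← Real.rpow_add two_pos]; congr 1; ring
        linear_combination -(volume (ball (0:En n) 1)).toReal * eta n b m x *
            ((2:ℝ)^(-m) * (2:ℝ)^(-m)) * e1 +
          -(volume (ball (0:En n) 1)).toReal * eta n b m x * e2
  _ ≤ _ := by rw [← heval]; exact hint

lemma K_swap (m : ℝ) (a b : ℤ) (x : En n) :
    ∫ y, eta n a m y * eta n b m (x - y) = ∫ y, eta n b m y * eta n a m (x - y) := by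
  calc ∫ y, eta n a m y * eta n b m (x - y)
      = ∫ y, (fun t => eta n b m t * eta n a m (x - t)) (x - y) := by
        congr 1; ext y
        simp only [sub_sub_cancel]
        ring
    _ = ∫ y, eta n b m y * eta n a m (x - y) :=
        integral_sub_left_eq_self (fun t => eta n b m t * eta n a m (x - t)) volume x

lemma K_le_min {m : ℝ} (hm : (n:ℝ) < m) (a b : ℤ) (x : En n) :
    ∫ y, eta n a m y * eta n b m (x - y) ≤
      ((2:ℝ)^m * ((2:ℝ)^m + 1) * Ic n m) * eta n (min a b) m x := by
  rcases le_total b a with h | h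
  · rw [min_comm, min_eq_left h]
    exact K_upper hm h x
  · rw [min_eq_left h, K_swap]
    exact K_upper hm h x

lemma K_ge_min {m : ℝ} (hm : (n:ℝ) < m) (a b : ℤ) (x : En n) :
    ((2:ℝ)^(-(2*m)) * (volume (ball (0:En n) 1)).toReal) * eta n (min a b) m x ≤
      ∫ y, eta n a m y * eta n b m (x - y) := by
  rcases le_total b a with h | h
  · rw [min_comm, min_eq_left h]
    exact K_lower hm h x
  · rw [min_eq_left h, K_swap]
    exact K_lower hm h x

def corner (n : ℕ) (v : ℤ) (mm : Fin n → ℤ) : En n :=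
  (WithLp.equiv 2 (Fin n → ℝ)).symm fun i => (mm i : ℝ) / (2:ℝ)^((v:ℝ))

lemma corner_apply (v : ℤ) (mm : Fin n → ℤ) (i : Fin n) :
    corner n v mm i = (mm i : ℝ) / (2:ℝ)^((v:ℝ)) := rfl

lemma zpow_eq_rpow (v : ℤ) : (2:ℝ) ^ v = (2:ℝ) ^ ((v:ℝ)) := by
  rw [Real.rpow_intCast]

lemma cube_eq (v : ℤ) (mm : Fin n → ℤ) :
    dyadicCube n v mm = (MeasurableEquiv.toLp 2 (Fin n → ℝ)).symm ⁻¹'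
      (univ.pi fun i => Ico ((mm i : ℝ) / (2:ℝ)^((v:ℝ)))
        (((mm i : ℝ) + 1) / (2:ℝ)^((v:ℝ)))) := by
  have ht : (0:ℝ) < (2:ℝ)^((v:ℝ)) := tp_pos _
  ext x
  simp only [dyadicCube, mem_setOf_eq, mem_preimage, Set.mem_pi, mem_univ, forall_true_left,
    mem_Ico]
  refine forall_congr' fun i => ?_
  have hx : (MeasurableEquiv.toLp 2 (Fin n → ℝ)).symm x i = x i := rfl
  have hc : (2:ℝ)^((v:ℝ)) * x i = x i * (2:ℝ)^((v:ℝ)) := mul_comm _ _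
  rw [hx, zpow_eq_rpow, div_le_iff₀ ht, lt_div_iff₀ ht, hc]

lemma cube_measurable (v : ℤ) (mm : Fin n → ℤ) : MeasurableSet (dyadicCube n v mm) := by
  rw [cube_eq]
  exact (MeasurableSet.univ_pi fun i => measurableSet_Ico).preimage
    (MeasurableEquiv.toLp 2 (Fin n → ℝ)).symm.measurable

lemma cube_volume (v : ℤ) (mm : Fin n → ℤ) :
    volume (dyadicCube n v mm) = ENNReal.ofReal ((2:ℝ)^(-(v:ℝ)*(n:ℝ))) := by
  have ht : (0:ℝ) < (2:ℝ)^((v:ℝ)) := tp_pos _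
  rw [cube_eq, (EuclideanSpace.volume_preserving_symm_measurableEquiv_toLp (Fin n)).measure_preimage
    ((MeasurableSet.univ_pi fun i => measurableSet_Ico).nullMeasurableSet)]
  rw [Real.volume_pi_Ico]
  have heach : ∀ i : Fin n, ENNReal.ofReal (((mm i : ℝ) + 1) / (2:ℝ)^((v:ℝ))
      - (mm i : ℝ) / (2:ℝ)^((v:ℝ))) = ENNReal.ofReal ((2:ℝ)^(-(v:ℝ))) := by
    intro i
    congr 1
    rw [div_sub_div_same, add_sub_cancel_left, Real.rpow_neg (by norm_num : (0:ℝ) ≤ 2),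
      inv_eq_one_div]
  rw [Finset.prod_congr rfl fun i _ => heach i, Finset.prod_const, Finset.card_univ,
    Fintype.card_fin, ← ENNReal.ofReal_pow (tp_pos _).le,
    ← Real.rpow_natCast ((2:ℝ)^(-(v:ℝ))) n, ← Real.rpow_mul (by norm_num)]

lemma cube_dist {v : ℤ} {mm : Fin n → ℤ} {q : En n} (hq : q ∈ dyadicCube n v mm) :
    ‖q - corner n v mm‖ ≤ Real.sqrt n * (2:ℝ)^(-(v:ℝ)) := by
  have ht : (0:ℝ) < (2:ℝ)^((v:ℝ)) := tp_pos _
  have hcoord : ∀ i, |q i - corner n v mm i| ≤ (2:ℝ)^(-(v:ℝ)) := by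
    intro i
    obtain ⟨h1, h2⟩ := hq i
    rw [zpow_eq_rpow] at h1 h2
    have heq : q i - corner n v mm i = ((2:ℝ)^((v:ℝ)) * q i - (mm i : ℝ)) / (2:ℝ)^((v:ℝ)) := by
      rw [corner_apply]
      field_simp
    have h2v : (2:ℝ)^(-(v:ℝ)) = 1 / (2:ℝ)^((v:ℝ)) := by
      rw [Real.rpow_neg (by norm_num), one_div]
    rw [heq, h2v, abs_of_nonneg (div_nonneg (by linarith) ht.le)]
    gcongr
    linarith
  have hnorm : ‖q - corner n v mm‖ = Real.sqrt (∑ i, (q i - corner n v mm i)^2) := by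
    rw [EuclideanSpace.norm_eq]
    congr 1
    refine Finset.sum_congr rfl fun i _ => ?_
    simp [Real.norm_eq_abs, sq_abs]
  rw [hnorm]
  have hsum : ∑ i, (q i - corner n v mm i)^2 ≤ (n : ℝ) * ((2:ℝ)^(-(v:ℝ)))^2 := by
    calc ∑ i, (q i - corner n v mm i)^2 ≤ ∑ _i : Fin n, ((2:ℝ)^(-(v:ℝ)))^2 :=
        Finset.sum_le_sum fun i _ => by
          have := hcoord i
          nlinarith [abs_nonneg (q i - corner n v mm i), sq_abs (q i - corner n v mm i)]
      _ = (n : ℝ) * ((2:ℝ)^(-(v:ℝ)))^2 := by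
          rw [Finset.sum_const, Finset.card_univ, Fintype.card_fin, nsmul_eq_mul]
  calc Real.sqrt (∑ i, (q i - corner n v mm i)^2) ≤
      Real.sqrt ((n : ℝ) * ((2:ℝ)^(-(v:ℝ)))^2) := Real.sqrt_le_sqrt hsum
    _ = Real.sqrt n * (2:ℝ)^(-(v:ℝ)) := by
        rw [Real.sqrt_mul (Nat.cast_nonneg n), Real.sqrt_sq (tp_pos _).le]

section H
variable {m : ℝ} (v : ℤ) (mm : Fin n → ℤ)

lemma sqrtn_nonneg : (0:ℝ) ≤ Real.sqrt n := Real.sqrt_nonneg _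
lemma D_base_pos : (0:ℝ) < 1 + Real.sqrt n := by have := sqrtn_nonneg (n := n); linarith
lemma D_pos (m : ℝ) : (0:ℝ) < (1 + Real.sqrt n) ^ m :=
  Real.rpow_pos_of_pos D_base_pos m

lemma tp_cancel (v : ℤ) : (2:ℝ)^(-(v:ℝ)*(n:ℝ)) * (2:ℝ)^((n:ℝ)*(v:ℝ)) = 1 := by
  rw [← Real.rpow_add two_pos, show (-(v:ℝ)*(n:ℝ) + (n:ℝ)*(v:ℝ)) = 0 by ring, Real.rpow_zero]

lemma dist_scaled {q : En n} (hq : q ∈ dyadicCube n v mm) :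
    (2:ℝ)^((v:ℝ)) * ‖q - corner n v mm‖ ≤ Real.sqrt n := by
  have h := cube_dist hq
  have h2 := mul_le_mul_of_nonneg_left h (tp_pos ((v:ℝ))).le
  calc (2:ℝ)^((v:ℝ)) * ‖q - corner n v mm‖
      ≤ (2:ℝ)^((v:ℝ)) * (Real.sqrt n * (2:ℝ)^(-(v:ℝ))) := h2
    _ = Real.sqrt n * ((2:ℝ)^((v:ℝ)) * (2:ℝ)^(-(v:ℝ))) := by ring
    _ = Real.sqrt n := by
        rw [← Real.rpow_add two_pos, add_neg_cancel, Real.rpow_zero, mul_one]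

/-- (ii): η_v(z - q) ≤ D η_v(z - corner) for q in the cube. -/
lemma eta_pt_le_corner (hm0 : 0 ≤ m) {q z : En n} (hq : q ∈ dyadicCube n v mm) :
    eta n v m (z - q) ≤ (1 + Real.sqrt n) ^ m * eta n v m (z - corner n v mm) := by
  refine eta_comp hm0 v D_base_pos ?_
  have h1 : ‖z - corner n v mm‖ ≤ ‖z - q‖ + ‖q - corner n v mm‖ := by
    calc ‖z - corner n v mm‖ = ‖(z - q) + (q - corner n v mm)‖ := by
          congr 1; abel
      _ ≤ _ := norm_add_le _ _
  have h2 := mul_le_mul_of_nonneg_left h1 (tp_pos ((v:ℝ))).le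
  rw [mul_add] at h2
  have h3 := dist_scaled v mm hq
  have h4 : (0:ℝ) ≤ (2:ℝ)^((v:ℝ)) * ‖z - q‖ :=
    mul_nonneg (tp_pos _).le (norm_nonneg _)
  have h5 := sqrtn_nonneg (n := n)
  nlinarith

/-- (i): η_v(z - corner) ≤ D η_v(z - q) for q in the cube. -/
lemma eta_corner_le_pt (hm0 : 0 ≤ m) {q z : En n} (hq : q ∈ dyadicCube n v mm) :
    eta n v m (z - corner n v mm) ≤ (1 + Real.sqrt n) ^ m * eta n v m (z - q) := by
  refine eta_comp hm0 v D_base_pos ?_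
  have h1 : ‖z - q‖ ≤ ‖z - corner n v mm‖ + ‖q - corner n v mm‖ := by
    calc ‖z - q‖ = ‖(z - corner n v mm) - (q - corner n v mm)‖ := by
          congr 1; abel
      _ ≤ _ := norm_sub_le _ _
  have h2 := mul_le_mul_of_nonneg_left h1 (tp_pos ((v:ℝ))).le
  rw [mul_add] at h2
  have h3 := dist_scaled v mm hq
  have h4 : (0:ℝ) ≤ (2:ℝ)^((v:ℝ)) * ‖z - corner n v mm‖ :=
    mul_nonneg (tp_pos _).le (norm_nonneg _)
  have h5 := sqrtn_nonneg (n := n)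
  nlinarith

lemma integrable_ind_sub (z : En n) :
    Integrable (fun y => (dyadicCube n v mm).indicator (fun _ => (1:ℝ)) (z - y)) := by
  have h1 : Integrable ((dyadicCube n v mm).indicator (fun _ => (1:ℝ))) := by
    rw [integrable_indicator_iff (cube_measurable v mm)]
    refine (integrableOn_const_iff (C := (1:ℝ))).mpr (Or.inr ?_)
    rw [cube_volume]
    exact ENNReal.ofReal_lt_top
  exact h1.comp_sub_left z

lemma integral_ind_sub (z : En n) :
    ∫ y, (dyadicCube n v mm).indicator (fun _ => (1:ℝ)) (z - y) = (2:ℝ)^(-(v:ℝ)*(n:ℝ)) := by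
  rw [integral_sub_left_eq_self ((dyadicCube n v mm).indicator (fun _ => (1:ℝ))) volume z,
    integral_indicator (cube_measurable v mm), setIntegral_const, smul_eq_mul, mul_one,
    measureReal_def, cube_volume, ENNReal.toReal_ofReal (tp_pos _).le]

lemma ind_le_one (w : En n) :
    (dyadicCube n v mm).indicator (fun _ => (1:ℝ)) w ≤ 1 := by
  rcases em (w ∈ dyadicCube n v mm) with h | h
  · rw [indicator_of_mem h]
  · rw [indicator_of_notMem h]; norm_num

lemma h_nonneg (z : En n) :
    0 ≤ conv (eta n v m) ((dyadicCube n v mm).indicator fun _ => (1:ℝ)) z :=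
  integral_nonneg fun y => mul_nonneg (eta_nonneg _ _ _)
    (indicator_nonneg (fun _ _ => zero_le_one) _)

lemma h_upper (hm0 : 0 ≤ m) (z : En n) :
    conv (eta n v m) ((dyadicCube n v mm).indicator fun _ => (1:ℝ)) z ≤
      (1 + Real.sqrt n) ^ m *
        ((2:ℝ)^(-(v:ℝ)*(n:ℝ)) * eta n v m (z - corner n v mm)) := by
  have hpt : ∀ y, eta n v m y * (dyadicCube n v mm).indicator (fun _ => (1:ℝ)) (z - y) ≤
      ((1 + Real.sqrt n) ^ m * eta n v m (z - corner n v mm)) *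
        (dyadicCube n v mm).indicator (fun _ => (1:ℝ)) (z - y) := by
    intro y
    rcases em (z - y ∈ dyadicCube n v mm) with hy | hy
    · rw [indicator_of_mem hy]
      have := eta_pt_le_corner v mm hm0 (q := z - y) (z := z) hy
      rw [sub_sub_cancel] at this
      simpa using this
    · rw [indicator_of_notMem hy]
      simp
  calc conv (eta n v m) ((dyadicCube n v mm).indicator fun _ => (1:ℝ)) z
      ≤ ∫ y, ((1 + Real.sqrt n) ^ m * eta n v m (z - corner n v mm)) *
          (dyadicCube n v mm).indicator (fun _ => (1:ℝ)) (z - y) := by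
        refine integral_mono_of_nonneg (Eventually.of_forall fun y => ?_)
          ((integrable_ind_sub v mm z).const_mul _) (Eventually.of_forall hpt)
        exact mul_nonneg (eta_nonneg _ _ _) (indicator_nonneg (fun _ _ => zero_le_one) _)
    _ = ((1 + Real.sqrt n) ^ m * eta n v m (z - corner n v mm)) * (2:ℝ)^(-(v:ℝ)*(n:ℝ)) := by
        rw [integral_const_mul, integral_ind_sub]
    _ = _ := by ring

lemma h_lower (hm0 : 0 ≤ m) (hm : (n:ℝ) < m) (z : En n) :
    ((1 + Real.sqrt n) ^ m)⁻¹ *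
        ((2:ℝ)^(-(v:ℝ)*(n:ℝ)) * eta n v m (z - corner n v mm)) ≤
      conv (eta n v m) ((dyadicCube n v mm).indicator fun _ => (1:ℝ)) z := by
  have hD := D_pos (n := n) m
  have hpt : ∀ y, (((1 + Real.sqrt n) ^ m)⁻¹ * eta n v m (z - corner n v mm)) *
        (dyadicCube n v mm).indicator (fun _ => (1:ℝ)) (z - y) ≤
      eta n v m y * (dyadicCube n v mm).indicator (fun _ => (1:ℝ)) (z - y) := by
    intro y
    rcases em (z - y ∈ dyadicCube n v mm) with hy | hy
    · rw [indicator_of_mem hy]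
      have h1 := eta_corner_le_pt v mm hm0 (q := z - y) (z := z) hy
      rw [sub_sub_cancel] at h1
      have h2 := mul_le_mul_of_nonneg_left h1 (inv_nonneg.mpr hD.le)
      rw [← mul_assoc, inv_mul_cancel₀ hD.ne', one_mul] at h2
      simpa using h2
    · rw [indicator_of_notMem hy]
      simp
  have hint : Integrable (fun y => eta n v m y *
      (dyadicCube n v mm).indicator (fun _ => (1:ℝ)) (z - y)) := by
    refine (integrable_eta hm v).mono' ?_ (Eventually.of_forall fun y => ?_)
    · exact ((eta_continuous v m).measurable.mul
        ((measurable_const.indicator (cube_measurable v mm)).comp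
          (measurable_const.sub measurable_id))).aestronglyMeasurable
    · rw [Real.norm_eq_abs, abs_of_nonneg (mul_nonneg (eta_nonneg _ _ _)
        (indicator_nonneg (fun _ _ => zero_le_one) _))]
      calc eta n v m y * (dyadicCube n v mm).indicator (fun _ => (1:ℝ)) (z - y)
          ≤ eta n v m y * 1 :=
            mul_le_mul_of_nonneg_left (ind_le_one v mm _) (eta_nonneg _ _ _)
        _ = eta n v m y := mul_one _
  calc ((1 + Real.sqrt n) ^ m)⁻¹ *
        ((2:ℝ)^(-(v:ℝ)*(n:ℝ)) * eta n v m (z - corner n v mm))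
      = (((1 + Real.sqrt n) ^ m)⁻¹ * eta n v m (z - corner n v mm)) * (2:ℝ)^(-(v:ℝ)*(n:ℝ)) := by
        ring
    _ = ∫ y, (((1 + Real.sqrt n) ^ m)⁻¹ * eta n v m (z - corner n v mm)) *
          (dyadicCube n v mm).indicator (fun _ => (1:ℝ)) (z - y) := by
        rw [integral_const_mul, integral_ind_sub]
    _ ≤ conv (eta n v m) ((dyadicCube n v mm).indicator fun _ => (1:ℝ)) z := by
        show _ ≤ ∫ y, eta n v m y * (dyadicCube n v mm).indicator (fun _ => (1:ℝ)) (z - y)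
        refine integral_mono_of_nonneg (Eventually.of_forall fun y =>
          mul_nonneg (mul_nonneg (inv_nonneg.mpr hD.le) (eta_nonneg _ _ _))
            (indicator_nonneg (fun _ _ => zero_le_one) _)) hint (Eventually.of_forall hpt)

lemma h_le_D (hm0 : 0 ≤ m) (z : En n) :
    conv (eta n v m) ((dyadicCube n v mm).indicator fun _ => (1:ℝ)) z ≤
      (1 + Real.sqrt n) ^ m := by
  have h1 := h_upper v mm hm0 z
  have h2 : (2:ℝ)^(-(v:ℝ)*(n:ℝ)) * eta n v m (z - corner n v mm) ≤ 1 := by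
    calc (2:ℝ)^(-(v:ℝ)*(n:ℝ)) * eta n v m (z - corner n v mm)
        ≤ (2:ℝ)^(-(v:ℝ)*(n:ℝ)) * (2:ℝ)^((n:ℝ)*(v:ℝ)) :=
          mul_le_mul_of_nonneg_left (eta_le_tp hm0 v _) (tp_pos _).le
      _ = 1 := tp_cancel v
  calc conv (eta n v m) ((dyadicCube n v mm).indicator fun _ => (1:ℝ)) z
      ≤ (1 + Real.sqrt n) ^ m *
        ((2:ℝ)^(-(v:ℝ)*(n:ℝ)) * eta n v m (z - corner n v mm)) := h1
    _ ≤ (1 + Real.sqrt n) ^ m * 1 := mul_le_mul_of_nonneg_left h2 (D_pos m).le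
    _ = _ := mul_one _

lemma h_measurable :
    Measurable (conv (eta n v m) ((dyadicCube n v mm).indicator fun _ => (1:ℝ))) := by
  have hF : StronglyMeasurable (fun p : En n × En n =>
      eta n v m p.2 * (dyadicCube n v mm).indicator (fun _ => (1:ℝ)) (p.1 - p.2)) :=
    (((eta_continuous v m).measurable.comp measurable_snd).mul
      ((measurable_const.indicator (cube_measurable v mm)).comp
        (measurable_fst.sub measurable_snd))).stronglyMeasurable
  exact hF.integral_prod_right'.measurable

end H

section F
variable {m : ℝ}

lemma F_upper (hm : (n:ℝ) < m) (j v : ℤ) (mm : Fin n → ℤ) (x : En n) :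
    conv (eta n j m) (conv (eta n v m) ((dyadicCube n v mm).indicator fun _ => (1:ℝ))) x ≤
      ((1 + Real.sqrt n)^m * ((2:ℝ)^m * ((2:ℝ)^m + 1) * Ic n m)) *
        ((2:ℝ)^(-(v:ℝ)*(n:ℝ)) * eta n (min j v) m (x - corner n v mm)) := by
  have hm0 : 0 ≤ m := hm0_of hm
  have hD := D_pos (n := n) m
  have hpt : ∀ y, eta n j m y *
      conv (eta n v m) ((dyadicCube n v mm).indicator fun _ => (1:ℝ)) (x - y) ≤
      ((1 + Real.sqrt n)^m * (2:ℝ)^(-(v:ℝ)*(n:ℝ))) *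
        (eta n j m y * eta n v m ((x - corner n v mm) - y)) := by
    intro y
    have h1 := h_upper v mm hm0 (x - y)
    rw [sub_right_comm] at h1
    calc eta n j m y * conv (eta n v m) ((dyadicCube n v mm).indicator fun _ => (1:ℝ)) (x - y)
        ≤ eta n j m y * ((1 + Real.sqrt n) ^ m *
          ((2:ℝ)^(-(v:ℝ)*(n:ℝ)) * eta n v m ((x - corner n v mm) - y))) :=
          mul_le_mul_of_nonneg_left h1 (eta_nonneg _ _ _)
      _ = _ := by ring
  calc conv (eta n j m) (conv (eta n v m) ((dyadicCube n v mm).indicator fun _ => (1:ℝ))) x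
      ≤ ∫ y, ((1 + Real.sqrt n)^m * (2:ℝ)^(-(v:ℝ)*(n:ℝ))) *
          (eta n j m y * eta n v m ((x - corner n v mm) - y)) := by
        show (∫ y, eta n j m y *
          conv (eta n v m) ((dyadicCube n v mm).indicator fun _ => (1:ℝ)) (x - y)) ≤ _
        refine integral_mono_of_nonneg (Eventually.of_forall fun y =>
          mul_nonneg (eta_nonneg _ _ _) (h_nonneg v mm _))
          ((integrable_eta_mul_eta hm j v (x - corner n v mm)).const_mul _)
          (Eventually.of_forall hpt)
    _ = ((1 + Real.sqrt n)^m * (2:ℝ)^(-(v:ℝ)*(n:ℝ))) *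
          ∫ y, eta n j m y * eta n v m ((x - corner n v mm) - y) := integral_const_mul _ _
    _ ≤ ((1 + Real.sqrt n)^m * (2:ℝ)^(-(v:ℝ)*(n:ℝ))) *
          (((2:ℝ)^m * ((2:ℝ)^m + 1) * Ic n m) * eta n (min j v) m (x - corner n v mm)) := by
        refine mul_le_mul_of_nonneg_left (K_le_min hm j v _) ?_
        exact mul_nonneg hD.le (tp_pos _).le
    _ = _ := by ring

lemma F_lower (hm : (n:ℝ) < m) (j v : ℤ) (mm : Fin n → ℤ) (x : En n) :
    (((1 + Real.sqrt n)^m)⁻¹ * ((2:ℝ)^(-(2*m)) * (volume (ball (0:En n) 1)).toReal)) *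
        ((2:ℝ)^(-(v:ℝ)*(n:ℝ)) * eta n (min j v) m (x - corner n v mm)) ≤
      conv (eta n j m) (conv (eta n v m) ((dyadicCube n v mm).indicator fun _ => (1:ℝ))) x := by
  have hm0 : 0 ≤ m := hm0_of hm
  have hD := D_pos (n := n) m
  have hpt : ∀ y, (((1 + Real.sqrt n)^m)⁻¹ * (2:ℝ)^(-(v:ℝ)*(n:ℝ))) *
        (eta n j m y * eta n v m ((x - corner n v mm) - y)) ≤
      eta n j m y *
        conv (eta n v m) ((dyadicCube n v mm).indicator fun _ => (1:ℝ)) (x - y) := by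
    intro y
    have h1 := h_lower v mm hm0 hm (x - y)
    rw [sub_right_comm] at h1
    calc (((1 + Real.sqrt n)^m)⁻¹ * (2:ℝ)^(-(v:ℝ)*(n:ℝ))) *
          (eta n j m y * eta n v m ((x - corner n v mm) - y))
        = eta n j m y * (((1 + Real.sqrt n) ^ m)⁻¹ *
            ((2:ℝ)^(-(v:ℝ)*(n:ℝ)) * eta n v m ((x - corner n v mm) - y))) := by ring
      _ ≤ _ := mul_le_mul_of_nonneg_left h1 (eta_nonneg _ _ _)
  have hint : Integrable (fun y => eta n j m y *
      conv (eta n v m) ((dyadicCube n v mm).indicator fun _ => (1:ℝ)) (x - y)) := by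
    refine ((integrable_eta hm j).const_mul ((1 + Real.sqrt n)^m)).mono'
      ?_ (Eventually.of_forall fun y => ?_)
    · exact ((eta_continuous j m).measurable.mul
        ((h_measurable v mm).comp (measurable_const.sub measurable_id))).aestronglyMeasurable
    · rw [Real.norm_eq_abs, abs_of_nonneg (mul_nonneg (eta_nonneg _ _ _) (h_nonneg v mm _))]
      calc eta n j m y *
            conv (eta n v m) ((dyadicCube n v mm).indicator fun _ => (1:ℝ)) (x - y)
          ≤ eta n j m y * (1 + Real.sqrt n)^m :=
            mul_le_mul_of_nonneg_left (h_le_D v mm hm0 _) (eta_nonneg _ _ _)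
        _ = (1 + Real.sqrt n)^m * eta n j m y := mul_comm _ _
  calc (((1 + Real.sqrt n)^m)⁻¹ * ((2:ℝ)^(-(2*m)) * (volume (ball (0:En n) 1)).toReal)) *
        ((2:ℝ)^(-(v:ℝ)*(n:ℝ)) * eta n (min j v) m (x - corner n v mm))
      = (((1 + Real.sqrt n)^m)⁻¹ * (2:ℝ)^(-(v:ℝ)*(n:ℝ))) *
          (((2:ℝ)^(-(2*m)) * (volume (ball (0:En n) 1)).toReal) *
            eta n (min j v) m (x - corner n v mm)) := by ring
    _ ≤ (((1 + Real.sqrt n)^m)⁻¹ * (2:ℝ)^(-(v:ℝ)*(n:ℝ))) *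
          ∫ y, eta n j m y * eta n v m ((x - corner n v mm) - y) := by
        refine mul_le_mul_of_nonneg_left (K_ge_min hm j v _) ?_
        exact mul_nonneg (inv_nonneg.mpr hD.le) (tp_pos _).le
    _ = ∫ y, (((1 + Real.sqrt n)^m)⁻¹ * (2:ℝ)^(-(v:ℝ)*(n:ℝ))) *
          (eta n j m y * eta n v m ((x - corner n v mm) - y)) := (integral_const_mul _ _).symm
    _ ≤ conv (eta n j m) (conv (eta n v m) ((dyadicCube n v mm).indicator fun _ => (1:ℝ))) x := by
        show _ ≤ (∫ y, eta n j m y *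
          conv (eta n v m) ((dyadicCube n v mm).indicator fun _ => (1:ℝ)) (x - y))
        refine integral_mono_of_nonneg (Eventually.of_forall fun y =>
          mul_nonneg (mul_nonneg (inv_nonneg.mpr hD.le) (tp_pos _).le)
            (mul_nonneg (eta_nonneg _ _ _) (eta_nonneg _ _ _)))
          hint (Eventually.of_forall hpt)

end F

/-- The key rpow identity for the sandwich middle terms. -/
lemma P_rpow {m r : ℝ} (hr0 : 0 < r) (v b : ℤ) (X : ℝ)
    (hX : (-(v:ℝ)*(n:ℝ) + (n:ℝ)*(b:ℝ)) * r = X + (-(v:ℝ)*(n:ℝ) + (n:ℝ)*(b:ℝ))) (w : En n) :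
    ((2:ℝ)^(-(v:ℝ)*(n:ℝ)) * eta n b m w) ^ r =
      (2:ℝ)^X * ((2:ℝ)^(-(v:ℝ)*(n:ℝ)) * eta n b (m*r) w) := by
  have hs : (0:ℝ) < 1 + (2:ℝ)^((b:ℝ)) * ‖w‖ := by positivity
  set s := 1 + (2:ℝ)^((b:ℝ)) * ‖w‖ with hsdef
  set E := -(v:ℝ)*(n:ℝ) + (n:ℝ)*(b:ℝ) with hE
  have l1 : (2:ℝ)^(-(v:ℝ)*(n:ℝ)) * eta n b m w = (2:ℝ)^E * s^(-m) := by
    unfold eta; rw [← mul_assoc, ← Real.rpow_add two_pos]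
  have l2 : (2:ℝ)^(-(v:ℝ)*(n:ℝ)) * eta n b (m*r) w = (2:ℝ)^E * s^(-(m*r)) := by
    unfold eta; rw [← mul_assoc, ← Real.rpow_add two_pos]
  calc ((2:ℝ)^(-(v:ℝ)*(n:ℝ)) * eta n b m w) ^ r
      = ((2:ℝ)^E * s^(-m)) ^ r := by rw [l1]
    _ = (2:ℝ)^(E*r) * s^((-m)*r) := by
        rw [Real.mul_rpow (tp_pos _).le (Real.rpow_nonneg hs.le _),
          ← Real.rpow_mul (by norm_num : (0:ℝ) ≤ 2), ← Real.rpow_mul hs.le]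
    _ = (2:ℝ)^(X + E) * s^(-(m*r)) := by
        rw [show (-m)*r = -(m*r) by ring, show E*r = X + E from hX]
    _ = (2:ℝ)^X * ((2:ℝ)^E * s^(-(m*r))) := by
        rw [Real.rpow_add two_pos, mul_assoc]
    _ = _ := by rw [l2]

end EtaAux
end EtaAuxSec

section MainProof
open EtaAux Metric Set Filter

/-- (η_{j,m} * η_{v,m} * χ_Q)^r ≈ 2^{(v-j)⁺ n(1-r)} η_{j,mr} * η_{v,mr} * χ_Q for
r ∈ (0,1], m > n/r and Q a dyadic cube of side length 2^{-v}, with constants depending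
only on m, n and r. -/
theorem eta_conv_eta_indicator_rpow (n : ℕ) (r : ℝ) (hr0 : 0 < r) (hr1 : r ≤ 1) (m : ℝ)
    (hm : (n : ℝ) / r < m) :
    ∃ c₁ > (0:ℝ), ∃ c₂ > (0:ℝ), ∀ (v j : ℕ) (mm : Fin n → ℤ) (x : En n),
      c₁ * ((2 : ℝ) ^ (((v - j : ℕ) : ℝ) * (n : ℝ) * (1 - r)) *
          conv (eta n j (m * r)) (conv (eta n v (m * r))
            ((dyadicCube n v mm).indicator fun _ => (1 : ℝ))) x) ≤
        (conv (eta n j m) (conv (eta n v m)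
            ((dyadicCube n v mm).indicator fun _ => (1 : ℝ))) x) ^ r ∧
      (conv (eta n j m) (conv (eta n v m)
            ((dyadicCube n v mm).indicator fun _ => (1 : ℝ))) x) ^ r ≤
        c₂ * ((2 : ℝ) ^ (((v - j : ℕ) : ℝ) * (n : ℝ) * (1 - r)) *
          conv (eta n j (m * r)) (conv (eta n v (m * r))
            ((dyadicCube n v mm).indicator fun _ => (1 : ℝ))) x) := by
  have hmr : (n:ℝ) < m * r := by
    rw [div_lt_iff₀ hr0] at hm; exact hm
  have hn0 : (0:ℝ) ≤ n := Nat.cast_nonneg n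
  have hm0 : (0:ℝ) < m := lt_of_le_of_lt (div_nonneg hn0 hr0.le) hm
  have hmn : (n:ℝ) < m := by nlinarith
  set ω : ℝ := (volume (ball (0:En n) 1)).toReal with hω
  have hωp : 0 < ω := ball_vol_pos
  set A₁ : ℝ := ((1 + Real.sqrt n)^m)⁻¹ * ((2:ℝ)^(-(2*m)) * ω) with hA₁
  set A₂ : ℝ := (1 + Real.sqrt n)^m * ((2:ℝ)^m * ((2:ℝ)^m + 1) * Ic n m) with hA₂
  set B₁ : ℝ := ((1 + Real.sqrt n)^(m*r))⁻¹ * ((2:ℝ)^(-(2*(m*r))) * ω) with hB₁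
  set B₂ : ℝ := (1 + Real.sqrt n)^(m*r) * ((2:ℝ)^(m*r) * ((2:ℝ)^(m*r) + 1) * Ic n (m*r)) with hB₂
  have hA₁p : 0 < A₁ := by
    have := D_pos (n := n) m; have := tp_pos (-(2*m)); positivity
  have hA₂p : 0 < A₂ := by
    have := D_pos (n := n) m; have := tp_pos m; have := Ic_pos (n := n) hmn; positivity
  have hB₁p : 0 < B₁ := by
    have := D_pos (n := n) (m*r); have := tp_pos (-(2*(m*r))); positivity
  have hB₂p : 0 < B₂ := by
    have := D_pos (n := n) (m*r); have := tp_pos (m*r); have := Ic_pos (n := n) hmr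
    positivity
  refine ⟨A₁ ^ r / B₂, by positivity, A₂ ^ r / B₁, by positivity, fun v j mm x => ?_⟩
  set X : ℝ := ((v - j : ℕ) : ℝ) * (n : ℝ) * (1 - r) with hX
  set b : ℤ := min (j:ℤ) (v:ℤ) with hb
  set w : En n := x - corner n v mm with hw
  set P : ℝ := (2:ℝ)^(-((v:ℤ):ℝ)*(n:ℝ)) * eta n b m w with hP
  set Pr : ℝ := (2:ℝ)^(-((v:ℤ):ℝ)*(n:ℝ)) * eta n b (m*r) w with hPr
  have hPp : 0 < P := mul_pos (tp_pos _) (eta_pos _ _ _)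
  have hPrp : 0 < Pr := mul_pos (tp_pos _) (eta_pos _ _ _)
  have hFu := F_upper hmn (j:ℤ) (v:ℤ) mm x
  have hFl := F_lower hmn (j:ℤ) (v:ℤ) mm x
  have hGu := F_upper hmr (j:ℤ) (v:ℤ) mm x
  have hGl := F_lower hmr (j:ℤ) (v:ℤ) mm x
  rw [← hb, ← hw, ← hP] at hFu hFl
  rw [← hb, ← hw, ← hPr] at hGu hGl
  rw [← hA₂] at hFu
  rw [← hA₁] at hFl
  rw [← hB₂] at hGu
  rw [← hB₁] at hGl
  set F : ℝ := conv (eta n (j:ℤ) m) (conv (eta n (v:ℤ) m)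
    ((dyadicCube n v mm).indicator fun _ => (1:ℝ))) x with hF
  set G : ℝ := conv (eta n (j:ℤ) (m*r)) (conv (eta n (v:ℤ) (m*r))
    ((dyadicCube n v mm).indicator fun _ => (1:ℝ))) x with hG
  have hFnn : 0 ≤ F := le_trans (by positivity) hFl
  -- the exponent identity
  have hXid : (-((v:ℤ):ℝ)*(n:ℝ) + (n:ℝ)*((b:ℤ):ℝ)) * r
      = X + (-((v:ℤ):ℝ)*(n:ℝ) + (n:ℝ)*((b:ℤ):ℝ)) := by
    rcases le_total j v with hjv | hvj
    · have hbj : b = (j:ℤ) := min_eq_left (by exact_mod_cast hjv)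
      have hc : ((v - j : ℕ) : ℝ) = (v:ℝ) - (j:ℝ) := by
        rw [Nat.cast_sub hjv]
      rw [hbj, hX, hc]
      push_cast
      ring
    · have hbv : b = (v:ℤ) := min_eq_right (by exact_mod_cast hvj)
      have hc : ((v - j : ℕ) : ℝ) = 0 := by
        rw [Nat.sub_eq_zero_of_le hvj]; norm_num
      rw [hbv, hX, hc]
      push_cast
      ring
  have key : P ^ r = (2:ℝ)^X * Pr := P_rpow hr0 (v:ℤ) b X hXid w
  constructor
  · -- lower bound
    have h1 : (A₁ * P) ^ r ≤ F ^ r :=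
      Real.rpow_le_rpow (by positivity) hFl hr0.le
    have h2 : (A₁ * P) ^ r = A₁ ^ r * ((2:ℝ)^X * Pr) := by
      rw [Real.mul_rpow hA₁p.le hPp.le, key]
    have h3 : (2:ℝ)^X * G ≤ (2:ℝ)^X * (B₂ * Pr) :=
      mul_le_mul_of_nonneg_left hGu (tp_pos _).le
    calc A₁ ^ r / B₂ * ((2:ℝ)^X * G)
        ≤ A₁ ^ r / B₂ * ((2:ℝ)^X * (B₂ * Pr)) :=
          mul_le_mul_of_nonneg_left h3 (by positivity)
      _ = A₁ ^ r * ((2:ℝ)^X * Pr) := by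
          field_simp
      _ = (A₁ * P) ^ r := h2.symm
      _ ≤ F ^ r := h1
  · -- upper bound
    have h1 : F ^ r ≤ (A₂ * P) ^ r :=
      Real.rpow_le_rpow hFnn hFu hr0.le
    have h2 : (A₂ * P) ^ r = A₂ ^ r * ((2:ℝ)^X * Pr) := by
      rw [Real.mul_rpow hA₂p.le hPp.le, key]
    have h4 : (2:ℝ)^X * (B₁ * Pr) ≤ (2:ℝ)^X * G :=
      mul_le_mul_of_nonneg_left hGl (tp_pos _).le
    calc F ^ r ≤ A₂ ^ r * ((2:ℝ)^X * Pr) := h2 ▸ h1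
      _ = A₂ ^ r / B₁ * ((2:ℝ)^X * (B₁ * Pr)) := by
          field_simp
      _ ≤ A₂ ^ r / B₁ * ((2:ℝ)^X * G) :=
          mul_le_mul_of_nonneg_left h4 (by positivity)

end MainProof
end
end

section
/- Let α : ℝⁿ → ℝ be locally log-Hölder continuous with constant c_log(α), and let R ≥ c_log(α). Then there is c > 0, independent of x, y ∈ ℝⁿ and v, m ∈ ℕ₀, such that 2^{v α(x)} η_{v,m+R}(x - y) ≤ c 2^{v α(y)} η_{v,m}(x - y). -/
open MeasureTheory
noncomputable section

/-- Local log-Hölder continuity with constant c. -/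
def LocLogHolderWith {n : ℕ} (c : ℝ) (g : En n → ℝ) : Prop :=
  ∀ x y : En n, |g x - g y| ≤ c / Real.log (Real.exp 1 + 1 / ‖x - y‖)

/-- Local log-Hölder continuity. -/
def LocLogHolder {n : ℕ} (g : En n → ℝ) : Prop := ∃ c > 0, LocLogHolderWith c g


/-- Lemma on moving variable smoothness: for α locally log-Hölder with constant c_log(α)
and R ≥ c_log(α), 2^{vα(x)} η_{v,m+R}(x-y) ≤ c 2^{vα(y)} η_{v,m}(x-y), with c independent
of x, y and v, m ∈ ℕ₀. -/
theorem smoothness_shift (n : ℕ) (α : En n → ℝ) (clog : ℝ) (hclog : 0 < clog)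
    (hα : LocLogHolderWith clog α) (R : ℝ) (hR : clog ≤ R) :
    ∃ c > (0:ℝ), ∀ (x y : En n) (v m : ℕ),
      (2 : ℝ) ^ ((v : ℝ) * α x) * eta n v ((m : ℝ) + R) (x - y) ≤
        c * ((2 : ℝ) ^ ((v : ℝ) * α y) * eta n v (m : ℝ) (x - y)) := by
  refine ⟨Real.exp clog, Real.exp_pos _, fun x y v m => ?_⟩
  simp only [eta, Int.cast_natCast]
  set t : ℝ := ‖x - y‖ with ht
  have ht0 : 0 ≤ t := norm_nonneg _
  set s : ℝ := (2:ℝ) ^ (v:ℝ) * t with hs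
  have hs0 : 0 ≤ s := mul_nonneg (Real.rpow_nonneg (by norm_num) _) ht0
  have h1s : (1:ℝ) ≤ 1 + s := by linarith
  have h1s0 : (0:ℝ) < 1 + s := by linarith
  -- key inequality on exponents
  have hkey2 : (v:ℝ) * (α x - α y) * Real.log 2 ≤ clog * (1 + Real.log (1+s)) := by
    have hlog1s : 0 ≤ Real.log (1+s) := Real.log_nonneg h1s
    rcases eq_or_lt_of_le ht0 with h0 | htpos
    · have hxy : α x = α y := by
        have : x - y = 0 := by
          rw [← norm_eq_zero]; exact h0.symm
        have hxy : x = y := by rwa [sub_eq_zero] at this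
        rw [hxy]
      rw [hxy]
      simp
      positivity
    · have hL1 : 1 ≤ Real.log (Real.exp 1 + 1/t) := by
        rw [Real.le_log_iff_exp_le (by positivity)]
        have : 0 < 1/t := by positivity
        linarith
      set L := Real.log (Real.exp 1 + 1/t) with hL
      have hLpos : 0 < L := by linarith
      have hd : α x - α y ≤ clog / L := le_trans (le_abs_self _) (hα x y)
      have hlog2 : (0:ℝ) < Real.log 2 := Real.log_pos (by norm_num)
      have hstep : (v:ℝ) * Real.log 2 / L ≤ 1 + Real.log (1+s) := by
        rcases le_or_gt ((v:ℝ) * Real.log 2) L with h | h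
        · have h1 : (v:ℝ) * Real.log 2 / L ≤ 1 := by
            rw [div_le_one hLpos]; exact h
          linarith
        · have hlog : (v:ℝ) * Real.log 2 - L ≤ Real.log (1+s) := by
            have hP : (0:ℝ) < (2:ℝ)^(v:ℝ) := Real.rpow_pos_of_pos (by norm_num) _
            have h2v : Real.exp ((v:ℝ) * Real.log 2 - L) ≤ 1 + s := by
              rw [Real.exp_sub]
              have he1 : Real.exp ((v:ℝ) * Real.log 2) = (2:ℝ)^(v:ℝ) := by
                rw [Real.rpow_def_of_pos (by norm_num), mul_comm]
              have he2 : Real.exp L = Real.exp 1 + 1/t := Real.exp_log (by positivity)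
              rw [he1, he2, div_le_iff₀ (by positivity)]
              have hPt : (2:ℝ)^(v:ℝ) * t * (1/t) = (2:ℝ)^(v:ℝ) := by
                field_simp
              have he1pos : (0:ℝ) < Real.exp 1 := Real.exp_pos 1
              have h1 : 0 < (2:ℝ)^(v:ℝ) * t * Real.exp 1 := by positivity
              have h2 : 0 < 1/t := by positivity
              rw [hs]
              nlinarith
            calc (v:ℝ) * Real.log 2 - L = Real.log (Real.exp ((v:ℝ) * Real.log 2 - L)) := (Real.log_exp _).symm
              _ ≤ Real.log (1+s) := Real.log_le_log (Real.exp_pos _) h2v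
          rw [div_le_iff₀ hLpos]
          nlinarith
      have hv0 : (0:ℝ) ≤ (v:ℝ) * Real.log 2 := by positivity
      calc (v:ℝ) * (α x - α y) * Real.log 2 = ((v:ℝ) * Real.log 2) * (α x - α y) := by ring
        _ ≤ ((v:ℝ) * Real.log 2) * (clog / L) := mul_le_mul_of_nonneg_left hd hv0
        _ = clog * ((v:ℝ) * Real.log 2 / L) := by ring
        _ ≤ clog * (1 + Real.log (1+s)) := mul_le_mul_of_nonneg_left hstep hclog.le
  have key : (2:ℝ) ^ ((v:ℝ) * (α x - α y)) ≤ Real.exp clog * (1+s) ^ R := by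
    calc (2:ℝ) ^ ((v:ℝ) * (α x - α y))
        = Real.exp ((v:ℝ) * (α x - α y) * Real.log 2) := by
          rw [Real.rpow_def_of_pos (by norm_num), mul_comm (Real.log 2)]
      _ ≤ Real.exp (clog * (1 + Real.log (1+s))) := Real.exp_le_exp.mpr hkey2
      _ = Real.exp clog * (1+s) ^ clog := by
          rw [mul_add, mul_one, Real.exp_add, Real.rpow_def_of_pos h1s0, mul_comm clog]
      _ ≤ Real.exp clog * (1+s) ^ R := by
          gcongr
  have hfin : (2:ℝ) ^ ((v:ℝ) * (α x - α y)) * (1+s) ^ (-R) ≤ Real.exp clog := by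
    rw [Real.rpow_neg h1s0.le, ← div_eq_mul_inv, div_le_iff₀ (Real.rpow_pos_of_pos h1s0 _)]
    exact key
  have split1 : (2:ℝ) ^ ((v:ℝ) * α x) = (2:ℝ) ^ ((v:ℝ) * α y) * (2:ℝ) ^ ((v:ℝ) * (α x - α y)) := by
    rw [← Real.rpow_add (by norm_num : (0:ℝ) < 2)]
    congr 1; ring
  have split2 : (1+s) ^ (-((m:ℝ)+R)) = (1+s) ^ (-(m:ℝ)) * (1+s) ^ (-R) := by
    rw [← Real.rpow_add h1s0]
    congr 1; ring
  rw [split1, split2]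
  have hB : (0:ℝ) ≤ (2:ℝ) ^ ((v:ℝ) * α y) * ((2:ℝ) ^ ((n:ℝ) * (v:ℝ)) * (1+s) ^ (-(m:ℝ))) := by
    positivity
  calc (2:ℝ) ^ ((v:ℝ) * α y) * (2:ℝ) ^ ((v:ℝ) * (α x - α y)) *
        ((2:ℝ) ^ ((n:ℝ) * (v:ℝ)) * ((1+s) ^ (-(m:ℝ)) * (1+s) ^ (-R)))
      = ((2:ℝ) ^ ((v:ℝ) * α y) * ((2:ℝ) ^ ((n:ℝ) * (v:ℝ)) * (1+s) ^ (-(m:ℝ)))) *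
        ((2:ℝ) ^ ((v:ℝ) * (α x - α y)) * (1+s) ^ (-R)) := by ring
    _ ≤ ((2:ℝ) ^ ((v:ℝ) * α y) * ((2:ℝ) ^ ((n:ℝ) * (v:ℝ)) * (1+s) ^ (-(m:ℝ)))) * Real.exp clog :=
        mul_le_mul_of_nonneg_left hfin hB
    _ = Real.exp clog * ((2:ℝ) ^ ((v:ℝ) * α y) * ((2:ℝ) ^ ((n:ℝ) * (v:ℝ)) * (1+s) ^ (-(m:ℝ)))) := by ring
end
end

section
/- Let α, τ be locally log-Hölder continuous with τ⁻ ≥ 0, and let p, q be log-Hölder exponents in 𝒫₀^log with (τ - 1/p)⁻ ≥ 0 and 0 < q⁺, p⁺ < ∞. Then the quasi-norm ‖f‖# obtained by taking the supremum in the definition of the Triebel–Lizorkin-type space 𝔉^{α(·),τ(·)}_{p(·),q(·)} only over dyadic cubes P with |P| ≤ 1 (and over v ≥ v_P) is equivalent to the full quasi-norm ‖f‖ where the supremum runs over all dyadic cubes P (and v ≥ v_P⁺). -/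
open MeasureTheory Real ENNReal SchwartzMap
open scoped NNReal

noncomputable section

/-- Global log-Hölder continuity: local condition plus log-Hölder decay. -/
def GlobLogHolder {n : ℕ} (g : En n → ℝ) : Prop :=
  LocLogHolder g ∧ ∃ g_inf c, 0 < c ∧ ∀ x : En n, |g x - g_inf| ≤ c / Real.log (Real.exp 1 + ‖x‖)

/-- The class 𝒫₀^log of variable exponents. -/
def P0log {n : ℕ} (p : En n → ℝ) : Prop :=
  (∃ ε > 0, ∀ x, ε ≤ p x) ∧ GlobLogHolder (fun x => 1 / p x)

/-- Luxemburg quasi-norm of an ℝ≥0∞-valued function w.r.t. a variable exponent. -/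
def luxNorm {n : ℕ} (p : En n → ℝ) (f : En n → ℝ≥0∞) : ℝ≥0∞ :=
  sInf {μ : ℝ≥0∞ | 0 < μ ∧ ∫⁻ x, (f x / μ) ^ (p x) ∂volume ≤ 1}

section Dist

variable {n : ℕ}

lemma shiftDilate_tg (x : En n) (t : ℝ) :
    Function.HasTemperateGrowth (fun y : En n => x - t • y) := by
  have h1 : fderiv ℝ (fun y : En n => x - t • y)
      = fun _ : En n => ((-t) • ContinuousLinearMap.id ℝ (En n)) := by
    funext y
    have h2 : (fun y : En n => x - t • y)
        = fun y : En n => x + ((-t) • ContinuousLinearMap.id ℝ (En n)) y := by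
      funext z
      simp [sub_eq_add_neg, neg_smul]
    rw [h2, fderiv_const_add]
    exact ContinuousLinearMap.fderiv _
  refine Function.HasTemperateGrowth.of_fderiv (k := 1) (C := ‖x‖ + ‖t‖) ?_ ?_ ?_
  · rw [h1]; exact Function.HasTemperateGrowth.const _
  · exact (differentiable_const x).sub (differentiable_id.const_smul t)
  · intro y
    calc ‖x - t • y‖ ≤ ‖x‖ + ‖t • y‖ := norm_sub_le _ _
    _ = ‖x‖ + ‖t‖ * ‖y‖ := by rw [norm_smul]
    _ ≤ (‖x‖ + ‖t‖) * (1 + ‖y‖) ^ 1 := by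
        have h0 : (0:ℝ) ≤ ‖x‖ := norm_nonneg x
        have h1 : (0:ℝ) ≤ ‖t‖ := norm_nonneg t
        have h2 : (0:ℝ) ≤ ‖y‖ := norm_nonneg y
        nlinarith

lemma shiftDilate_anti (x : En n) (t : ℝ) (ht : 0 < t) :
    AntilipschitzWith (Real.toNNReal t⁻¹) (fun y : En n => x - t • y) := by
  rw [antilipschitzWith_iff_le_mul_dist]
  intro a b
  have hd : dist (x - t • a) (x - t • b) = t * dist a b := by
    rw [dist_eq_norm, dist_eq_norm]
    have : (x - t • a) - (x - t • b) = t • (b - a) := by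
      rw [smul_sub]; abel
    rw [this, norm_smul, Real.norm_eq_abs, abs_of_pos ht, norm_sub_rev]
  rw [hd, Real.coe_toNNReal _ (le_of_lt (inv_pos.2 ht)), ← mul_assoc,
    inv_mul_cancel₀ (ne_of_gt ht), one_mul]

/-- The Schwartz function y ↦ φ(t(x-y)). -/
def shiftDilate (φ : 𝓢(En n, ℂ)) (t : ℝ) (ht : 0 < t) (x : En n) : 𝓢(En n, ℂ) :=
  SchwartzMap.compCLMOfAntilipschitz ℝ (shiftDilate_tg x t) (shiftDilate_anti x t ht) φ

/-- The convolution φ_t * g of a dilated Schwartz function φ_t = tⁿφ(t·) with a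
tempered distribution g. -/
def distConv (φ : 𝓢(En n, ℂ)) (t : ℝ) (ht : 0 < t) (g : 𝓢(En n, ℂ) →L[ℂ] ℂ) (x : En n) : ℂ :=
  (t : ℂ) ^ (n : ℕ) * g (shiftDilate φ t ht x)

/-- The family (φ_v * f)_{v ∈ ℕ₀} with φ_0 = Φ and φ_v = 2^{vn}φ(2^v ·). -/
def phiConv (Φ φ : 𝓢(En n, ℂ)) (g : 𝓢(En n, ℂ) →L[ℂ] ℂ) : ℕ → En n → ℂ :=
  fun v => if v = 0 then distConv Φ 1 one_pos g else distConv φ ((2:ℝ)^(v:ℕ)) (by positivity) g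

/-- Admissibility of the pair (Φ, φ). -/
def AdmissiblePair (Φ φ : 𝓢(En n, ℂ)) : Prop :=
  (tsupport (⇑(fourierTransformCLM ℂ Φ)) ⊆ Metric.closedBall 0 2) ∧
  (∃ c > 0, ∀ ξ : En n, ‖ξ‖ ≤ 5/3 → c ≤ ‖fourierTransformCLM ℂ Φ ξ‖) ∧
  (tsupport (⇑(fourierTransformCLM ℂ φ)) ⊆ Metric.closedBall 0 2 \ Metric.ball 0 (1/2)) ∧
  (∃ c > 0, ∀ ξ : En n, 3/5 ≤ ‖ξ‖ → ‖ξ‖ ≤ 5/3 → c ≤ ‖fourierTransformCLM ℂ φ ξ‖)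

end Dist

section Norms

variable {n : ℕ}

/-- The weighted term 2^{kα(x)} |P|^{-τ(x)} ‖u_k(x)‖ where P has level v (|P| = 2^{-vn}). -/
def Fterm (α τ : En n → ℝ) (u : ℕ → En n → ℂ) (v : ℤ) (k : ℕ) (x : En n) : ℝ≥0∞ :=
  ENNReal.ofReal ((2 : ℝ) ^ ((k : ℝ) * α x + (v : ℝ) * (n : ℝ) * τ x)) * (‖u k x‖₊ : ℝ≥0∞)

/-- The quasi-norm of the Triebel–Lizorkin-type space 𝔉^{α(·),τ(·)}_{p(·),q(·)},
applied to the family u = (φ_v * f)_v. -/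
def Fnorm (α τ p q : En n → ℝ) (u : ℕ → En n → ℂ) : ℝ≥0∞ :=
  ⨆ (v : ℤ) (m : Fin n → ℤ), luxNorm p ((dyadicCube n v m).indicator
    (fun x => (∑' k : ℕ, Fterm α τ u v (v.toNat + k) x ^ (q x)) ^ (1 / q x)))

/-- The q = ∞ version of the quasi-norm of 𝔉^{α(·),τ(·)}_{p(·),∞}. -/
def FnormInf (α τ p : En n → ℝ) (u : ℕ → En n → ℂ) : ℝ≥0∞ :=
  ⨆ (v : ℤ) (m : Fin n → ℤ), luxNorm p ((dyadicCube n v m).indicator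
    (fun x => ⨆ k : ℕ, Fterm α τ u v (v.toNat + k) x))

/-- The variable Besov space B^{s(·)}_{∞,∞} quasi-norm. -/
def BnormInfInf (s : En n → ℝ) (u : ℕ → En n → ℂ) : ℝ≥0∞ :=
  ⨆ (v : ℕ) (x : En n), ENNReal.ofReal ((2 : ℝ) ^ ((v : ℝ) * s x)) * (‖u v x‖₊ : ℝ≥0∞)

end Norms

/-- The quasi-norm ‖f‖#, where the supremum is restricted to dyadic cubes P with |P| ≤ 1
(i.e. levels v ≥ 0) and the inner sum starts at v_P. -/
def FnormSharp {n : ℕ} (α τ p q : En n → ℝ) (u : ℕ → En n → ℂ) : ℝ≥0∞ :=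
  ⨆ (v : ℕ) (m : Fin n → ℤ), luxNorm p ((dyadicCube n v m).indicator
    (fun x => (∑' k : ℕ, Fterm α τ u v (v + k) x ^ (q x)) ^ (1 / q x)))

section AuxProof

variable {n : ℕ}

lemma measurableSet_dyadicCube (n : ℕ) (v : ℤ) (m : Fin n → ℤ) :
    MeasurableSet (dyadicCube n v m) := by
  have h : dyadicCube n v m =
      ⋂ i, ({x : En n | (m i : ℝ) ≤ (2:ℝ)^v * x i} ∩
            {x : En n | (2:ℝ)^v * x i < (m i : ℝ) + 1}) := by
    ext x
    simp only [dyadicCube, Set.mem_setOf_eq, Set.mem_iInter, Set.mem_inter_iff]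
  rw [h]
  refine MeasurableSet.iInter fun i => MeasurableSet.inter ?_ ?_
  · exact measurableSet_le measurable_const
      (((measurable_pi_apply i).comp (MeasurableEquiv.toLp 2 (Fin n → ℝ)).symm.measurable).const_mul _)
  · exact measurableSet_lt
      (((measurable_pi_apply i).comp (MeasurableEquiv.toLp 2 (Fin n → ℝ)).symm.measurable).const_mul _)
      measurable_const

lemma dyadicCube_subset_iUnion (n : ℕ) (v : ℤ) (m : Fin n → ℤ) (K : ℕ) (hK : 0 < K)
    (h2v : (2:ℝ)^v = ((K:ℝ))⁻¹) :
    dyadicCube n v m ⊆ ⋃ j : Fin n → Fin K,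
      dyadicCube n 0 (fun i => (K:ℤ) * m i + ((j i : ℕ) : ℤ)) := by
  intro x hx
  have hKpos : (0:ℝ) < (K:ℝ) := by exact_mod_cast hK
  have hb : ∀ i, ((K:ℤ) * m i : ℤ) ≤ ⌊x i⌋ ∧ ⌊x i⌋ < (K:ℤ) * m i + K := by
    intro i
    obtain ⟨h1, h2⟩ := hx i
    rw [h2v] at h1 h2
    have h1' : (K:ℝ) * (m i : ℝ) ≤ x i := by
      have := mul_le_mul_of_nonneg_left h1 hKpos.le
      rwa [← mul_assoc, mul_inv_cancel₀ hKpos.ne', one_mul] at this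
    have h2' : x i < (K:ℝ) * (m i : ℝ) + K := by
      have := mul_lt_mul_of_pos_left h2 hKpos
      rw [← mul_assoc, mul_inv_cancel₀ hKpos.ne', one_mul] at this
      nlinarith
    constructor
    · refine Int.le_floor.mpr ?_
      push_cast
      exact h1'
    · refine Int.floor_lt.mpr ?_
      push_cast
      exact h2'
  let j : Fin n → Fin K := fun i => ⟨(⌊x i⌋ - (K:ℤ) * m i).toNat, by
    obtain ⟨h1, h2⟩ := hb i; omega⟩
  refine Set.mem_iUnion.mpr ⟨j, fun i => ?_⟩
  obtain ⟨h1, h2⟩ := hb i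
  have hj : (((j i : ℕ)) : ℤ) = ⌊x i⌋ - (K:ℤ) * m i := by
    show (((⌊x i⌋ - (K:ℤ) * m i).toNat : ℕ) : ℤ) = ⌊x i⌋ - (K:ℤ) * m i
    omega
  have hM : ((K:ℤ) * m i + ((j i : ℕ) : ℤ)) = ⌊x i⌋ := by omega
  show ((((K:ℤ) * m i + ((j i : ℕ) : ℤ)) : ℤ) : ℝ) ≤ (2:ℝ)^(0:ℤ) * x i ∧
    (2:ℝ)^(0:ℤ) * x i < ((((K:ℤ) * m i + ((j i : ℕ) : ℤ)) : ℤ) : ℝ) + 1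
  rw [hM, zpow_zero, one_mul]
  exact ⟨Int.floor_le _, Int.lt_floor_add_one _⟩

/-- The key comparison: the full quasi-norm is bounded by the sharp quasi-norm. -/
lemma Fnorm_le_FnormSharp (n : ℕ) (α τ p q : En n → ℝ)
    (hppos : ∀ x, 0 < p x) (hqpos : ∀ x, 0 < q x)
    (hτp : ∀ x, 1 / p x ≤ τ x) (u : ℕ → En n → ℂ) :
    Fnorm α τ p q u ≤ FnormSharp α τ p q u := by
  unfold Fnorm
  refine iSup₂_le fun v m => ?_
  rcases le_or_gt 0 v with hv | hv
  · -- level v ≥ 0: the term appears verbatim in the sharp norm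
    obtain ⟨w, rfl⟩ := Int.eq_ofNat_of_zero_le hv
    unfold FnormSharp
    refine le_iSup₂_of_le w m (le_of_eq ?_)
    simp only [Int.toNat_natCast]
  · -- level v < 0
    set S := FnormSharp α τ p q u with hS
    set K : ℕ := 2 ^ (-v).toNat with hKdef
    have hK : 0 < K := by positivity
    have hw : (((-v).toNat : ℕ) : ℝ) = -(v:ℝ) := by
      have h1 : (((-v).toNat : ℕ) : ℤ) = -v := Int.toNat_of_nonneg (by omega)
      exact_mod_cast congrArg (fun z : ℤ => (z : ℝ)) h1
    have hKr : ((K:ℕ) : ℝ) = (2:ℝ) ^ (-(v:ℝ)) := by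
      rw [hKdef]
      push_cast
      rw [← Real.rpow_natCast 2 (-v).toNat, hw]
    have h2v : (2:ℝ)^v = ((K:ℝ))⁻¹ := by
      rw [hKr, ← Real.rpow_neg (by norm_num), neg_neg, ← Real.rpow_intCast]
    set G : En n → ℝ≥0∞ :=
      fun x => (∑' k : ℕ, Fterm α τ u 0 k x ^ (q x)) ^ (1 / q x) with hG
    set c : En n → ℝ≥0∞ :=
      fun x => ENNReal.ofReal ((2:ℝ) ^ ((v:ℝ) * (n:ℝ) * τ x)) with hc
    have hterm : ∀ k x, Fterm α τ u v (v.toNat + k) x = c x * Fterm α τ u 0 k x := by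
      intro k x
      have hvt : v.toNat = 0 := Int.toNat_of_nonpos hv.le
      unfold Fterm
      rw [hvt, zero_add, hc]
      rw [← mul_assoc, ← ENNReal.ofReal_mul (by positivity), ← Real.rpow_add two_pos]
      have : (v:ℝ) * (n:ℝ) * τ x + ((k:ℝ) * α x + ((0:ℤ):ℝ) * (n:ℝ) * τ x)
          = (k:ℝ) * α x + (v:ℝ) * (n:ℝ) * τ x := by push_cast; ring
      rw [this]
    have hFV : ∀ x, (∑' k : ℕ, Fterm α τ u v (v.toNat + k) x ^ (q x)) ^ (1 / q x)
        = c x * G x := by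
      intro x
      have hq0 : q x ≠ 0 := (hqpos x).ne'
      calc (∑' k : ℕ, Fterm α τ u v (v.toNat + k) x ^ (q x)) ^ (1 / q x)
          = (∑' k : ℕ, (c x * Fterm α τ u 0 k x) ^ (q x)) ^ (1 / q x) := by
            simp_rw [hterm]
        _ = ((c x) ^ (q x) * ∑' k : ℕ, Fterm α τ u 0 k x ^ (q x)) ^ (1 / q x) := by
            simp_rw [ENNReal.mul_rpow_of_nonneg _ _ (hqpos x).le]
            rw [ENNReal.tsum_mul_left]
        _ = c x * G x := by
            rw [ENNReal.mul_rpow_of_nonneg _ _ (one_div_pos.mpr (hqpos x)).le,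
              ← ENNReal.rpow_mul, mul_one_div_cancel hq0, ENNReal.rpow_one, hG]
    have hP : MeasurableSet (dyadicCube n v m) := measurableSet_dyadicCube n v m
    refine le_of_forall_gt_imp_ge_of_dense fun μ hμ => ?_
    have hμ0 : (0:ℝ≥0∞) < μ := lt_of_le_of_lt zero_le hμ
    -- the per-cube bound
    have percube : ∀ j : Fin n → Fin K,
        ∫⁻ x in dyadicCube n 0 (fun i => (K:ℤ) * m i + ((j i : ℕ) : ℤ)),
          (G x / μ) ^ (p x) ≤ 1 := by
      intro j
      set Q := dyadicCube n 0 (fun i => (K:ℤ) * m i + ((j i : ℕ) : ℤ)) with hQdef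
      have hQ : MeasurableSet Q := measurableSet_dyadicCube n 0 _
      have hle : luxNorm p (Q.indicator G) ≤ S := by
        have h := le_iSup₂ (f := fun (w : ℕ) (m' : Fin n → ℤ) =>
          luxNorm p ((dyadicCube n (w:ℤ) m').indicator
            (fun x => (∑' k : ℕ, Fterm α τ u (w:ℤ) (w + k) x ^ (q x)) ^ (1 / q x))))
          0 (fun i => (K:ℤ) * m i + ((j i : ℕ) : ℤ))
        simp only [Nat.cast_zero, zero_add] at h
        exact h
      have hlt : sInf {ν : ℝ≥0∞ | 0 < ν ∧
          ∫⁻ x, (Q.indicator G x / ν) ^ (p x) ∂volume ≤ 1} < μ :=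
        lt_of_le_of_lt hle hμ
      obtain ⟨ν, ⟨hν0, hνint⟩, hνlt⟩ := sInf_lt_iff.mp hlt
      calc ∫⁻ x in Q, (G x / μ) ^ (p x)
          = ∫⁻ x, Q.indicator (fun x => (G x / μ) ^ (p x)) x := (lintegral_indicator hQ _).symm
        _ ≤ ∫⁻ x, (Q.indicator G x / ν) ^ (p x) := by
            refine lintegral_mono fun x => ?_
            by_cases hx : x ∈ Q
            · rw [Set.indicator_of_mem hx, Set.indicator_of_mem hx]
              exact ENNReal.rpow_le_rpow (ENNReal.div_le_div_left hνlt.le _) (hppos x).le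
            · simp [Set.indicator_of_notMem hx]
        _ ≤ 1 := hνint
    -- the integral bound over the big cube
    have hsub := dyadicCube_subset_iUnion n v m K hK h2v
    have hcount : ∑' _ : Fin n → Fin K, (1:ℝ≥0∞) = ((K^n : ℕ) : ℝ≥0∞) := by
      rw [tsum_eq_sum (s := Finset.univ) (by simp), Finset.sum_const, Finset.card_univ,
        Fintype.card_fun, Fintype.card_fin, Fintype.card_fin, nsmul_eq_mul, mul_one]
    have hone : ENNReal.ofReal ((2:ℝ) ^ ((v:ℝ) * (n:ℝ))) * ((K^n : ℕ) : ℝ≥0∞) = 1 := by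
      rw [← ENNReal.ofReal_natCast, ← ENNReal.ofReal_mul (by positivity)]
      have : (2:ℝ) ^ ((v:ℝ) * (n:ℝ)) * ((K^n : ℕ) : ℝ) = 1 := by
        push_cast
        rw [hKr, ← Real.rpow_natCast ((2:ℝ) ^ (-(v:ℝ))) n, ← Real.rpow_mul (by norm_num),
          ← Real.rpow_add two_pos, show (v:ℝ) * (n:ℝ) + -(v:ℝ) * (n:ℝ) = 0 by ring,
          Real.rpow_zero]
      rw [this, ENNReal.ofReal_one]
    have hint : ∫⁻ x, ((dyadicCube n v m).indicator
        (fun x => (∑' k : ℕ, Fterm α τ u v (v.toNat + k) x ^ (q x)) ^ (1 / q x)) x / μ)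
          ^ (p x) ∂volume ≤ 1 := by
      calc ∫⁻ x, ((dyadicCube n v m).indicator
            (fun x => (∑' k : ℕ, Fterm α τ u v (v.toNat + k) x ^ (q x)) ^ (1 / q x)) x / μ)
              ^ (p x) ∂volume
          = ∫⁻ x, (dyadicCube n v m).indicator
              (fun x => (c x * G x / μ) ^ (p x)) x ∂volume := by
            refine lintegral_congr fun x => ?_
            by_cases hx : x ∈ dyadicCube n v m
            · rw [Set.indicator_of_mem hx, Set.indicator_of_mem hx, hFV x]
            · rw [Set.indicator_of_notMem hx, Set.indicator_of_notMem hx,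
                ENNReal.zero_div, ENNReal.zero_rpow_of_pos (hppos x)]
        _ = ∫⁻ x in dyadicCube n v m, (c x * G x / μ) ^ (p x) := lintegral_indicator hP _
        _ ≤ ∫⁻ x in dyadicCube n v m,
              ENNReal.ofReal ((2:ℝ) ^ ((v:ℝ) * (n:ℝ))) * (G x / μ) ^ (p x) := by
            refine lintegral_mono fun x => ?_
            rw [mul_div_assoc, ENNReal.mul_rpow_of_nonneg _ _ (hppos x).le]
            refine mul_le_mul_left ?_ _
            rw [hc, ENNReal.ofReal_rpow_of_pos (by positivity), ← Real.rpow_mul (by norm_num)]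
            refine ENNReal.ofReal_le_ofReal
              (Real.rpow_le_rpow_of_exponent_le one_le_two ?_)
            have h1 : 1 ≤ τ x * p x := by
              have := hτp x
              exact (div_le_iff₀ (hppos x)).mp this
            have h2 : (v:ℝ) * (n:ℝ) ≤ 0 := by
              have hv' : (v:ℝ) ≤ 0 := by exact_mod_cast hv.le
              have hn' : (0:ℝ) ≤ (n:ℝ) := by positivity
              nlinarith
            calc (v:ℝ) * (n:ℝ) * τ x * p x = (v:ℝ) * (n:ℝ) * (τ x * p x) := by ring
              _ ≤ (v:ℝ) * (n:ℝ) * 1 := mul_le_mul_of_nonpos_left h1 h2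
              _ = (v:ℝ) * (n:ℝ) := mul_one _
        _ = ENNReal.ofReal ((2:ℝ) ^ ((v:ℝ) * (n:ℝ))) *
              ∫⁻ x in dyadicCube n v m, (G x / μ) ^ (p x) :=
            lintegral_const_mul' _ _ ENNReal.ofReal_ne_top
        _ ≤ ENNReal.ofReal ((2:ℝ) ^ ((v:ℝ) * (n:ℝ))) *
              ∑' j : Fin n → Fin K,
                ∫⁻ x in dyadicCube n 0 (fun i => (K:ℤ) * m i + ((j i : ℕ) : ℤ)),
                  (G x / μ) ^ (p x) := by
            refine mul_le_mul_right ?_ _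
            refine le_trans (lintegral_mono' (Measure.restrict_mono hsub le_rfl) le_rfl) ?_
            exact lintegral_iUnion_le _ _
        _ ≤ ENNReal.ofReal ((2:ℝ) ^ ((v:ℝ) * (n:ℝ))) * ∑' _ : Fin n → Fin K, (1:ℝ≥0∞) :=
            mul_le_mul_right (ENNReal.tsum_le_tsum fun j => percube j) _
        _ = 1 := by rw [hcount, hone]
    exact sInf_le ⟨hμ0, hint⟩

lemma FnormSharp_le_Fnorm (n : ℕ) (α τ p q : En n → ℝ) (u : ℕ → En n → ℂ) :
    FnormSharp α τ p q u ≤ Fnorm α τ p q u := by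
  unfold FnormSharp Fnorm
  refine iSup₂_le fun w m => le_iSup₂_of_le (w:ℤ) m (le_of_eq ?_)
  simp only [Int.toNat_natCast]

end AuxProof

/-- Restricting the supremum in the definition of 𝔉^{α(·),τ(·)}_{p(·),q(·)} to dyadic cubes of
volume at most 1 gives an equivalent quasi-norm, provided α, τ ∈ C^log_loc, τ⁻ ≥ 0,
p, q ∈ 𝒫₀^log, (τ - 1/p)⁻ ≥ 0 and p⁺, q⁺ < ∞. -/
theorem Fnorm_sharp_equiv (n : ℕ) (hn : 0 < n) (α τ p q : En n → ℝ)
    (hα : LocLogHolder α) (hτ : LocLogHolder τ) (hτ0 : ∀ x, 0 ≤ τ x)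
    (hp : P0log p) (hq : P0log q)
    (hτp : ∀ x, 1 / p x ≤ τ x)
    (hpfin : ∃ M : ℝ, ∀ x, p x ≤ M) (hqfin : ∃ M : ℝ, ∀ x, q x ≤ M)
    (Φ φ : 𝓢(En n, ℂ)) (hadm : AdmissiblePair Φ φ) :
    ∃ C : ℝ≥0, 0 < C ∧ ∀ g : 𝓢(En n, ℂ) →L[ℂ] ℂ,
      FnormSharp α τ p q (phiConv Φ φ g) ≤ C * Fnorm α τ p q (phiConv Φ φ g) ∧
      Fnorm α τ p q (phiConv Φ φ g) ≤ C * FnormSharp α τ p q (phiConv Φ φ g) := by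
  obtain ⟨⟨εp, hεp, hεple⟩, _⟩ := hp
  obtain ⟨⟨εq, hεq, hεqle⟩, _⟩ := hq
  have hppos : ∀ x, 0 < p x := fun x => lt_of_lt_of_le hεp (hεple x)
  have hqpos : ∀ x, 0 < q x := fun x => lt_of_lt_of_le hεq (hεqle x)
  refine ⟨1, one_pos, fun g => ?_⟩
  simp only [ENNReal.coe_one, one_mul]
  exact ⟨FnormSharp_le_Fnorm n α τ p q _,
    Fnorm_le_FnormSharp n α τ p q hppos hqpos hτp _⟩
end
end

section
/- Let α, τ be locally log-Hölder continuous, τ⁻ ≥ 0, and p, q ∈ 𝒫₀^log with 0 < q⁺, p⁺ < ∞. Suppose λ = (λ_{v,m})_{v ∈ ℕ₀, m ∈ ℤⁿ} is a complex sequence with finite 𝔣^{α(·),τ(·)}_{p(·),q(·)} quasi-norm. Then for any v ∈ ℕ₀, m ∈ ℤⁿ and x ∈ Q_{v,m}, one has |λ_{v,m}| ≤ c 2^{-v(α(x)+n/2)} |Q_{v,m}|^{τ(x)} ‖λ‖_{𝔣^{α(·),τ(·)}_{p(·),q(·)}} ‖χ_{v,m}‖_{p(·)}^{-1}, with c > 0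 independent of v and m. -/
open MeasureTheory Real ENNReal SchwartzMap
open scoped NNReal

noncomputable section

/-- The term Σ_m 2^{k(α(x)+n/2)} |λ_{k,m}| χ_{k,m}(x) · |P|^{-τ(x)}, P of level v. -/
def fseqTerm {n : ℕ} (α τ : En n → ℝ) (lam : ℕ → (Fin n → ℤ) → ℂ) (v : ℤ) (k : ℕ)
    (x : En n) : ℝ≥0∞ :=
  ENNReal.ofReal ((2 : ℝ) ^ ((k : ℝ) * (α x + (n : ℝ) / 2) + (v : ℝ) * (n : ℝ) * τ x)) *
    ∑' m : Fin n → ℤ, (dyadicCube n k m).indicator (fun _ => ((‖lam k m‖₊ : ℝ≥0∞))) x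

/-- The sequence space quasi-norm ‖λ‖_{𝔣^{α(·),τ(·)}_{p(·),q(·)}}. -/
def fseqNorm {n : ℕ} (α τ p q : En n → ℝ) (lam : ℕ → (Fin n → ℤ) → ℂ) : ℝ≥0∞ :=
  ⨆ (v : ℤ) (m : Fin n → ℤ), luxNorm p ((dyadicCube n v m).indicator
    (fun x => (∑' k : ℕ, fseqTerm α τ lam v (v.toNat + k) x ^ (q x)) ^ (1 / q x)))


section CoefficientEstimateAux

variable {n : ℕ}

lemma coefAux_log (s : ℝ) (hs : 1 ≤ s) (v : ℕ) :
    (v : ℝ) * Real.log 2 ≤ (2 * Real.log s + 2) * Real.log (Real.exp 1 + 2 ^ v / s) := by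
  have hL : 0 ≤ Real.log s := Real.log_nonneg hs
  have hs0 : (0:ℝ) < s := by linarith
  have ht : (0:ℝ) < 2 ^ v / s := by positivity
  set D := Real.log (Real.exp 1 + 2 ^ v / s) with hD
  have hD1 : 1 ≤ D := by
    have h := Real.log_le_log (Real.exp_pos 1)
      (by linarith : Real.exp 1 ≤ Real.exp 1 + 2 ^ v / s)
    rwa [Real.log_exp] at h
  have hD2 : (v : ℝ) * Real.log 2 - Real.log s ≤ D := by
    have h1 : Real.log (2 ^ v / s) ≤ D :=
      Real.log_le_log ht (by linarith [Real.exp_pos 1])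
    rwa [Real.log_div (by positivity) (by positivity), Real.log_pow] at h1
  nlinarith [mul_nonneg hL (sub_nonneg.2 hD1),
    mul_nonneg (Nat.cast_nonneg (α := ℝ) v) (Real.log_nonneg (by norm_num : (1:ℝ) ≤ 2))]

lemma coefAux_holder (hn : 0 < n) {c : ℝ} (hc : 0 ≤ c) {g : En n → ℝ}
    (hg : LocLogHolderWith c g) :
    ∃ B : ℝ, 0 ≤ B ∧ ∀ (v : ℕ) (x y : En n),
      ‖x - y‖ ≤ Real.sqrt n * ((2:ℝ) ^ v)⁻¹ → (v : ℝ) * |g x - g y| ≤ B := by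
  set s := Real.sqrt n with hsdef
  have hs1 : (1:ℝ) ≤ s := by
    rw [hsdef, show (1:ℝ) = Real.sqrt 1 by simp]
    exact Real.sqrt_le_sqrt (by exact_mod_cast hn)
  have hs0 : (0:ℝ) < s := by linarith
  have hlog2 : (0:ℝ) < Real.log 2 := Real.log_pos one_lt_two
  have hB0 : 0 ≤ c * ((2 * Real.log s + 2) / Real.log 2) :=
    mul_nonneg hc (div_nonneg (by linarith [Real.log_nonneg hs1]) hlog2.le)
  refine ⟨c * ((2 * Real.log s + 2) / Real.log 2), hB0, ?_⟩
  intro v x y hxy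
  by_cases hxy0 : x = y
  · subst hxy0; simpa using hB0
  have hr : 0 < ‖x - y‖ := by rwa [norm_pos_iff, sub_ne_zero]
  set D := Real.log (Real.exp 1 + 2 ^ v / s) with hDdef
  have ht : (0:ℝ) < 2 ^ v / s := by positivity
  have hD1 : 1 ≤ D := by
    have h := Real.log_le_log (Real.exp_pos 1)
      (by linarith : Real.exp 1 ≤ Real.exp 1 + 2 ^ v / s)
    rwa [Real.log_exp] at h
  have hDpos : 0 < D := lt_of_lt_of_le one_pos hD1
  have hinvle : 2 ^ v / s ≤ 1 / ‖x - y‖ := by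
    rw [div_le_div_iff₀ hs0 hr]
    have h2 : (0:ℝ) < (2:ℝ) ^ v := by positivity
    calc (2:ℝ) ^ v * ‖x - y‖ ≤ (2:ℝ) ^ v * (s * ((2:ℝ) ^ v)⁻¹) :=
          mul_le_mul_of_nonneg_left hxy h2.le
      _ = 1 * s := by field_simp
  have hmono : D ≤ Real.log (Real.exp 1 + 1 / ‖x - y‖) :=
    Real.log_le_log (by positivity) (by linarith)
  have h1 : |g x - g y| ≤ c / D :=
    le_trans (hg x y) (div_le_div_of_nonneg_left hc hDpos hmono)
  have h2 : (v:ℝ) / D ≤ (2 * Real.log s + 2) / Real.log 2 := by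
    rw [div_le_div_iff₀ hDpos hlog2]
    exact coefAux_log s hs1 v
  calc (v:ℝ) * |g x - g y| ≤ (v:ℝ) * (c / D) :=
        mul_le_mul_of_nonneg_left h1 (Nat.cast_nonneg v)
    _ = c * ((v:ℝ) / D) := by ring
    _ ≤ c * ((2 * Real.log s + 2) / Real.log 2) := mul_le_mul_of_nonneg_left h2 hc

lemma coefAux_cube_dist (v : ℕ) (m : Fin n → ℤ) {x y : En n}
    (hx : x ∈ dyadicCube n v m) (hy : y ∈ dyadicCube n v m) :
    ‖x - y‖ ≤ Real.sqrt n * ((2:ℝ) ^ v)⁻¹ := by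
  have h2 : (0:ℝ) < (2:ℝ) ^ ((v:ℕ) : ℤ) := by positivity
  have hcoord : ∀ i, |x i - y i| ≤ ((2:ℝ) ^ v)⁻¹ := by
    intro i
    obtain ⟨hx1, hx2⟩ := hx i
    obtain ⟨hy1, hy2⟩ := hy i
    have habs : (2:ℝ) ^ ((v:ℕ) : ℤ) * |x i - y i| ≤ 1 := by
      rw [← abs_of_pos h2, ← abs_mul, mul_sub]
      exact abs_le.mpr ⟨by linarith, by linarith⟩
    have h3 : |x i - y i| * (2:ℝ) ^ ((v:ℕ) : ℤ) ≤ 1 := by rwa [mul_comm]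
    have h4 := (le_div_iff₀ h2).mpr h3
    rw [one_div] at h4
    rwa [← zpow_natCast (2:ℝ) v]
  have hsq : ∀ i, ‖(x - y) i‖ ^ 2 ≤ (((2:ℝ) ^ v)⁻¹) ^ 2 := by
    intro i
    rw [show (x - y) i = x i - y i from rfl, Real.norm_eq_abs]
    exact pow_le_pow_left₀ (abs_nonneg _) (hcoord i) 2
  rw [EuclideanSpace.norm_eq]
  calc Real.sqrt (∑ i, ‖(x - y) i‖ ^ 2)
      ≤ Real.sqrt (∑ _i : Fin n, (((2:ℝ) ^ v)⁻¹) ^ 2) :=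
        Real.sqrt_le_sqrt (Finset.sum_le_sum fun i _ => hsq i)
    _ = Real.sqrt ((n : ℝ) * (((2:ℝ) ^ v)⁻¹) ^ 2) := by
        rw [Finset.sum_const, Finset.card_univ, Fintype.card_fin, nsmul_eq_mul]
    _ = Real.sqrt n * ((2:ℝ) ^ v)⁻¹ := by
        rw [Real.sqrt_mul (Nat.cast_nonneg n), Real.sqrt_sq (by positivity)]

lemma coefAux_cube_meas (v : ℤ) (m : Fin n → ℤ) : MeasurableSet (dyadicCube n v m) := by
  have h : dyadicCube n v m =
      ⋂ i, ((fun x : En n => (2:ℝ) ^ v * x i) ⁻¹' Set.Ico (m i : ℝ) ((m i : ℝ) + 1)) := by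
    ext z
    simp [dyadicCube, Set.mem_iInter, Set.mem_Ico]
  rw [h]
  exact MeasurableSet.iInter fun i =>
    (measurable_const.mul ((measurable_pi_apply i).comp (WithLp.measurable_ofLp _ _))) measurableSet_Ico

lemma coefAux_cube_pos (v : ℤ) (m : Fin n → ℤ) :
    0 < volume (dyadicCube n v m) := by
  have h2 : (0:ℝ) < (2:ℝ) ^ v := by positivity
  set O : Set (En n) :=
    ⋂ i, ((fun x : En n => (2:ℝ) ^ v * x i) ⁻¹' Set.Ioo (m i : ℝ) ((m i : ℝ) + 1)) with hO
  have hOopen : IsOpen O := isOpen_iInter_of_finite fun i =>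
    isOpen_Ioo.preimage (continuous_const.mul ((continuous_apply i).comp (PiLp.continuous_ofLp _ _)))
  have hsub : O ⊆ dyadicCube n v m := by
    intro z hz i
    have := Set.mem_iInter.mp hz i
    simp only [Set.mem_preimage, Set.mem_Ioo] at this
    exact ⟨this.1.le, this.2⟩
  have hne : O.Nonempty := by
    refine ⟨WithLp.toLp 2 (fun i => ((m i : ℝ) + 2⁻¹) / (2:ℝ) ^ v : Fin n → ℝ), ?_⟩
    refine Set.mem_iInter.mpr fun i => ?_
    simp only [Set.mem_preimage, Set.mem_Ioo, WithLp.ofLp_toLp]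
    rw [show (2:ℝ) ^ v * (((m i : ℝ) + 2⁻¹) / (2:ℝ) ^ v) = (m i : ℝ) + 2⁻¹ by
      field_simp]
    constructor <;> norm_num
  exact lt_of_lt_of_le (hOopen.measure_pos volume hne) (measure_mono hsub)

lemma coefAux_luxNorm_mono {p : En n → ℝ} (hp : ∀ x, 0 ≤ p x) {f g : En n → ℝ≥0∞}
    (h : ∀ x, f x ≤ g x) : luxNorm p f ≤ luxNorm p g := by
  unfold luxNorm
  apply sInf_le_sInf
  rintro μ ⟨hμ, hint⟩
  refine ⟨hμ, le_trans (lintegral_mono fun x => ?_) hint⟩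
  exact ENNReal.rpow_le_rpow (ENNReal.div_le_div_right (h x) μ) (hp x)

lemma coefAux_luxNorm_smul_le {p : En n → ℝ} {f : En n → ℝ≥0∞} {κ : ℝ≥0∞}
    (hκ0 : κ ≠ 0) (hκt : κ ≠ ∞) :
    κ * luxNorm p f ≤ luxNorm p (fun x => κ * f x) := by
  unfold luxNorm
  apply le_sInf
  rintro μ ⟨hμ0, hint⟩
  have hrw : ∀ x : En n, (κ * f x / μ) = f x / (μ * κ⁻¹) := by
    intro x
    rw [div_eq_mul_inv, div_eq_mul_inv,
      ENNReal.mul_inv (Or.inl hμ0.ne') (Or.inr (ENNReal.inv_ne_zero.mpr hκt)),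
      inv_inv]
    ring
  have hmem : luxNorm p f ≤ μ * κ⁻¹ := by
    unfold luxNorm
    apply sInf_le
    refine ⟨ENNReal.mul_pos hμ0.ne' (ENNReal.inv_ne_zero.mpr hκt), ?_⟩
    calc ∫⁻ x, (f x / (μ * κ⁻¹)) ^ p x = ∫⁻ x, (κ * f x / μ) ^ p x := by
          simp_rw [hrw]
      _ ≤ 1 := hint
  calc κ * luxNorm p f ≤ κ * (μ * κ⁻¹) := mul_le_mul_right hmem κ
    _ = μ := by
        rw [mul_comm μ, ← mul_assoc, ENNReal.mul_inv_cancel hκ0 hκt, one_mul]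

lemma coefAux_luxNorm_indicator {p : En n → ℝ} {ε : ℝ} (hε : 0 < ε)
    (hεle : ∀ x, ε ≤ p x) {Q : Set (En n)} (hQ : MeasurableSet Q)
    (h0 : 0 < volume Q) (hfin : volume Q < ∞) :
    luxNorm p (Q.indicator fun _ => (1:ℝ≥0∞)) ≠ 0 ∧
    luxNorm p (Q.indicator fun _ => (1:ℝ≥0∞)) ≠ ∞ := by
  set V := volume Q with hV
  have hind : ∀ (μ : ℝ≥0∞) (z : En n),
      ((Q.indicator (fun _ => (1:ℝ≥0∞)) z) / μ) ^ p z
        = Q.indicator (fun z => (μ⁻¹ : ℝ≥0∞) ^ p z) z := by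
    intro μ z
    by_cases hz : z ∈ Q
    · simp [Set.indicator_of_mem hz, one_div]
    · simp [Set.indicator_of_notMem hz, ENNReal.zero_div,
        ENNReal.zero_rpow_of_pos (lt_of_lt_of_le hε (hεle z))]
  have hIeq : ∀ μ : ℝ≥0∞,
      (∫⁻ z, ((Q.indicator (fun _ => (1:ℝ≥0∞)) z) / μ) ^ p z)
        = ∫⁻ z in Q, (μ⁻¹ : ℝ≥0∞) ^ p z := by
    intro μ
    simp_rw [hind μ]
    exact lintegral_indicator hQ _
  constructor
  · -- nonzero
    have hmin0 : (0:ℝ≥0∞) < min 1 (V ^ (1/ε)) :=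
      lt_min one_pos (ENNReal.rpow_pos h0 hfin.ne)
    refine ne_of_gt (lt_of_lt_of_le hmin0 ?_)
    unfold luxNorm
    apply le_sInf
    rintro μ ⟨hμ0, hint⟩
    by_cases h1 : 1 ≤ μ
    · exact le_trans (min_le_left _ _) h1
    push_neg at h1
    have hbase : (1:ℝ≥0∞) ≤ μ⁻¹ := ENNReal.one_le_inv.mpr h1.le
    have hlow : (μ⁻¹ : ℝ≥0∞) ^ ε * V ≤ 1 := by
      calc (μ⁻¹ : ℝ≥0∞) ^ ε * V = ∫⁻ _z in Q, (μ⁻¹ : ℝ≥0∞) ^ ε := by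
            rw [setLIntegral_const]
        _ ≤ ∫⁻ z in Q, (μ⁻¹ : ℝ≥0∞) ^ p z := lintegral_mono fun z =>
            ENNReal.rpow_le_rpow_of_exponent_le hbase (hεle z)
        _ = ∫⁻ z, ((Q.indicator (fun _ => (1:ℝ≥0∞)) z) / μ) ^ p z := (hIeq μ).symm
        _ ≤ 1 := hint
    have h2 : (μ⁻¹ : ℝ≥0∞) ^ ε ≤ V⁻¹ := ENNReal.le_inv_iff_mul_le.mpr hlow
    have h3 : μ⁻¹ ≤ (V ^ (1/ε))⁻¹ := by
      have h4 := ENNReal.rpow_le_rpow h2 (by positivity : (0:ℝ) ≤ 1/ε)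
      rwa [← ENNReal.rpow_mul, mul_one_div_cancel hε.ne', ENNReal.rpow_one,
        ENNReal.inv_rpow] at h4
    exact le_trans (min_le_right _ _) (ENNReal.inv_le_inv.mp h3)
  · -- finite
    set μ : ℝ≥0∞ := 1 + V ^ (1/ε) with hμdef
    have hμt : μ ≠ ∞ := by
      rw [hμdef]
      exact ENNReal.add_ne_top.mpr
        ⟨ENNReal.one_ne_top, ENNReal.rpow_ne_top_of_nonneg (by positivity) hfin.ne⟩
    have hμ1 : (1:ℝ≥0∞) ≤ μ := le_add_right le_rfl
    have hμ0 : (0:ℝ≥0∞) < μ := lt_of_lt_of_le one_pos hμ1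
    have hbase : μ⁻¹ ≤ 1 := ENNReal.inv_le_one.mpr hμ1
    have hint : (∫⁻ z, ((Q.indicator (fun _ => (1:ℝ≥0∞)) z) / μ) ^ p z) ≤ 1 := by
      rw [hIeq μ]
      calc (∫⁻ z in Q, (μ⁻¹ : ℝ≥0∞) ^ p z)
          ≤ ∫⁻ _z in Q, (μ⁻¹ : ℝ≥0∞) ^ ε := lintegral_mono fun z =>
            ENNReal.rpow_le_rpow_of_exponent_ge hbase (hεle z)
        _ = (μ⁻¹ : ℝ≥0∞) ^ ε * V := by rw [setLIntegral_const]
        _ ≤ ((V ^ (1/ε))⁻¹ : ℝ≥0∞) ^ ε * V := by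
            apply mul_le_mul_left
            apply ENNReal.rpow_le_rpow _ hε.le
            exact ENNReal.inv_le_inv.mpr (le_add_self)
        _ = V⁻¹ * V := by
            rw [ENNReal.inv_rpow, ← ENNReal.rpow_mul, one_div_mul_cancel hε.ne',
              ENNReal.rpow_one]
        _ = 1 := ENNReal.inv_mul_cancel h0.ne' hfin.ne
    have : luxNorm p (Q.indicator fun _ => (1:ℝ≥0∞)) ≤ μ := by
      unfold luxNorm
      exact sInf_le ⟨hμ0, hint⟩
    exact (lt_of_le_of_lt this hμt.lt_top).ne

end CoefficientEstimateAux

/-- Size estimate for coefficients: |λ_{v,m}| ≤ c 2^{-v(α(x)+n/2)} |Q_{v,m}|^{τ(x)}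
‖λ‖_{𝔣^{α(·),τ(·)}_{p(·),q(·)}} ‖χ_{v,m}‖_{p(·)}⁻¹ for x ∈ Q_{v,m}. -/
theorem coefficient_estimate (n : ℕ) (hn : 0 < n) (α τ p q : En n → ℝ)
    (hα : LocLogHolder α) (hτ : LocLogHolder τ) (hτ0 : ∀ x, 0 ≤ τ x)
    (hp : P0log p) (hq : P0log q)
    (hpfin : ∃ M : ℝ, ∀ x, p x ≤ M) (hqfin : ∃ M : ℝ, ∀ x, q x ≤ M) :
    ∃ C : ℝ≥0, 0 < C ∧ ∀ (lam : ℕ → (Fin n → ℤ) → ℂ) (v : ℕ) (m : Fin n → ℤ) (x : En n),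
      x ∈ dyadicCube n v m →
      (‖lam v m‖₊ : ℝ≥0∞) ≤
        C * ENNReal.ofReal ((2 : ℝ) ^ (-(v : ℝ) * (α x + (n : ℝ) / 2)
              + (-(v : ℝ)) * (n : ℝ) * τ x)) *
          fseqNorm α τ p q lam *
          (luxNorm p ((dyadicCube n v m).indicator fun _ => (1 : ℝ≥0∞)))⁻¹ := by
    classical
  obtain ⟨⟨εp, hεp, hεple⟩, -⟩ := hp
  obtain ⟨⟨εq, hεq, hεqle⟩, -⟩ := hq
  obtain ⟨cα, hcα, hgα⟩ := hα
  obtain ⟨cτ, hcτ, hgτ⟩ := hτ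
  obtain ⟨Bα, hBα0, hBα⟩ := coefAux_holder hn hcα.le hgα
  obtain ⟨Bτ, hBτ0, hBτ⟩ := coefAux_holder hn hcτ.le hgτ
  set B : ℝ := Bα + n * Bτ with hBdef
  have hB0 : 0 ≤ B := by positivity
  refine ⟨Real.toNNReal ((2:ℝ) ^ B), Real.toNNReal_pos.mpr (by positivity), ?_⟩
  intro lam v m x hx
  by_cases hlam : lam v m = 0
  · simp [hlam]
  set Q := dyadicCube n (v:ℤ) m with hQdef
  set L : ℝ≥0∞ := ((‖lam v m‖₊ : ℝ≥0) : ℝ≥0∞) with hLdef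
  have hL0 : L ≠ 0 := by simpa [hLdef] using hlam
  set E : En n → ℝ := fun z => (v:ℝ) * (α z + (n:ℝ) / 2) + (v:ℝ) * (n:ℝ) * τ z with hEdef
  set κ : ℝ≥0∞ := ENNReal.ofReal ((2:ℝ) ^ (E x - B)) * L with hκdef
  have hκ0 : κ ≠ 0 := mul_ne_zero (ENNReal.ofReal_pos.mpr (by positivity)).ne' hL0
  have hκt : κ ≠ ∞ := ENNReal.mul_ne_top ENNReal.ofReal_ne_top ENNReal.coe_ne_top
  have hQmeas : MeasurableSet Q := coefAux_cube_meas (v:ℤ) m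
  have hVpos : 0 < volume Q := coefAux_cube_pos (v:ℤ) m
  have hVfin : volume Q < ∞ := by
    refine lt_of_le_of_lt (measure_mono ?_)
      (measure_closedBall_lt_top (x := x) (r := Real.sqrt n * ((2:ℝ) ^ v)⁻¹))
    intro y hy
    rw [Metric.mem_closedBall, dist_eq_norm]
    exact coefAux_cube_dist v m hy hx
  set I := luxNorm p (Q.indicator fun _ => (1:ℝ≥0∞)) with hIdef
  obtain ⟨hI0, hIt⟩ := coefAux_luxNorm_indicator hεp hεple hQmeas hVpos hVfin
  set N := fseqNorm α τ p q lam with hNdef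
  have hEzx : ∀ z ∈ Q, E x - B ≤ E z := by
    intro z hz
    have hdx : ‖x - z‖ ≤ Real.sqrt n * ((2:ℝ) ^ v)⁻¹ := coefAux_cube_dist v m hx hz
    have e1 : (v:ℝ) * (α x - α z) ≤ Bα :=
      le_trans (mul_le_mul_of_nonneg_left (le_abs_self _) (Nat.cast_nonneg v)) (hBα v x z hdx)
    have e2 : (v:ℝ) * (τ x - τ z) ≤ Bτ :=
      le_trans (mul_le_mul_of_nonneg_left (le_abs_self _) (Nat.cast_nonneg v)) (hBτ v x z hdx)
    have e2' : (n:ℝ) * ((v:ℝ) * (τ x - τ z)) ≤ (n:ℝ) * Bτ :=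
      mul_le_mul_of_nonneg_left e2 (Nat.cast_nonneg n)
    simp only [hEdef, hBdef]
    nlinarith [e1, e2']
  have hκI : κ * I ≤ N := by
    have hstep1 : ∀ z, κ * (Q.indicator (fun _ => (1:ℝ≥0∞)) z) ≤
        Q.indicator (fun z => (∑' k : ℕ, fseqTerm α τ lam (v:ℤ) ((v:ℤ).toNat + k) z ^ q z)
          ^ (1 / q z)) z := by
      intro z
      by_cases hz : z ∈ Q
      · rw [Set.indicator_of_mem hz, Set.indicator_of_mem hz, mul_one]
        have hqz : 0 < q z := lt_of_lt_of_le hεq (hεqle z)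
        have hterm : κ ≤ fseqTerm α τ lam (v:ℤ) v z := by
          have hsum : L ≤ ∑' m' : Fin n → ℤ,
              (dyadicCube n (v:ℕ) m').indicator (fun _ => ((‖lam v m'‖₊ : ℝ≥0∞))) z := by
            have h := ENNReal.le_tsum (f := fun m' : Fin n → ℤ =>
              (dyadicCube n (v:ℕ) m').indicator (fun _ => ((‖lam v m'‖₊ : ℝ≥0∞))) z) m
            rwa [Set.indicator_of_mem hz] at h
          have hof : ENNReal.ofReal ((2:ℝ) ^ (E x - B)) ≤ ENNReal.ofReal ((2:ℝ) ^ (E z)) :=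
            ENNReal.ofReal_le_ofReal
              (Real.rpow_le_rpow_of_exponent_le one_le_two (hEzx z hz))
          calc κ ≤ ENNReal.ofReal ((2:ℝ) ^ (E z)) * (∑' m' : Fin n → ℤ,
                (dyadicCube n (v:ℕ) m').indicator (fun _ => ((‖lam v m'‖₊ : ℝ≥0∞))) z) := by
                rw [hκdef]; exact mul_le_mul' hof hsum
            _ = fseqTerm α τ lam (v:ℤ) v z := by
                unfold fseqTerm
                congr 2
        calc κ ≤ fseqTerm α τ lam (v:ℤ) v z := hterm
          _ = (fseqTerm α τ lam (v:ℤ) v z ^ q z) ^ (1 / q z) := by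
              rw [← ENNReal.rpow_mul, mul_one_div_cancel hqz.ne', ENNReal.rpow_one]
          _ ≤ (∑' k : ℕ, fseqTerm α τ lam (v:ℤ) ((v:ℤ).toNat + k) z ^ q z) ^ (1 / q z) := by
              apply ENNReal.rpow_le_rpow _ (by positivity)
              simpa using ENNReal.le_tsum (f := fun k : ℕ =>
                fseqTerm α τ lam (v:ℤ) ((v:ℤ).toNat + k) z ^ q z) 0
      · rw [Set.indicator_of_notMem hz, Set.indicator_of_notMem hz, mul_zero]
    calc κ * I ≤ luxNorm p (fun z => κ * (Q.indicator (fun _ => (1:ℝ≥0∞)) z)) :=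
          coefAux_luxNorm_smul_le hκ0 hκt
      _ ≤ luxNorm p (Q.indicator (fun z => (∑' k : ℕ, fseqTerm α τ lam (v:ℤ)
            ((v:ℤ).toNat + k) z ^ q z) ^ (1 / q z))) :=
          coefAux_luxNorm_mono (fun z => (lt_of_lt_of_le hεp (hεple z)).le) hstep1
      _ ≤ N := by
          rw [hNdef]
          unfold fseqNorm
          exact le_trans
            (le_iSup (fun m' : Fin n → ℤ => luxNorm p ((dyadicCube n (v:ℤ) m').indicator
              (fun z => (∑' k : ℕ, fseqTerm α τ lam (v:ℤ) ((v:ℤ).toNat + k) z ^ q z)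
                ^ (1 / q z)))) m)
            (le_iSup (fun v' : ℤ => ⨆ m' : Fin n → ℤ, luxNorm p ((dyadicCube n v' m').indicator
              (fun z => (∑' k : ℕ, fseqTerm α τ lam v' (v'.toNat + k) z ^ q z)
                ^ (1 / q z)))) (v:ℤ))
  have hNI : κ ≤ N * I⁻¹ := by
    calc κ = κ * I * I⁻¹ := by rw [mul_assoc, ENNReal.mul_inv_cancel hI0 hIt, mul_one]
      _ ≤ N * I⁻¹ := mul_le_mul_left hκI _
  have hexp : (-(v:ℝ) * (α x + (n:ℝ) / 2) + (-(v:ℝ)) * (n:ℝ) * τ x) = -(E x) := by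
    simp only [hEdef]; ring
  rw [hexp]
  have hcollapse : ENNReal.ofReal ((2:ℝ) ^ B) * (ENNReal.ofReal ((2:ℝ) ^ (-(E x))) * κ) = L := by
    rw [hκdef, ← mul_assoc, ← ENNReal.ofReal_mul (by positivity), ← Real.rpow_add two_pos,
      ← mul_assoc, ← ENNReal.ofReal_mul (by positivity), ← Real.rpow_add two_pos,
      show B + -(E x) + (E x - B) = 0 by ring, Real.rpow_zero, ENNReal.ofReal_one, one_mul]
  calc L = ENNReal.ofReal ((2:ℝ) ^ B) * (ENNReal.ofReal ((2:ℝ) ^ (-(E x))) * κ) :=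
        hcollapse.symm
    _ ≤ ENNReal.ofReal ((2:ℝ) ^ B) * (ENNReal.ofReal ((2:ℝ) ^ (-(E x))) * (N * I⁻¹)) :=
        mul_le_mul_right (mul_le_mul_right hNI _) _
    _ = ↑(Real.toNNReal ((2:ℝ) ^ B)) * ENNReal.ofReal ((2:ℝ) ^ (-(E x))) * N * I⁻¹ := by
        rw [show ((Real.toNNReal ((2:ℝ) ^ B) : ℝ≥0) : ℝ≥0∞) = ENNReal.ofReal ((2:ℝ) ^ B)
          from rfl]
        ring
end
end
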